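/- arXiv:2603.27140 — 11 statements merged into one kernel-verified Lean document; each statement's English description precedes it below -/
import Mathlib

section
/- Let b, d be natural numbers with b ≥ 2 and d ≥ 1, and let Q be the real matrix indexed by the functions x : Fin d → Fin b defined by Q x y = 1/((b−1)·d) if the Hamming distance between x and y equals 1, Q x x = −1, and Q x y = 0 otherwise. Then for every real t ≥ 0 and all x, y with Hamming distance m between x and y, the (x,y) entry of the matrix exponential exp(t·Q) equals b^(−d) · (1 + (b−1)·exp(−b·t/((b−1)·d)))^(d−m) · (1 − exp(−b·t/((b−1)·d)))^m. -/
open scoped Matrix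

/-- The generator of the continuous-time simple random walk (unit transition rate) on the
`d`-dimensional `b`-ary hypercube `Fin d → Fin b`: off-diagonal entries are
`1/((b-1)·d)` between states at Hamming distance `1`, diagonal entries are `-1`,
and all other entries are `0`. -/
noncomputable def rwGenerator (b d : ℕ) : Matrix (Fin d → Fin b) (Fin d → Fin b) ℝ :=
  fun x y =>
    if hammingDist x y = 1 then 1 / (((b : ℝ) - 1) * d)
    else if x = y then -1 else 0

namespace RWHypercube

open NormedSpace Function

variable (b d : ℕ)

/-- The matrix which is all-ones at coordinate `i` and identity at all other coordinates. -/
def Jmat (i : Fin d) : Matrix (Fin d → Fin b) (Fin d → Fin b) ℝ :=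
  fun x y => if ∀ j, j ≠ i → x j = y j then 1 else 0

variable {b d}

lemma jmat_apply (i : Fin d) (x y : Fin d → Fin b) :
    Jmat b d i x y = if ∀ j, j ≠ i → x j = y j then 1 else 0 := rfl

lemma forall_ne_iff_exists_update (x z : Fin d → Fin b) (i : Fin d) :
    (∀ j, j ≠ i → x j = z j) ↔ ∃ v, Function.update x i v = z := by
  constructor
  · intro h
    refine ⟨z i, funext fun j => ?_⟩
    rcases eq_or_ne j i with rfl | hj
    · simp
    · simp [Function.update_of_ne hj, h j hj]
  · rintro ⟨v, rfl⟩ j hj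
    simp [Function.update_of_ne hj]

lemma Jmat_mul_apply (i : Fin d) (M : Matrix (Fin d → Fin b) (Fin d → Fin b) ℝ)
    (x y : Fin d → Fin b) :
    (Jmat b d i * M) x y = ∑ v : Fin b, M (Function.update x i v) y := by
  classical
  rw [Matrix.mul_apply]
  have h1 : ∀ z, Jmat b d i x z * M z y =
      if z ∈ Finset.univ.image (Function.update x i) then M z y else 0 := by
    intro z
    rw [jmat_apply]
    by_cases h : ∀ j, j ≠ i → x j = z j
    · rw [if_pos h, if_pos, one_mul]
      obtain ⟨v, hv⟩ := (forall_ne_iff_exists_update x z i).mp h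
      exact Finset.mem_image.mpr ⟨v, Finset.mem_univ _, hv⟩
    · rw [if_neg h, if_neg, zero_mul]
      intro hz
      obtain ⟨v, _, hv⟩ := Finset.mem_image.mp hz
      exact h ((forall_ne_iff_exists_update x z i).mpr ⟨v, hv⟩)
  simp_rw [h1]
  rw [Finset.sum_ite_mem, Finset.univ_inter,
    Finset.sum_image (fun v _ w _ h => Function.update_injective x i h)]

lemma Jmat_mul_Jmat_of_ne {i k : Fin d} (hik : i ≠ k) (x y : Fin d → Fin b) :
    (Jmat b d i * Jmat b d k) x y =
      if ∀ j, j ≠ i → j ≠ k → x j = y j then 1 else 0 := by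
  rw [Jmat_mul_apply]
  have key : ∀ v : Fin b, (∀ j, j ≠ k → Function.update x i v j = y j) ↔
      (v = y i ∧ ∀ j, j ≠ i → j ≠ k → x j = y j) := by
    intro v
    constructor
    · intro h
      refine ⟨by simpa using h i hik, fun j hji hjk => ?_⟩
      have := h j hjk
      rwa [Function.update_of_ne hji] at this
    · rintro ⟨rfl, h⟩ j hjk
      rcases eq_or_ne j i with rfl | hji
      · simp
      · rw [Function.update_of_ne hji]; exact h j hji hjk
  simp_rw [jmat_apply, key]
  by_cases hC : ∀ j, j ≠ i → j ≠ k → x j = y j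
  · have hand : ∀ v : Fin b, (v = y i ∧ ∀ j, j ≠ i → j ≠ k → x j = y j) ↔ v = y i :=
      fun v => and_iff_left hC
    simp_rw [hand]
    simp
    exact hC
  · simp [hC]

lemma Jmat_commute (i k : Fin d) : Commute (Jmat b d i) (Jmat b d k) := by
  rcases eq_or_ne i k with rfl | hik
  · exact Commute.refl _
  · show _ = _
    ext x y
    rw [Jmat_mul_Jmat_of_ne hik, Jmat_mul_Jmat_of_ne hik.symm]
    exact if_congr ⟨fun h j h1 h2 => h j h2 h1, fun h j h1 h2 => h j h2 h1⟩ rfl rfl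

lemma Jmat_sq (i : Fin d) : Jmat b d i * Jmat b d i = (b : ℝ) • Jmat b d i := by
  ext x y
  rw [Jmat_mul_apply, Matrix.smul_apply]
  have h1 : ∀ v : Fin b, Jmat b d i (Function.update x i v) y = Jmat b d i x y := by
    intro v
    rw [jmat_apply, jmat_apply]
    apply if_congr _ rfl rfl
    constructor
    · intro h j hj; have := h j hj; rwa [Function.update_of_ne hj] at this
    · intro h j hj; rw [Function.update_of_ne hj]; exact h j hj
  simp_rw [h1, Finset.sum_const, Finset.card_univ, Fintype.card_fin, nsmul_eq_mul,
    smul_eq_mul]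

lemma smul_Jmat_pow (μ : ℝ) (i : Fin d) (n : ℕ) :
    (μ • Jmat b d i) ^ (n + 1) = (μ ^ (n + 1) * (b : ℝ) ^ n) • Jmat b d i := by
  induction n with
  | zero => simp
  | succ n ih =>
    rw [pow_succ, ih, smul_mul_smul_comm, Jmat_sq, smul_smul]
    ring_nf

lemma exp_smul_Jmat (hb : 0 < b) (μ : ℝ) (i : Fin d) :
    NormedSpace.exp (μ • Jmat b d i) =
      1 + ((Real.exp ((b : ℝ) * μ) - 1) / b) • Jmat b d i := by
  letI : SeminormedRing (Matrix (Fin d → Fin b) (Fin d → Fin b) ℝ) :=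
    Matrix.linftyOpSemiNormedRing
  letI : NormedRing (Matrix (Fin d → Fin b) (Fin d → Fin b) ℝ) := Matrix.linftyOpNormedRing
  letI : NormedAlgebra ℝ (Matrix (Fin d → Fin b) (Fin d → Fin b) ℝ) :=
    Matrix.linftyOpNormedAlgebra
  have hb' : (b : ℝ) ≠ 0 := Nat.cast_ne_zero.mpr hb.ne'
  have h3 : ∀ n : ℕ, (((n + 1).factorial : ℝ))⁻¹ * (μ ^ (n + 1) * (b : ℝ) ^ n) =
      (((b : ℝ) * μ) ^ (n + 1) / (n + 1).factorial) / b := by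
    intro n
    rw [mul_pow, pow_succ]
    field_simp
    ring
  have hs : Summable (fun n : ℕ => (((n + 1).factorial : ℝ))⁻¹ * (μ ^ (n + 1) * (b : ℝ) ^ n)) := by
    simp_rw [h3]
    exact ((summable_nat_add_iff 1).mpr
      (Real.summable_pow_div_factorial ((b : ℝ) * μ))).div_const _
  rw [exp_eq_tsum ℝ]
  beta_reduce
  erw [Summable.tsum_eq_zero_add (expSeries_summable' (𝕂 := ℝ) (μ • Jmat b d i))]
  simp_rw [pow_zero, Nat.factorial_zero, Nat.cast_one, inv_one, one_smul, smul_Jmat_pow,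
    smul_smul]
  rw [Summable.tsum_smul_const hs]
  congr 1
  have hsum : ∀ s : ℝ, Real.exp s = ∑' n : ℕ, s ^ n / n.factorial := by
    intro s
    rw [Real.exp_eq_exp_ℝ, exp_eq_tsum_div]
  have h2 : Real.exp ((b : ℝ) * μ) =
      1 + ∑' n : ℕ, ((b : ℝ) * μ) ^ (n + 1) / (n + 1).factorial := by
    rw [hsum, Summable.tsum_eq_zero_add (Real.summable_pow_div_factorial _)]
    simp
  rw [h2]
  simp_rw [h3]
  rw [tsum_div_const]
  congr 1
  ring

lemma sum_Jmat_apply (x y : Fin d → Fin b) :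
    (∑ i, Jmat b d i) x y =
      if x = y then (d : ℝ) else if hammingDist x y = 1 then 1 else 0 := by
  classical
  rw [Matrix.sum_apply]
  simp_rw [jmat_apply]
  rw [Finset.sum_boole]
  by_cases hxy : x = y
  · subst hxy
    simp
  · rw [if_neg hxy]
    have hne : ∃ j, x j ≠ y j := Function.ne_iff.mp hxy
    by_cases h1 : hammingDist x y = 1
    · rw [if_pos h1]
      obtain ⟨j₀, hj₀⟩ : ∃ j₀, Finset.univ.filter (fun j => x j ≠ y j) = {j₀} :=
        Finset.card_eq_one.mp h1
      have hj0ne : x j₀ ≠ y j₀ := by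
        have := Finset.mem_singleton_self j₀
        rw [← hj₀, Finset.mem_filter] at this
        exact this.2
      have hP : ∀ i : Fin d, (∀ j, j ≠ i → x j = y j) ↔ i = j₀ := by
        intro i
        constructor
        · intro h
          by_contra hne'
          exact hj0ne (h j₀ (fun e => hne' (e ▸ rfl)))
        · rintro rfl j hj
          by_contra hne'
          have : j ∈ Finset.univ.filter (fun j => x j ≠ y j) := by
            simp [hne']
          rw [hj₀, Finset.mem_singleton] at this
          exact hj this
      simp_rw [hP]
      simp [Finset.filter_eq']
    · rw [if_neg h1]
      have hP : ∀ i : Fin d, ¬ (∀ j, j ≠ i → x j = y j) := by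
        intro i h
        apply h1
        have hsub : Finset.univ.filter (fun j => x j ≠ y j) ⊆ {i} := by
          intro j hj
          rw [Finset.mem_filter] at hj
          rw [Finset.mem_singleton]
          by_contra hji
          exact hj.2 (h j hji)
        rcases Finset.subset_singleton_iff.mp hsub with he | he
        · obtain ⟨j, hj⟩ := hne
          have : j ∈ Finset.univ.filter (fun j => x j ≠ y j) := by simp [hj]
          rw [he] at this
          exact absurd this (Finset.notMem_empty j)
        · show (Finset.univ.filter (fun j => x j ≠ y j)).card = 1
          rw [he, Finset.card_singleton]
      simp [hP]

lemma gen_eq (hb : 2 ≤ b) (hd : 1 ≤ d) :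
    rwGenerator b d = (1 / (((b : ℝ) - 1) * d)) • (∑ i, Jmat b d i) -
      ((b : ℝ) / ((b : ℝ) - 1)) • (1 : Matrix (Fin d → Fin b) (Fin d → Fin b) ℝ) := by
  have hbR : (2 : ℝ) ≤ (b : ℝ) := by exact_mod_cast hb
  have hb1 : ((b : ℝ) - 1) ≠ 0 := by linarith
  have hd0 : (d : ℝ) ≠ 0 := Nat.cast_ne_zero.mpr (by omega)
  ext x y
  rw [Matrix.sub_apply, Matrix.smul_apply, Matrix.smul_apply, sum_Jmat_apply]
  simp only [rwGenerator]
  by_cases hxy : x = y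
  · subst hxy
    rw [Matrix.one_apply_eq]
    have hd1 : hammingDist x x = 0 := hammingDist_self x
    rw [hd1, if_pos rfl, if_neg (by norm_num : ¬(0 = 1)), if_pos rfl, smul_eq_mul,
      smul_eq_mul, mul_one]
    field_simp
    ring
  · rw [Matrix.one_apply_ne hxy]
    simp only [hxy, if_false]
    by_cases h1 : hammingDist x y = 1
    · rw [if_pos h1, if_pos h1]
      simp
    · rw [if_neg h1, if_neg h1]
      simp

lemma one_add_smul_Jmat_mul_apply (lam : ℝ) (i : Fin d)
    (M : Matrix (Fin d → Fin b) (Fin d → Fin b) ℝ) (x y : Fin d → Fin b) :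
    ((1 + lam • Jmat b d i) * M) x y =
      M x y + lam * ∑ v : Fin b, M (Function.update x i v) y := by
  rw [Matrix.add_mul, Matrix.one_mul, Matrix.add_apply, Matrix.smul_mul, Matrix.smul_apply,
    Jmat_mul_apply, smul_eq_mul]

lemma one_add_commute (lam : ℝ) (i k : Fin d) :
    Commute (1 + lam • Jmat b d i) (1 + lam • Jmat b d k) := by
  have h := ((Jmat_commute (b := b) i k).smul_left lam).smul_right lam
  exact (Commute.one_left _).add_left ((Commute.one_right _).add_right h)

lemma noncommProd_apply (lam : ℝ) (s : Finset (Fin d))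
    (comm : (↑s : Set (Fin d)).Pairwise (Commute on fun i => 1 + lam • Jmat b d i))
    (x y : Fin d → Fin b) :
    s.noncommProd (fun i => 1 + lam • Jmat b d i) comm x y =
      if ∀ j ∉ s, x j = y j then
        lam ^ (s.filter fun j => x j ≠ y j).card *
          (1 + lam) ^ (s.filter fun j => x j = y j).card
      else 0 := by
  classical
  induction s using Finset.induction_on generalizing x with
  | empty =>
    rw [Finset.noncommProd_empty]
    by_cases hxy : x = y
    · subst hxy
      rw [Matrix.one_apply_eq, if_pos (fun j hj => rfl)]
      simp
    · rw [Matrix.one_apply_ne hxy, if_neg]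
      intro h
      exact hxy (funext fun j => h j (Finset.notMem_empty j))
  | @insert i s hi ih =>
    rw [Finset.noncommProd_insert_of_notMem _ _ _ _ hi, one_add_smul_Jmat_mul_apply, ih]
    simp_rw [ih]
    have hfilt1 : ∀ v : Fin b,
        (s.filter fun j => Function.update x i v j ≠ y j) = s.filter fun j => x j ≠ y j :=
      fun v => Finset.filter_congr fun j hj => by
        rw [Function.update_of_ne (ne_of_mem_of_not_mem hj hi)]
    have hfilt2 : ∀ v : Fin b,
        (s.filter fun j => Function.update x i v j = y j) = s.filter fun j => x j = y j :=
      fun v => Finset.filter_congr fun j hj => by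
        rw [Function.update_of_ne (ne_of_mem_of_not_mem hj hi)]
    have hcondupd : ∀ v : Fin b,
        (∀ j ∉ s, Function.update x i v j = y j) ↔
          (v = y i ∧ ∀ j ∉ insert i s, x j = y j) := by
      intro v
      constructor
      · intro h
        refine ⟨by simpa using h i hi, fun j hj => ?_⟩
        have hji : j ≠ i := fun e => hj (e ▸ Finset.mem_insert_self i s)
        have hjs : j ∉ s := fun e => hj (Finset.mem_insert_of_mem e)
        have := h j hjs
        rwa [Function.update_of_ne hji] at this
      · rintro ⟨rfl, h⟩ j hj
        rcases eq_or_ne j i with rfl | hji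
        · simp
        · rw [Function.update_of_ne hji]
          exact h j (fun e => (Finset.mem_insert.mp e).elim hji hj)
    have hcond : (∀ j ∉ s, x j = y j) ↔
        (x i = y i ∧ ∀ j ∉ insert i s, x j = y j) := by
      constructor
      · intro h
        exact ⟨h i hi, fun j hj => h j (fun e => hj (Finset.mem_insert_of_mem e))⟩
      · rintro ⟨h1, h⟩ j hj
        rcases eq_or_ne j i with rfl | hji
        · exact h1
        · exact h j (fun e => (Finset.mem_insert.mp e).elim hji hj)
    simp_rw [hfilt1, hfilt2, hcondupd, hcond, ite_and]
    rw [Finset.sum_ite_eq' Finset.univ (y i)]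
    simp only [Finset.mem_univ, if_true]
    by_cases hC : ∀ j ∉ insert i s, x j = y j
    · rw [if_pos hC, if_pos hC]
      have hins1 := Finset.filter_insert (fun j => x j ≠ y j) i s
      have hins2 := Finset.filter_insert (fun j => x j = y j) i s
      by_cases hxi : x i = y i
      · rw [if_pos hxi]
        rw [hins1, hins2, if_neg (by simpa using hxi), if_pos hxi,
          Finset.card_insert_of_notMem (fun e => hi (Finset.mem_of_mem_filter i e))]
        ring
      · rw [if_neg hxi]
        rw [hins1, hins2, if_pos hxi, if_neg (by simpa using hxi),
          Finset.card_insert_of_notMem (fun e => hi (Finset.mem_of_mem_filter i e))]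
        ring
    · rw [if_neg hC, if_neg hC]
      simp

end RWHypercube

/-- Transition probabilities of the continuous-time simple random walk on the `b`-ary
`d`-dimensional hypercube: the `(x,y)` entry of `exp (t • Q)` depends only on the Hamming
distance `m` between `x` and `y` and is given by the explicit product formula. -/
theorem rw_hypercube_transition_prob (b d : ℕ) (hb : 2 ≤ b) (hd : 1 ≤ d)
    (t : ℝ) (ht : 0 ≤ t) (x y : Fin d → Fin b) (m : ℕ) (hm : hammingDist x y = m) :
    NormedSpace.exp (t • rwGenerator b d) x y =
      ((b : ℝ) ^ d)⁻¹ *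
        (1 + ((b : ℝ) - 1) * Real.exp (-((b : ℝ) * t) / (((b : ℝ) - 1) * d))) ^ (d - m) *
        (1 - Real.exp (-((b : ℝ) * t) / (((b : ℝ) - 1) * d))) ^ m := by
  classical
  open RWHypercube in
  have hb0 : 0 < b := by omega
  have hbR : (2 : ℝ) ≤ (b : ℝ) := by exact_mod_cast hb
  have hb1 : (0 : ℝ) < (b : ℝ) - 1 := by linarith
  have hbne : (b : ℝ) ≠ 0 := by positivity
  have hdR : (0 : ℝ) < (d : ℝ) := by exact_mod_cast (by omega : 0 < d)
  have hdne : (d : ℝ) ≠ 0 := ne_of_gt hdR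
  have hmd : m ≤ d := by
    rw [← hm]
    have h := hammingDist_le_card_fintype (x := x) (y := y)
    simpa using h
  set α : ℝ := 1 / (((b : ℝ) - 1) * ↑d) with hα
  set c : ℝ := (b : ℝ) / ((b : ℝ) - 1) with hc
  set E : ℝ := Real.exp (-((b : ℝ) * t) / (((b : ℝ) - 1) * ↑d)) with hE
  set lam : ℝ := (Real.exp ((b : ℝ) * (t * α)) - 1) / b with hlam
  have hQ : t • rwGenerator b d =
      (∑ i : Fin d, (t * α) • Jmat b d i) +
        (-(t * c)) • (1 : Matrix (Fin d → Fin b) (Fin d → Fin b) ℝ) := by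
    rw [gen_eq hb hd, smul_sub, smul_smul, smul_smul, Finset.smul_sum, sub_eq_add_neg,
      ← neg_smul]
  rw [hQ, Matrix.exp_add_of_commute _ _
    (Commute.smul_right (Commute.one_right _) _),
    Matrix.exp_sum_of_commute _ _
      (fun i _ k _ _ => ((Jmat_commute i k).smul_left _).smul_right _)]
  have hexp1 : NormedSpace.exp ((-(t * c)) •
      (1 : Matrix (Fin d → Fin b) (Fin d → Fin b) ℝ)) = Real.exp (-(t * c)) • 1 := by
    letI : SeminormedRing (Matrix (Fin d → Fin b) (Fin d → Fin b) ℝ) :=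
      Matrix.linftyOpSemiNormedRing
    letI : NormedRing (Matrix (Fin d → Fin b) (Fin d → Fin b) ℝ) := Matrix.linftyOpNormedRing
    letI : NormedAlgebra ℝ (Matrix (Fin d → Fin b) (Fin d → Fin b) ℝ) :=
      Matrix.linftyOpNormedAlgebra
    rw [Real.exp_eq_exp_ℝ, ← Algebra.algebraMap_eq_smul_one, ← Algebra.algebraMap_eq_smul_one,
      NormedSpace.algebraMap_exp_comm]
    rfl
  rw [hexp1]
  have hprod := Finset.noncommProd_congr (s₁ := (Finset.univ : Finset (Fin d))) (s₂ := Finset.univ) rfl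
    (fun i _ => exp_smul_Jmat (b := b) (d := d) hb0 (t * α) i)
    (fun i _ k _ _ => (((Jmat_commute (b := b) i k).smul_left (t * α)).smul_right (t * α)).exp)
  rw [hprod, Matrix.mul_smul, Matrix.mul_one, Matrix.smul_apply]
  erw [noncommProd_apply,
    if_pos (fun j hj => absurd (Finset.mem_univ j) hj)]
  have hcard1 : (Finset.univ.filter fun j => x j ≠ y j).card = m := hm
  have hcard2 : (Finset.univ.filter fun j => x j = y j).card = d - m := by
    have h := Finset.card_filter_add_card_filter_not
      (s := (Finset.univ : Finset (Fin d))) (p := fun j => x j = y j)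
    simp only [Finset.card_univ, Fintype.card_fin] at h
    have h2 : (Finset.univ.filter fun j => ¬ x j = y j).card = m := hcard1
    omega
  rw [hcard1, hcard2, smul_eq_mul]
  -- now pure real arithmetic
  have hz : (b : ℝ) * (t * α) = -(-((b : ℝ) * t) / (((b : ℝ) - 1) * ↑d)) := by
    rw [hα]; field_simp
  have hEinv : Real.exp ((b : ℝ) * (t * α)) = E⁻¹ := by
    rw [hz, Real.exp_neg, hE]
  have hEpos : 0 < E := Real.exp_pos _
  have hEne : E ≠ 0 := ne_of_gt hEpos
  have hexpct : Real.exp (-(t * c)) = E ^ d := by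
    have : -(t * c) = (d : ℕ) * (-((b : ℝ) * t) / (((b : ℝ) - 1) * ↑d)) := by
      rw [hc]; field_simp
    rw [this, Real.exp_nat_mul, hE]
  have h1 : E * lam = (1 - E) / b := by
    rw [hlam, hEinv]
    field_simp
  have h2 : E * (1 + lam) = (1 + ((b : ℝ) - 1) * E) / b := by
    rw [hlam, hEinv]
    field_simp
    ring
  have hEd : E ^ m * E ^ (d - m) = E ^ d := by
    rw [← pow_add, Nat.add_sub_cancel' hmd]
  calc Real.exp (-(t * c)) * (lam ^ m * (1 + lam) ^ (d - m))
      = (E ^ m * lam ^ m) * (E ^ (d - m) * (1 + lam) ^ (d - m)) := by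
        rw [hexpct, ← hEd]; ring
    _ = ((1 - E) / b) ^ m * ((1 + ((b : ℝ) - 1) * E) / b) ^ (d - m) := by
        rw [← mul_pow, ← mul_pow, h1, h2]
    _ = ((b : ℝ) ^ d)⁻¹ * (1 + ((b : ℝ) - 1) * E) ^ (d - m) * (1 - E) ^ m := by
        rw [div_pow, div_pow, div_mul_div_comm, ← pow_add, Nat.add_sub_cancel' hmd]
        ring
end

section
/- For every integer b ≥ 2 and every real ρ with 1 < ρ < e, there exists δ₁ > 0 such that for all natural numbers d ≥ 1 and m with 1 ≤ m ≤ d, no real t with 0 < t < δ₁·d satisfies the first-moment equation. -/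
lemma exp_neg_le_quad {x : ℝ} (hx : 0 ≤ x) : Real.exp (-x) ≤ 1 - x + x ^ 2 / 2 := by
  have key : ∀ y ∈ Set.Ici (0:ℝ), Real.exp (-y) ≤ 1 - y + y ^ 2 / 2 := by
    have h : MonotoneOn (fun y : ℝ => 1 - y + y ^ 2 / 2 - Real.exp (-y)) (Set.Ici 0) := by
      apply monotoneOn_of_deriv_nonneg (convex_Ici 0)
      · fun_prop
      · fun_prop
      · intro y hy
        have : HasDerivAt (fun y : ℝ => 1 - y + y ^ 2 / 2 - Real.exp (-y))
            (0 - 1 + (2 * y ^ 1 * 1) / 2 - Real.exp (-y) * (-1)) y := by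
          apply HasDerivAt.sub
          · apply HasDerivAt.add
            · exact (hasDerivAt_const y 1).sub (hasDerivAt_id y)
            · exact ((hasDerivAt_pow 2 y).mul_const ((2:ℝ)⁻¹)).congr_deriv (by ring) |>.congr_of_eventuallyEq (by filter_upwards with z; ring)
          · exact (Real.hasDerivAt_exp (-y)).comp y ((hasDerivAt_id y).neg) |>.congr_deriv (by ring)
        rw [this.deriv]
        have := Real.one_sub_le_exp_neg y
        simp only [interior_Ici, Set.mem_Ioi] at hy
        nlinarith
    intro y hy
    have := h (Set.self_mem_Ici (a := (0:ℝ))) hy (by exact hy)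
    simp at this
    linarith
  linarith [key x hx]



/-- The left-hand side of the first-moment equation: for integers `b ≥ 2`, `d ≥ 1`,
`0 ≤ m ≤ d` and a real `ρ > 1`, the first-moment equation in the unknown `t > 0` is
`firstMomentLHS b d m ρ t = 1`. -/
noncomputable def firstMomentLHS (b d m : ℕ) (ρ t : ℝ) : ℝ :=
  ρ ^ t * ((b : ℝ) ^ d)⁻¹ *
    (1 + ((b : ℝ) - 1) * Real.exp (-((b : ℝ) * t) / (((b : ℝ) - 1) * d))) ^ (d - m) *
    (1 - Real.exp (-((b : ℝ) * t) / (((b : ℝ) - 1) * d))) ^ m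

/-- For every integer `b ≥ 2` and every real `ρ ∈ (1, e)`, there exists `δ₁ > 0` such that
for all `d ≥ 1` and `1 ≤ m ≤ d`, no `t` with `0 < t < δ₁ · d` satisfies the
first-moment equation. -/
theorem firstMoment_no_small_solution (b : ℕ) (hb : 2 ≤ b) (ρ : ℝ)
    (hρ₁ : 1 < ρ) (hρe : ρ < Real.exp 1) :
    ∃ δ₁ : ℝ, 0 < δ₁ ∧
      ∀ d m : ℕ, 1 ≤ d → 1 ≤ m → m ≤ d →
        ∀ t : ℝ, 0 < t → t < δ₁ * d → firstMomentLHS b d m ρ t ≠ 1 := by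
  have hρ0 : 0 < ρ := by linarith
  have hlogρ : Real.log ρ < 1 := by
    calc Real.log ρ < Real.log (Real.exp 1) := Real.log_lt_log hρ0 hρe
    _ = 1 := Real.log_exp 1
  have hlogρ0 : 0 < Real.log ρ := Real.log_pos hρ₁
  refine ⟨1 - Real.log ρ, by linarith, ?_⟩
  intro d m hd1 hm1 hmd t ht htδ
  have hB : (2:ℝ) ≤ (b:ℝ) := by exact_mod_cast hb
  have hdR : (1:ℝ) ≤ (d:ℝ) := by exact_mod_cast hd1
  have hB1 : (0:ℝ) < (b:ℝ) - 1 := by linarith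
  have hB0 : (0:ℝ) < (b:ℝ) := by linarith
  have hd0 : (0:ℝ) < (d:ℝ) := by linarith
  obtain ⟨x, hxdef⟩ : ∃ x : ℝ, x = ((b:ℝ) * t) / (((b:ℝ) - 1) * d) := ⟨_, rfl⟩
  have hxpos : 0 < x := hxdef ▸ div_pos (mul_pos hB0 ht) (mul_pos hB1 hd0)
  have harg : -((b:ℝ) * t) / (((b:ℝ) - 1) * ↑d) = -x := by rw [hxdef, neg_div]
  -- x is small: x / 2 ≤ (1 - Real.log ρ)
  have hx2δ : x / 2 < (1 - Real.log ρ) := by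
    have h1 : x < (b:ℝ) / ((b:ℝ) - 1) * (1 - Real.log ρ) := by
      rw [hxdef, div_lt_iff₀ (mul_pos hB1 hd0)]
      have : (b:ℝ) * t < (b:ℝ) * ((1 - Real.log ρ) * d) := by
        exact mul_lt_mul_of_pos_left htδ hB0
      calc (b:ℝ) * t < (b:ℝ) * ((1 - Real.log ρ) * d) := this
        _ = (b:ℝ) / ((b:ℝ) - 1) * (1 - Real.log ρ) * (((b:ℝ) - 1) * d) := by field_simp
    have h2 : (b:ℝ) / ((b:ℝ) - 1) ≤ 2 := by
      rw [div_le_iff₀ hB1]; linarith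
    have hδ0 : (0:ℝ) < (1 - Real.log ρ) := by linarith
    nlinarith
  have hE1 : Real.exp (-x) < 1 := by
    rw [Real.exp_lt_one_iff]; linarith
  have hE0 : 0 < Real.exp (-x) := Real.exp_pos _
  -- the last factor is < 1
  have hQ : (1 - Real.exp (-x)) ^ m < 1 :=
    pow_lt_one₀ (by linarith) (by linarith) (by omega)
  have hQ0 : 0 ≤ (1 - Real.exp (-x)) ^ m := pow_nonneg (by linarith) m
  -- bound A := ρ^t * (b^d)⁻¹ * P^(d-m) by 1
  obtain ⟨P, hPdef⟩ : ∃ P : ℝ, P = 1 + ((b:ℝ) - 1) * Real.exp (-x) := ⟨_, rfl⟩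
  have hP1 : (1:ℝ) ≤ P := by
    rw [hPdef]; nlinarith
  have hPdm : P ^ (d - m) ≤ P ^ d := pow_le_pow_right₀ hP1 (Nat.sub_le d m)
  obtain ⟨u, hudef⟩ : ∃ u : ℝ, u = (((b:ℝ) - 1) / (b:ℝ)) * (x - x ^ 2 / 2) := ⟨_, rfl⟩
  have hPu : P ≤ (b:ℝ) * Real.exp (-u) := by
    have h1 : Real.exp (-x) ≤ 1 - x + x ^ 2 / 2 := exp_neg_le_quad hxpos.le
    have h2 : P ≤ (b:ℝ) * (1 - u) := by
      rw [hPdef, hudef]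
      have := mul_le_mul_of_nonneg_left h1 hB1.le
      have hexp : (b:ℝ) * (1 - (((b:ℝ) - 1) / (b:ℝ)) * (x - x ^ 2 / 2))
          = 1 + ((b:ℝ) - 1) * (1 - x + x ^ 2 / 2) := by
        field_simp; ring
      linarith [hexp ▸ (le_refl ((b:ℝ) * (1 - (((b:ℝ) - 1) / (b:ℝ)) * (x - x ^ 2 / 2))))]
    calc P ≤ (b:ℝ) * (1 - u) := h2
      _ ≤ (b:ℝ) * Real.exp (-u) := mul_le_mul_of_nonneg_left (Real.one_sub_le_exp_neg u) hB0.le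
  have hPd : P ^ d ≤ (b:ℝ) ^ d * Real.exp (-((d:ℝ) * u)) := by
    calc P ^ d ≤ ((b:ℝ) * Real.exp (-u)) ^ d := by
          apply pow_le_pow_left₀ (by linarith) hPu
      _ = (b:ℝ) ^ d * Real.exp (-((d:ℝ) * u)) := by
          rw [mul_pow, ← Real.exp_nat_mul]; ring_nf
  have hdu : (d:ℝ) * u = t * (1 - x / 2) := by
    have hx_t : ((b:ℝ) - 1) * d * x = (b:ℝ) * t := by
      rw [hxdef]; field_simp
    have hBne : ((b:ℝ)) ≠ 0 := ne_of_gt hB0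
    rw [hudef]
    field_simp
    linear_combination (2 - x) * hx_t
  -- now combine
  have hA : ρ ^ t * ((b:ℝ) ^ d)⁻¹ * P ^ (d - m) ≤ 1 := by
    have hbd : (0:ℝ) < (b:ℝ) ^ d := pow_pos hB0 d
    have hρt : (0:ℝ) < ρ ^ t := Real.rpow_pos_of_pos hρ0 t
    have step : ρ ^ t * ((b:ℝ) ^ d)⁻¹ * P ^ (d - m)
        ≤ ρ ^ t * ((b:ℝ) ^ d)⁻¹ * ((b:ℝ) ^ d * Real.exp (-((d:ℝ) * u))) := by
      apply mul_le_mul_of_nonneg_left (hPdm.trans hPd)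
      positivity
    have heq : ρ ^ t * ((b:ℝ) ^ d)⁻¹ * ((b:ℝ) ^ d * Real.exp (-((d:ℝ) * u)))
        = Real.exp (Real.log ρ * t - (d:ℝ) * u) := by
      rw [Real.rpow_def_of_pos hρ0, Real.exp_sub, Real.exp_neg]
      rw [eq_div_iff (ne_of_gt (Real.exp_pos _))]
      field_simp [ne_of_gt hbd]
    have hfin : Real.exp (Real.log ρ * t - (d:ℝ) * u) ≤ 1 := by
      rw [Real.exp_le_one_iff, hdu]
      have h2 : Real.log ρ ≤ 1 - x / 2 := by linarith
      have h3 := mul_le_mul_of_nonneg_right h2 ht.le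
      linarith [h3]
    calc ρ ^ t * ((b:ℝ) ^ d)⁻¹ * P ^ (d - m) ≤ _ := step
      _ = _ := heq
      _ ≤ 1 := hfin
  have hApos : 0 < ρ ^ t * ((b:ℝ) ^ d)⁻¹ * P ^ (d - m) := by
    have hρt : (0:ℝ) < ρ ^ t := Real.rpow_pos_of_pos hρ0 t
    have : (0:ℝ) < P := by linarith
    positivity
  intro hcontra
  have : firstMomentLHS b d m ρ t < 1 := by
    unfold firstMomentLHS
    rw [harg, ← hPdef]
    calc ρ ^ t * ((b:ℝ) ^ d)⁻¹ * P ^ (d - m) * (1 - Real.exp (-x)) ^ m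
        ≤ 1 * (1 - Real.exp (-x)) ^ m := mul_le_mul_of_nonneg_right hA hQ0
      _ = (1 - Real.exp (-x)) ^ m := one_mul _
      _ < 1 := hQ
  linarith [this, hcontra.ge]
end

section
/- Fix an integer b ≥ 2. For every real ρ with 1 < ρ < e there is a unique x > 0 satisfying x·log ρ − log b + log(1 + (b−1)·exp(−b·x/(b−1))) = 0; denote it x₀(b,ρ). Moreover the map ρ ↦ x₀(b,ρ) is strictly decreasing on (1, e), x₀(b,ρ) → ∞ as ρ → 1⁺, and x₀(b,ρ) → 0 as ρ → e⁻. -/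
open Filter

/-- The defining equation of the constant `x₀(b,ρ)`:
`x · log ρ − log b + log(1 + (b−1) · exp(−b·x/(b−1))) = 0`. -/
def x0Eq (b : ℕ) (ρ x : ℝ) : Prop :=
  x * Real.log ρ - Real.log b +
    Real.log (1 + ((b : ℝ) - 1) * Real.exp (-((b : ℝ) * x) / ((b : ℝ) - 1))) = 0

noncomputable def hh (b : ℕ) (x : ℝ) : ℝ :=
  Real.log b - Real.log (1 + ((b : ℝ) - 1) * Real.exp (-((b : ℝ) * x) / ((b : ℝ) - 1)))

variable {b : ℕ}

lemma hB (hb : 2 ≤ b) : (2:ℝ) ≤ (b:ℝ) := by exact_mod_cast hb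

lemma denom_pos (hb : 2 ≤ b) (x : ℝ) :
    0 < 1 + ((b:ℝ) - 1) * Real.exp (-((b:ℝ) * x) / ((b:ℝ) - 1)) := by
  have h1 : (0:ℝ) < (b:ℝ) - 1 := by linarith [hB hb]
  positivity

lemma hh_zero (hb : 2 ≤ b) : hh b 0 = 0 := by
  have h1 : (0:ℝ) < (b:ℝ) - 1 := by linarith [hB hb]
  unfold hh
  rw [mul_zero, neg_zero, zero_div, Real.exp_zero, mul_one]
  norm_num

lemma hasDerivAt_hh (hb : 2 ≤ b) (x : ℝ) :
    HasDerivAt (hh b) ((b:ℝ) / (Real.exp ((b:ℝ)*x/((b:ℝ)-1)) + ((b:ℝ)-1))) x := by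
  have hB1 : (0:ℝ) < (b:ℝ) - 1 := by linarith [hB hb]
  set B := (b:ℝ) with hBdef
  have h1 : HasDerivAt (fun x : ℝ => -(B*x)/(B-1)) (-B/(B-1)) x := by
    simpa using (((hasDerivAt_id x).const_mul B).neg.div_const (B-1))
  have h2 := h1.exp
  have h3 := (h2.const_mul (B-1)).const_add 1
  have h4 := h3.log (ne_of_gt (denom_pos hb x))
  have h5 := h4.const_sub (Real.log B)
  refine h5.congr_deriv ?_
  have hE := Real.exp_pos (B*x/(B-1))
  have hD := denom_pos hb x
  rw [show -(B*x)/(B-1) = -(B*x/(B-1)) by ring, Real.exp_neg] at hD ⊢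
  field_simp

lemma cont_hh (hb : 2 ≤ b) : Continuous (hh b) := by
  have h1 : Continuous fun x : ℝ => 1 + ((b:ℝ)-1) * Real.exp (-((b:ℝ)*x)/((b:ℝ)-1)) := by
    continuity
  exact continuous_const.sub (h1.log fun x => (denom_pos hb x).ne')

lemma concave_hh (hb : 2 ≤ b) : StrictConcaveOn ℝ Set.univ (hh b) := by
  have hB1 : (0:ℝ) < (b:ℝ) - 1 := by linarith [hB hb]
  apply StrictAntiOn.strictConcaveOn_of_deriv convex_univ (cont_hh hb).continuousOn
  rw [interior_univ]
  intro x _ y _ hxy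
  rw [(hasDerivAt_hh hb x).deriv, (hasDerivAt_hh hb y).deriv]
  apply div_lt_div_of_pos_left (by linarith) (by positivity)
  have : Real.exp ((b:ℝ)*x/((b:ℝ)-1)) < Real.exp ((b:ℝ)*y/((b:ℝ)-1)) := by
    apply Real.exp_lt_exp.2
    apply div_lt_div_of_pos_right ?_ hB1
    · exact (mul_lt_mul_iff_right₀ (by linarith)).2 hxy
  linarith

lemma slope_anti (hb : 2 ≤ b) {x y : ℝ} (hx : 0 < x) (hxy : x < y) :
    hh b y / y < hh b x / x := by
  have hy : 0 < y := hx.trans hxy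
  have key : x / y * hh b y < hh b x := by
    have hxy1 : x / y < 1 := (div_lt_one hy).2 hxy
    have h := (concave_hh hb).2 (Set.mem_univ y) (Set.mem_univ 0) (ne_of_gt hy)
      (show (0:ℝ) < x/y by positivity) (show (0:ℝ) < 1 - x/y by linarith) (by ring)
    have heq : (x/y) • y + (1 - x/y) • (0:ℝ) = x := by
      simp only [smul_eq_mul]
      field_simp
      ring
    rw [heq, hh_zero hb] at h
    simpa using h
  rw [div_lt_div_iff₀ hy hx]
  have := mul_lt_mul_of_pos_left key hy
  rw [show y * (x / y * hh b y) = hh b y * x by field_simp] at this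
  linarith [this]

lemma hh_pos (hb : 2 ≤ b) {x : ℝ} (hx : 0 < x) : 0 < hh b x := by
  have hB1 : (0:ℝ) < (b:ℝ) - 1 := by linarith [hB hb]
  have hexp : Real.exp (-((b:ℝ)*x)/((b:ℝ)-1)) < 1 := by
    apply Real.exp_lt_one_iff.2
    apply div_neg_of_neg_of_pos (by nlinarith) hB1
  have hlt : 1 + ((b:ℝ)-1) * Real.exp (-((b:ℝ)*x)/((b:ℝ)-1)) < (b:ℝ) := by nlinarith
  have := Real.log_lt_log (denom_pos hb x) hlt
  unfold hh; linarith

lemma hh_le (hb : 2 ≤ b) (x : ℝ) : hh b x ≤ Real.log b := by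
  have hB1 : (0:ℝ) < (b:ℝ) - 1 := by linarith [hB hb]
  have h1 : (1:ℝ) ≤ 1 + ((b:ℝ)-1) * Real.exp (-((b:ℝ)*x)/((b:ℝ)-1)) := by
    nlinarith [Real.exp_pos (-((b:ℝ)*x)/((b:ℝ)-1))]
  have := Real.log_nonneg h1
  unfold hh; linarith

lemma hh_lt_self (hb : 2 ≤ b) {x : ℝ} (hx : 0 < x) : hh b x < x := by
  have hB1 : (0:ℝ) < (b:ℝ) - 1 := by linarith [hB hb]
  set B := (b:ℝ) with hBdef
  have key : B < Real.exp x * (1 + (B-1) * Real.exp (-(B*x)/(B-1))) := by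
    have e1 : x + 1 < Real.exp x := Real.add_one_lt_exp (ne_of_gt hx)
    have hs : -x/(B-1) ≠ 0 := by
      apply ne_of_lt; apply div_neg_of_neg_of_pos (by linarith) hB1
    have e2 : -x/(B-1) + 1 < Real.exp (-x/(B-1)) := Real.add_one_lt_exp hs
    have hprod : Real.exp x * Real.exp (-(B*x)/(B-1)) = Real.exp (-x/(B-1)) := by
      rw [← Real.exp_add]
      congr 1
      field_simp
      ring
    have hc : (B-1) * (-x/(B-1)) = -x := by field_simp
    have expand : Real.exp x * (1 + (B-1) * Real.exp (-(B*x)/(B-1)))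
        = Real.exp x + (B-1) * Real.exp (-x/(B-1)) := by
      rw [mul_add, mul_one, mul_comm (B-1) _, ← mul_assoc, hprod]; ring
    rw [expand]
    nlinarith
  have hlog := Real.log_lt_log (by linarith) key
  rw [Real.log_mul (Real.exp_pos x).ne' (denom_pos hb x).ne', Real.log_exp] at hlog
  unfold hh; linarith

lemma tendsto_psi_zero (hb : 2 ≤ b) :
    Tendsto (fun x => hh b x / x) (nhdsWithin 0 (Set.Ioi 0)) (nhds 1) := by
  have h := hasDerivAt_hh hb 0
  have hg0 : (b:ℝ) / (Real.exp ((b:ℝ)*0/((b:ℝ)-1)) + ((b:ℝ)-1)) = 1 := by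
    have hb0 : (b:ℝ) ≠ 0 := by have := hB hb; linarith
    rw [mul_zero, zero_div, Real.exp_zero]
    field_simp
    rw [add_sub_cancel, div_self hb0]
  rw [hasDerivAt_iff_tendsto_slope, hg0] at h
  have hslope : slope (hh b) 0 = fun x => hh b x / x := by
    funext x
    rw [slope_def_field, hh_zero hb, sub_zero, sub_zero]
  rw [hslope] at h
  exact h.mono_left (nhdsWithin_mono 0 (fun x hx => ne_of_gt hx))

lemma eq_iff_hh (hb : 2 ≤ b) {ρ x : ℝ} (hx : 0 < x) :
    x0Eq b ρ x ↔ hh b x / x = Real.log ρ := by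
  unfold x0Eq hh
  rw [div_eq_iff hx.ne']
  constructor <;> intro h <;> nlinarith [h]

lemma exists_root (hb : 2 ≤ b) {L : ℝ} (hL0 : 0 < L) (hL1 : L < 1) :
    ∃ x, 0 < x ∧ hh b x / x = L := by
  obtain ⟨a, ha0, haL⟩ : ∃ a, 0 < a ∧ L < hh b a / a := by
    have h2 : ∀ᶠ x in nhdsWithin (0:ℝ) (Set.Ioi 0), L < hh b x / x :=
      (tendsto_psi_zero hb).eventually (eventually_gt_nhds hL1)
    have h3 : ∀ᶠ x in nhdsWithin (0:ℝ) (Set.Ioi 0), 0 < x :=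
      eventually_mem_nhdsWithin
    exact (h3.and h2).exists
  set y := max (a+1) (Real.log b / L + 1) with hydef
  have hy1 : a < y := lt_of_lt_of_le (lt_add_one a) (le_max_left _ _)
  have hy0 : 0 < y := ha0.trans hy1
  have hylog : Real.log b / L < y := lt_of_lt_of_le (lt_add_one _) (le_max_right _ _)
  have hψy : hh b y / y < L := by
    have h1 : hh b y ≤ Real.log b := hh_le hb y
    have h2 : Real.log b / y < L := by
      rw [div_lt_iff₀ hy0]
      rw [div_lt_iff₀ hL0] at hylog
      nlinarith
    calc hh b y / y ≤ Real.log b / y := by gcongr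
      _ < L := h2
  have hcont : ContinuousOn (fun x => hh b x / x) (Set.Icc a y) :=
    ((cont_hh hb).continuousOn).div continuousOn_id
      (fun x hx => ne_of_gt (lt_of_lt_of_le ha0 hx.1))
  have hmem : L ∈ Set.Icc (hh b y / y) (hh b a / a) := ⟨le_of_lt hψy, le_of_lt haL⟩
  obtain ⟨x, hx, hxe⟩ := intermediate_value_Icc' (le_of_lt hy1) hcont hmem
  exact ⟨x, lt_of_lt_of_le ha0 hx.1, hxe⟩


/-- Fix an integer `b ≥ 2`. For every `ρ ∈ (1, e)` there is a unique `x > 0` satisfying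
the defining equation of `x₀(b,ρ)`; moreover, any function `x₀` selecting these solutions
is strictly decreasing on `(1, e)`, tends to `∞` as `ρ → 1⁺`, and tends to `0` as `ρ → e⁻`. -/
theorem x0_exists_unique_monotone_limits (b : ℕ) (hb : 2 ≤ b) :
    (∀ ρ ∈ Set.Ioo (1 : ℝ) (Real.exp 1), ∃! x : ℝ, 0 < x ∧ x0Eq b ρ x) ∧
    ∀ x₀ : ℝ → ℝ,
      (∀ ρ ∈ Set.Ioo (1 : ℝ) (Real.exp 1), 0 < x₀ ρ ∧ x0Eq b ρ (x₀ ρ)) →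
      StrictAntiOn x₀ (Set.Ioo (1 : ℝ) (Real.exp 1)) ∧
      Tendsto x₀ (nhdsWithin 1 (Set.Ioi (1 : ℝ))) atTop ∧
      Tendsto x₀ (nhdsWithin (Real.exp 1) (Set.Iio (Real.exp 1))) (nhds 0) := by
  constructor
  · intro ρ hρ
    have hL0 : 0 < Real.log ρ := Real.log_pos hρ.1
    have hL1 : Real.log ρ < 1 := by
      have := Real.log_lt_log (by linarith [hρ.1]) hρ.2
      rwa [Real.log_exp] at this
    obtain ⟨x, hx0, hxe⟩ := exists_root hb hL0 hL1
    refine ⟨x, ⟨hx0, (eq_iff_hh hb hx0).2 hxe⟩, ?_⟩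
    rintro y ⟨hy0, hye⟩
    have hye' := (eq_iff_hh hb hy0).1 hye
    rcases lt_trichotomy y x with h|h|h
    · have := slope_anti hb hy0 h
      rw [hxe, hye'] at this
      exact absurd this (lt_irrefl _)
    · exact h
    · have := slope_anti hb hx0 h
      rw [hxe, hye'] at this
      exact absurd this (lt_irrefl _)
  · intro x₀ hx₀
    have hpsi : ∀ ρ ∈ Set.Ioo (1:ℝ) (Real.exp 1), hh b (x₀ ρ) / (x₀ ρ) = Real.log ρ :=
      fun ρ hρ => (eq_iff_hh hb (hx₀ ρ hρ).1).1 (hx₀ ρ hρ).2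
    refine ⟨?_, ?_, ?_⟩
    · intro ρ1 h1 ρ2 h2 hlt
      have hlog : Real.log ρ1 < Real.log ρ2 := Real.log_lt_log (by linarith [h1.1]) hlt
      rw [← hpsi ρ1 h1, ← hpsi ρ2 h2] at hlog
      by_contra hcon
      push_neg at hcon
      rcases eq_or_lt_of_le hcon with he|hl
      · rw [he] at hlog; exact lt_irrefl _ hlog
      · exact absurd hlog (not_lt.2 (slope_anti hb (hx₀ ρ1 h1).1 hl).le)
    · rw [tendsto_atTop]
      intro M
      set M' := max M 1 with hM'def
      have hM'0 : (0:ℝ) < M' := lt_of_lt_of_le one_pos (le_max_right _ _)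
      have hψpos : 0 < hh b M' / M' := div_pos (hh_pos hb hM'0) hM'0
      set c := min (Real.exp 1) (Real.exp (hh b M' / M')) with hcdef
      have he1 : (1:ℝ) < Real.exp 1 := by
        have := Real.add_one_lt_exp (one_ne_zero (α := ℝ)); linarith
      have he2 : (1:ℝ) < Real.exp (hh b M' / M') := by
        have := Real.add_one_lt_exp (ne_of_gt hψpos); linarith
      have hc1 : (1:ℝ) < c := lt_min he1 he2
      filter_upwards [Ioo_mem_nhdsGT_of_mem
        (show (1:ℝ) ∈ Set.Ico (1:ℝ) c from ⟨le_refl _, hc1⟩)] with ρ hρ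
      have hρI : ρ ∈ Set.Ioo (1:ℝ) (Real.exp 1) :=
        ⟨hρ.1, lt_of_lt_of_le hρ.2 (min_le_left _ _)⟩
      have hlog : Real.log ρ < hh b M' / M' := by
        have h1 : ρ < Real.exp (hh b M' / M') := lt_of_lt_of_le hρ.2 (min_le_right _ _)
        have := Real.log_lt_log (by linarith [hρ.1]) h1
        rwa [Real.log_exp] at this
      rw [← hpsi ρ hρI] at hlog
      have hgt : M' < x₀ ρ := by
        by_contra hcon
        push_neg at hcon
        rcases eq_or_lt_of_le hcon with he|hl
        · rw [he] at hlog; exact lt_irrefl _ hlog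
        · exact absurd (slope_anti hb (hx₀ ρ hρI).1 hl) (not_lt.2 hlog.le)
      exact le_trans (le_max_left M 1) hgt.le
    · rw [NormedAddCommGroup.tendsto_nhds_zero]
      intro ε hε
      have hψε1 : hh b ε / ε < 1 := (div_lt_one hε).2 (hh_lt_self hb hε)
      have hψε0 : 0 < hh b ε / ε := div_pos (hh_pos hb hε) hε
      set c := Real.exp (hh b ε / ε) with hcdef
      have hce : c < Real.exp 1 := Real.exp_lt_exp.2 hψε1
      have hc1 : (1:ℝ) < c := by
        have := Real.add_one_lt_exp (ne_of_gt hψε0); simp only [hcdef]; linarith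
      filter_upwards [Ioo_mem_nhdsLT_of_mem
        (show Real.exp 1 ∈ Set.Ioc c (Real.exp 1) from ⟨hce, le_refl _⟩)] with ρ hρ
      have hρI : ρ ∈ Set.Ioo (1:ℝ) (Real.exp 1) := ⟨lt_trans hc1 hρ.1, hρ.2⟩
      have hlog : hh b ε / ε < Real.log ρ := by
        have := Real.log_lt_log (by positivity) hρ.1
        rwa [Real.log_exp] at this
      rw [← hpsi ρ hρI] at hlog
      have hxlt : x₀ ρ < ε := by
        by_contra hcon
        push_neg at hcon
        rcases eq_or_lt_of_le hcon with he|hl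
        · rw [← he] at hlog; exact lt_irrefl _ hlog
        · exact absurd (slope_anti hb hε hl) (not_lt.2 hlog.le)
      rw [Real.norm_eq_abs, abs_of_pos (hx₀ ρ hρI).1]
      exact hxlt
end

section
/- Fix an integer b ≥ 2. For every real ρ with 1 < ρ < e, writing x₀ = x₀(b,ρ), there is a unique r > 0 satisfying r·log ρ = log((1 + (b−1)·exp(−b·x₀/(b−1)))/(1 − exp(−b·x₀/(b−1)))) + b·r/(b−1+exp(b·x₀/(b−1))); denote it r(b,ρ). Moreover r(b,ρ) → 0 as ρ → 1⁺ and r(b,ρ) → ∞ as ρ → e⁻. -/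
open Filter

/-- The defining equation of the constant `r(b,ρ)` (given `x₀ = x₀(b,ρ)`):
`r·log ρ = log((1 + (b−1)·exp(−b·x₀/(b−1)))/(1 − exp(−b·x₀/(b−1)))) + b·r/(b−1+exp(b·x₀/(b−1)))`. -/
def rEq (b : ℕ) (ρ x₀ r : ℝ) : Prop :=
  r * Real.log ρ =
    Real.log ((1 + ((b : ℝ) - 1) * Real.exp (-((b : ℝ) * x₀) / ((b : ℝ) - 1))) /
        (1 - Real.exp (-((b : ℝ) * x₀) / ((b : ℝ) - 1)))) +
      (b : ℝ) * r / ((b : ℝ) - 1 + Real.exp ((b : ℝ) * x₀ / ((b : ℝ) - 1)))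


noncomputable def gF (c t : ℝ) : ℝ := Real.log c - Real.log (1 + (c-1)*Real.exp (-t))
noncomputable def AF (c t : ℝ) : ℝ :=
  Real.log ((1 + (c-1)*Real.exp (-t))/(1 - Real.exp (-t)))

lemma onePos {c : ℝ} (hc : 2 ≤ c) (t : ℝ) : 0 < 1 + (c-1)*Real.exp (-t) := by
  have := Real.exp_pos (-t); nlinarith

lemma gF_pos {c t : ℝ} (hc : 2 ≤ c) (ht : 0 < t) : 0 < gF c t := by
  unfold gF
  have h1 : Real.exp (-t) < 1 := Real.exp_lt_one_iff.mpr (by linarith)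
  have h2 : 1 + (c-1)*Real.exp (-t) < c := by nlinarith [Real.exp_pos (-t)]
  have := Real.log_lt_log (onePos hc t) h2
  linarith

lemma gF_le_log {c t : ℝ} (hc : 2 ≤ c) : gF c t ≤ Real.log c := by
  unfold gF
  have := Real.log_nonneg (by nlinarith [Real.exp_pos (-t)] : (1:ℝ) ≤ 1 + (c-1)*Real.exp (-t))
  linarith

lemma gF_mono {c s t : ℝ} (hc : 2 ≤ c) (hst : s ≤ t) : gF c s ≤ gF c t := by
  unfold gF
  have h1 : Real.exp (-t) ≤ Real.exp (-s) := Real.exp_le_exp.mpr (by linarith)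
  have := Real.log_le_log (onePos hc t) (by nlinarith : 1 + (c-1)*Real.exp (-t) ≤ 1 + (c-1)*Real.exp (-s))
  linarith

lemma gF_hasDeriv {c : ℝ} (hc : 2 ≤ c) (t : ℝ) :
    HasDerivAt (gF c) ((c-1)*Real.exp (-t)/(1+(c-1)*Real.exp (-t))) t := by
  have h0 : HasDerivAt (fun s : ℝ => Real.exp (-s)) (Real.exp (-t) * (-1)) t :=
    ((hasDerivAt_id t).neg).exp
  have h1 : HasDerivAt (fun s : ℝ => 1 + (c-1)*Real.exp (-s)) ((c-1)*(Real.exp (-t)*(-1))) t :=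
    (h0.const_mul (c-1)).const_add 1
  have h2 := (h1.log (ne_of_gt (onePos hc t))).const_sub (Real.log c)
  refine HasDerivAt.congr_deriv h2 ?_
  field_simp




noncomputable def hF (c t : ℝ) : ℝ := gF c t * ((c-1) + Real.exp t) - (c-1)*t
noncomputable def qF (c t : ℝ) : ℝ := (c-1)*t/c - gF c t

lemma hF_hasDeriv {c : ℝ} (hc : 2 ≤ c) (t : ℝ) :
    HasDerivAt (hF c) (gF c t * Real.exp t) t := by
  have hd : HasDerivAt (fun s : ℝ => (c-1) + Real.exp s) (Real.exp t) t :=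
    (Real.hasDerivAt_exp t).const_add (c-1)
  have h := ((gF_hasDeriv hc t).mul hd).sub ((hasDerivAt_id t).const_mul (c-1))
  refine HasDerivAt.congr_deriv h ?_
  have hE : Real.exp t * Real.exp (-t) = 1 := by rw [← Real.exp_add]; simp
  have hP : (1 + (c-1)*Real.exp (-t)) ≠ 0 := ne_of_gt (onePos hc t)
  field_simp
  nlinarith [hE]

lemma qF_hasDeriv {c : ℝ} (hc : 2 ≤ c) (t : ℝ) :
    HasDerivAt (qF c) ((c-1)/c - (c-1)*Real.exp (-t)/(1+(c-1)*Real.exp (-t))) t := by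
  have h := ((hasDerivAt_id t).const_mul (c-1)).div_const c |>.sub (gF_hasDeriv hc t)
  refine HasDerivAt.congr_deriv h ?_
  ring

lemma hF_zero (c : ℝ) : hF c 0 = 0 := by
  unfold hF gF; simp

lemma qF_zero (c : ℝ) : qF c 0 = 0 := by
  unfold qF gF; simp

lemma gF_cont {c : ℝ} (hc : 2 ≤ c) : Continuous (gF c) :=
  continuous_iff_continuousAt.mpr fun t => (gF_hasDeriv hc t).continuousAt

lemma hF_mono {c : ℝ} (hc : 2 ≤ c) : StrictMonoOn (hF c) (Set.Ici 0) := by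
  apply strictMonoOn_of_deriv_pos (convex_Ici 0)
  · have : Continuous (hF c) := by
      unfold hF
      exact ((gF_cont hc).mul (by continuity)).sub (by continuity)
    exact this.continuousOn
  · intro x hx
    rw [interior_Ici] at hx
    rw [(hF_hasDeriv hc x).deriv]
    exact mul_pos (gF_pos hc hx) (Real.exp_pos x)

lemma qF_mono {c : ℝ} (hc : 2 ≤ c) : StrictMonoOn (qF c) (Set.Ici 0) := by
  apply strictMonoOn_of_deriv_pos (convex_Ici 0)
  · have : Continuous (qF c) := by
      unfold qF
      exact (by continuity : Continuous fun t : ℝ => (c-1)*t/c).sub (gF_cont hc)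
    exact this.continuousOn
  · intro x hx
    rw [interior_Ici] at hx
    rw [(qF_hasDeriv hc x).deriv]
    have hx' : (0:ℝ) < x := hx
    have hE1 : Real.exp (-x) < 1 := Real.exp_lt_one_iff.mpr (by linarith)
    have hE0 : 0 < Real.exp (-x) := Real.exp_pos _
    have hP : 0 < 1 + (c-1)*Real.exp (-x) := onePos hc x
    rw [sub_pos, div_lt_div_iff₀ hP (by linarith : (0:ℝ) < c)]
    nlinarith

lemma hF_pos {c t : ℝ} (hc : 2 ≤ c) (ht : 0 < t) : 0 < hF c t := by
  have := hF_mono hc (Set.self_mem_Ici) (Set.mem_Ici.mpr (le_of_lt ht)) ht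
  rwa [hF_zero] at this

lemma qF_pos {c t : ℝ} (hc : 2 ≤ c) (ht : 0 < t) : 0 < qF c t := by
  have := qF_mono hc (Set.self_mem_Ici) (Set.mem_Ici.mpr (le_of_lt ht)) ht
  rwa [qF_zero] at this




lemma expLt1 {t : ℝ} (ht : 0 < t) : Real.exp (-t) < 1 := Real.exp_lt_one_iff.mpr (by linarith)

lemma AF_eq {c t : ℝ} (hc : 2 ≤ c) (ht : 0 < t) :
    AF c t = Real.log (1 + (c-1)*Real.exp (-t)) - Real.log (1 - Real.exp (-t)) := by
  unfold AF
  exact Real.log_div (ne_of_gt (onePos hc t)) (by nlinarith [expLt1 ht])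

lemma AF_pos {c t : ℝ} (hc : 2 ≤ c) (ht : 0 < t) : 0 < AF c t := by
  unfold AF
  apply Real.log_pos
  rw [one_lt_div (by nlinarith [expLt1 ht] : (0:ℝ) < 1 - Real.exp (-t))]
  nlinarith [Real.exp_pos (-t)]

lemma AF_le {c t : ℝ} (hc : 2 ≤ c) (ht : 1 ≤ t) : AF c t ≤ (c+1)*Real.exp (-t) := by
  have ht0 : 0 < t := by linarith
  set E := Real.exp (-t) with hE
  have hE0 : 0 < E := Real.exp_pos _
  have hEhalf : E ≤ 1/2 := by
    have h1 : E ≤ Real.exp (-1) := Real.exp_le_exp.mpr (by linarith)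
    have h2 : Real.exp (-1) = (Real.exp 1)⁻¹ := Real.exp_neg 1
    have h3 : (2:ℝ) < Real.exp 1 := by
      have := Real.exp_one_gt_d9; linarith
    have : (Real.exp 1)⁻¹ ≤ 1/2 := by
      rw [inv_le_comm₀ (by linarith) (by norm_num)]; linarith
    linarith
  rw [AF_eq hc ht0, ← hE]
  have hlog1 : Real.log (1 + (c-1)*E) ≤ (c-1)*E := by
    have := Real.log_le_sub_one_of_pos (onePos hc t)
    rw [← hE] at this; linarith
  have hden : 0 < 1 - E := by linarith
  have hlog2 : -(2*E) ≤ Real.log (1-E) := by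
    have h1 : Real.log (1-E)⁻¹ ≤ (1-E)⁻¹ - 1 := Real.log_le_sub_one_of_pos (by positivity)
    rw [Real.log_inv] at h1
    have h2 : (1-E)⁻¹ ≤ 1 + 2*E := by
      rw [inv_le_iff_one_le_mul₀ hden]; nlinarith
    linarith
  nlinarith

lemma exp_chord {t T : ℝ} (ht0 : 0 ≤ t) (htT : t ≤ T) (hT : 0 < T) :
    Real.exp (-t) ≤ (1 - t/T) + (t/T)*Real.exp (-T) := by
  have hq : t/T ≤ 1 := (div_le_one hT).mpr htT
  have h := convexOn_exp.2 (Set.mem_univ (0:ℝ)) (Set.mem_univ (-T))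
    (by linarith : (0:ℝ) ≤ 1 - t/T) (by positivity : (0:ℝ) ≤ t/T) (by ring)
  simp only [smul_eq_mul, mul_zero, zero_add, Real.exp_zero, mul_one] at h
  have harg : t/T * -T = -t := by field_simp
  rw [harg] at h
  linarith

lemma exp_quad {t : ℝ} (ht : 0 ≤ t) : t^2/4 ≤ Real.exp t := by
  have h1 : t/2 + 1 ≤ Real.exp (t/2) := Real.add_one_le_exp (t/2)
  have h2 : Real.exp t = Real.exp (t/2) * Real.exp (t/2) := by
    rw [← Real.exp_add]; ring_nf
  nlinarith




/-- if `t ≤ T` then `log ρ` is not too small (chord bound). -/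
lemma lower_t {c t T L : ℝ} (hc : 2 ≤ c) (ht : 0 < t) (htT : t ≤ T)
    (hL : ((c-1)*t/c) * L = gF c t) : (1 - Real.exp (-T))/T ≤ L := by
  have hT : 0 < T := lt_of_lt_of_le ht htT
  have hET : Real.exp (-T) < 1 := expLt1 hT
  have hET0 : 0 < Real.exp (-T) := Real.exp_pos _
  set z : ℝ := (c-1)*(t/T)*(1 - Real.exp (-T)) with hz
  have htT1 : t/T ≤ 1 := (div_le_one hT).mpr htT
  have htT0 : 0 < t/T := div_pos ht hT
  have hc1 : (0:ℝ) < c - 1 := by linarith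
  have hzc : z < c := by
    have h1 : (t/T)*(1 - Real.exp (-T)) ≤ 1 := by nlinarith
    have : z ≤ (c-1) := by
      rw [hz, mul_assoc]
      nlinarith
    linarith
  have hz0 : 0 < z := by
    rw [hz]; apply mul_pos (mul_pos hc1 htT0); linarith
  -- 1 + (c-1) exp(-t) ≤ c - z
  have hub : 1 + (c-1)*Real.exp (-t) ≤ c - z := by
    have := exp_chord (le_of_lt ht) htT hT
    nlinarith
  -- gF c t ≥ z/c
  have hlog : Real.log (c - z) ≤ Real.log c - z/c := by
    have h1 : Real.log ((c-z)/c) ≤ (c-z)/c - 1 :=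
      Real.log_le_sub_one_of_pos (div_pos (by linarith) (by linarith))
    rw [Real.log_div (by linarith) (by linarith)] at h1
    have : (c-z)/c - 1 = -(z/c) := by field_simp; ring
    rw [this] at h1; linarith
  have hg : z/c ≤ gF c t := by
    unfold gF
    have := Real.log_le_log (onePos hc t) hub
    linarith
  -- conclude
  have hfac : 0 < (c-1)*t/c := div_pos (mul_pos hc1 ht) (by linarith)
  have hkey : ((c-1)*t/c) * ((1 - Real.exp (-T))/T) ≤ ((c-1)*t/c) * L := by
    rw [hL]
    calc ((c-1)*t/c) * ((1 - Real.exp (-T))/T) = z/c := by rw [hz]; ring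
    _ ≤ gF c t := hg
  exact le_of_mul_le_mul_left hkey hfac

/-- `t ↦ t e^{-t}` decreasing past 1, and its bound. -/
lemma te_mono {t T : ℝ} (hT1 : 1 ≤ T) (hTt : T ≤ t) :
    t * Real.exp (-t) ≤ T * Real.exp (-T) := by
  have h1 : t/T ≤ Real.exp (t - T) := by
    have := Real.add_one_le_exp (t - T)
    have hT0 : 0 < T := by linarith
    rw [div_le_iff₀ hT0]
    nlinarith
  have h2 : Real.exp (-t) * Real.exp (t - T) = Real.exp (-T) := by
    rw [← Real.exp_add]; ring_nf
  have hT0 : 0 < T := by linarith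
  have hE : 0 < Real.exp (-t) := Real.exp_pos _
  calc t * Real.exp (-t) = (t/T) * Real.exp (-t) * T := by field_simp
  _ ≤ Real.exp (t-T) * Real.exp (-t) * T := by
      apply mul_le_mul_of_nonneg_right _ (le_of_lt hT0)
      exact mul_le_mul_of_nonneg_right h1 (le_of_lt hE)
  _ = T * Real.exp (-T) := by rw [mul_comm (Real.exp (t-T)) (Real.exp (-t)), h2]; ring

lemma te_bound {T : ℝ} (hT : 0 < T) : T * Real.exp (-T) ≤ 4/T := by
  have h1 : T^2/4 ≤ Real.exp T := exp_quad (le_of_lt hT)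
  have h2 : Real.exp (-T) = (Real.exp T)⁻¹ := Real.exp_neg T
  have hE : 0 < Real.exp T := Real.exp_pos T
  rw [h2]
  rw [mul_inv_le_iff₀ hE, div_mul_eq_mul_div, le_div_iff₀ hT]
  nlinarith




/-- Main upper bound on `r` for large `t`. -/
lemma upper {c t L r : ℝ} (hc : 2 ≤ c) (ht1 : 1 ≤ t) (ht8 : 8*(c-1)/gF c 1 ≤ t)
    (hL : ((c-1)*t/c) * L = gF c t)
    (hre : r * (L - c/((c-1) + Real.exp t)) = AF c t) (hr : 0 < r) :
    r ≤ (2*(c+1)*(c-1)/(c * gF c 1)) * (t * Real.exp (-t)) := by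
  have ht0 : 0 < t := by linarith
  have hc1 : (0:ℝ) < c - 1 := by linarith
  have hc0 : (0:ℝ) < c := by linarith
  have hg1 : 0 < gF c 1 := gF_pos hc one_pos
  have hgt : gF c 1 ≤ gF c t := gF_mono hc ht1
  have hgt0 : 0 < gF c t := lt_of_lt_of_le hg1 hgt
  have hd : 0 < (c-1) + Real.exp t := by positivity
  have hexp : 0 < Real.exp t := Real.exp_pos t
  -- L value
  have hL0 : 0 < L := by
    have hfac : 0 < (c-1)*t/c := div_pos (mul_pos hc1 ht0) hc0
    nlinarith
  -- 2(c-1)t ≤ gF c t * ((c-1)+exp t)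
  have h2 : 2*(c-1)*t ≤ gF c t * ((c-1) + Real.exp t) := by
    have hq : t^2/4 ≤ Real.exp t := exp_quad (le_of_lt ht0)
    have h8 : 8*(c-1) ≤ gF c 1 * t := by
      rw [div_le_iff₀ hg1] at ht8; linarith [ht8]
    have : 2*(c-1)*t ≤ gF c 1 * (t^2/4) := by nlinarith
    calc 2*(c-1)*t ≤ gF c 1 * (t^2/4) := this
    _ ≤ gF c 1 * Real.exp t := by nlinarith
    _ ≤ gF c t * ((c-1) + Real.exp t) := by nlinarith
  -- cc ≤ L/2
  have hcc : c/((c-1) + Real.exp t) ≤ L/2 := by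
    rw [div_le_div_iff₀ hd (by norm_num : (0:ℝ) < 2)]
    -- 2c ≤ L * ((c-1)+exp t) ; L = c gF/( (c-1) t )
    have hLval : L * ((c-1)*t) = c * gF c t := by
      have : ((c-1)*t/c) * L * c = gF c t * c := by rw [hL]
      field_simp at this
      linarith [this]
    nlinarith [hLval, h2]
  -- r ≤ 2 AF / L  i.e.  r * L ≤ 2 AF
  have hrL : r * L ≤ 2 * AF c t := by
    have hDge : L/2 ≤ L - c/((c-1)+Real.exp t) := by linarith
    nlinarith [hre, hDge]
  -- final
  have hAF : AF c t ≤ (c+1)*Real.exp (-t) := AF_le hc ht1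
  have hLlb : c * gF c 1 / ((c-1)*t) ≤ L := by
    have hLval : L * ((c-1)*t) = c * gF c t := by
      have : ((c-1)*t/c) * L * c = gF c t * c := by rw [hL]
      field_simp at this
      linarith [this]
    rw [div_le_iff₀ (by positivity)]
    nlinarith
  have hE0 : 0 < Real.exp (-t) := Real.exp_pos _
  have step : r * (c * gF c 1 / ((c-1)*t)) ≤ 2*(c+1)*Real.exp (-t) := by
    calc r * (c * gF c 1 / ((c-1)*t)) ≤ r * L := by
          apply mul_le_mul_of_nonneg_left hLlb (le_of_lt hr)
    _ ≤ 2 * AF c t := hrL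
    _ ≤ 2*(c+1)*Real.exp (-t) := by linarith
  have hfin : r * (c * gF c 1) ≤ 2*(c+1)*Real.exp (-t) * ((c-1)*t) := by
    have h9 : r * (c*gF c 1/((c-1)*t)) * ((c-1)*t) ≤ 2*(c+1)*Real.exp (-t) * ((c-1)*t) :=
      mul_le_mul_of_nonneg_right step (by positivity)
    have h10 : r * (c*gF c 1/((c-1)*t)) * ((c-1)*t) = r * (c*gF c 1) := by field_simp
    linarith
  rw [div_mul_eq_mul_div, le_div_iff₀ (by positivity)]
  have h11 : 2*(c+1)*(c-1)*(t*Real.exp (-t)) = 2*(c+1)*Real.exp (-t)*((c-1)*t) := by ring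
  nlinarith [hfin]

/-- Upper bound on `L` when `t ≥ ε`. -/
lemma upper_L {c t L ε T' : ℝ} (hc : 2 ≤ c) (hε : 0 < ε) (hεt : ε ≤ t) (hT' : 0 < T')
    (hL : ((c-1)*t/c) * L = gF c t) :
    L ≤ 1 - c * qF c ε/((c-1)*T') ∨ L ≤ c * Real.log c/((c-1)*T') := by
  have ht0 : 0 < t := lt_of_lt_of_le hε hεt
  have hc1 : (0:ℝ) < c - 1 := by linarith
  have hc0 : (0:ℝ) < c := by linarith
  have hLval : L * ((c-1)*t) = c * gF c t := by
    have : ((c-1)*t/c) * L * c = gF c t * c := by rw [hL]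
    field_simp at this
    linarith [this]
  rcases le_or_gt t T' with hcase | hcase
  · left
    have hqε : 0 < qF c ε := qF_pos hc hε
    have hqt : qF c ε ≤ qF c t := by
      rcases eq_or_lt_of_le hεt with h | h
      · rw [h]
      · exact le_of_lt (qF_mono hc (Set.mem_Ici.mpr (le_of_lt hε))
          (Set.mem_Ici.mpr (le_of_lt ht0)) h)
    have hgq : gF c t = (c-1)*t/c - qF c t := by unfold qF; ring
    rw [hgq] at hLval
    have hcc : c*((c-1)*t/c) = (c-1)*t := by field_simp
    have h1mL : (1-L)*((c-1)*t) = c*qF c t := by linear_combination -hLval - hcc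
    have h1mLval : 1 - L = c*qF c t/((c-1)*t) := by
      rw [eq_div_iff (by positivity)]; linarith [h1mL]
    have key : c*qF c ε/((c-1)*T') ≤ c*qF c t/((c-1)*t) := by
      rw [div_le_div_iff₀ (by positivity) (by positivity)]
      have hkey2 : qF c ε * t ≤ qF c t * T' :=
        mul_le_mul hqt hcase (le_of_lt ht0) (le_of_lt (lt_of_lt_of_le hqε hqt))
      nlinarith [mul_le_mul_of_nonneg_left hkey2 (le_of_lt (mul_pos hc0 hc1))]
    linarith [h1mLval ▸ key]
  · right
    have hlogc : 0 < Real.log c := Real.log_pos (by linarith)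
    have h1 : L ≤ c*Real.log c/((c-1)*t) := by
      rw [le_div_iff₀ (by positivity)]
      nlinarith [hLval, gF_le_log (t := t) hc]
    have h2 : c*Real.log c/((c-1)*t) ≤ c*Real.log c/((c-1)*T') := by
      apply div_le_div_of_nonneg_left (by positivity) (by positivity)
      nlinarith
    linarith

/-- Lower bound on `r`. -/
lemma lower_r {c t L r : ℝ} (hc : 2 ≤ c) (ht : 0 < t) (hL1 : L < 1)
    (hre : r * (L - c/((c-1)+Real.exp t)) = AF c t) (hr : 0 < r) :
    -Real.log (1 - Real.exp (-t)) ≤ r := by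
  have hc1 : (0:ℝ) < c - 1 := by linarith
  have hd : 0 < (c-1) + Real.exp t := by positivity
  have hcc0 : 0 < c/((c-1)+Real.exp t) := div_pos (by linarith) hd
  have hA : 0 < AF c t := AF_pos hc ht
  have hD : 0 < L - c/((c-1)+Real.exp t) := by
    by_contra hcon
    push_neg at hcon
    nlinarith
  have hD1 : L - c/((c-1)+Real.exp t) < 1 := by linarith
  have hAr : AF c t < r := by nlinarith
  have hAlb : -Real.log (1 - Real.exp (-t)) ≤ AF c t := by
    rw [AF_eq hc ht]
    have : 0 ≤ Real.log (1 + (c-1)*Real.exp (-t)) :=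
      Real.log_nonneg (by nlinarith [Real.exp_pos (-t)])
    linarith
  linarith


lemma x0Eq_iff (b : ℕ) (ρ x₀ : ℝ) :
    x0Eq b ρ x₀ ↔ x₀ * Real.log ρ = gF (b:ℝ) ((b:ℝ)*x₀/((b:ℝ)-1)) := by
  unfold x0Eq gF
  rw [neg_div]
  constructor <;> intro h <;> linarith

lemma rEq_iff (b : ℕ) (ρ x₀ r : ℝ) :
    rEq b ρ x₀ r ↔
      r * (Real.log ρ - (b:ℝ)/(((b:ℝ)-1) + Real.exp ((b:ℝ)*x₀/((b:ℝ)-1)))) =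
        AF (b:ℝ) ((b:ℝ)*x₀/((b:ℝ)-1)) := by
  unfold rEq AF
  rw [neg_div]
  constructor <;> intro h <;> linear_combination h

lemma hD_pos {c t L : ℝ} (hc : 2 ≤ c) (ht : 0 < t)
    (hL : ((c-1)*t/c) * L = gF c t) : 0 < L - c/((c-1)+Real.exp t) := by
  have hc1 : (0:ℝ) < c - 1 := by linarith
  have hc0 : (0:ℝ) < c := by linarith
  have h1 : (c-1)*t < gF c t * ((c-1)+Real.exp t) := by
    have := hF_pos hc ht; unfold hF at this; linarith
  have hd : 0 < (c-1)+Real.exp t := by positivity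
  have hLval : L*((c-1)*t) = c*gF c t := by
    field_simp at hL
    linear_combination hL
  rw [sub_pos, div_lt_iff₀ hd]
  nlinarith [mul_pos hc1 ht]

set_option maxHeartbeats 1000000 in
/-- Fix an integer `b ≥ 2`. For every `ρ ∈ (1, e)`, writing `x₀ = x₀(b,ρ)`, there is a
unique `r > 0` satisfying the defining equation of `r(b,ρ)`; moreover, for any functions
`x₀, r` selecting these solutions, `r(b,ρ) → 0` as `ρ → 1⁺` and `r(b,ρ) → ∞` as `ρ → e⁻`. -/
theorem r_exists_unique_limits (b : ℕ) (hb : 2 ≤ b) :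
    (∀ ρ ∈ Set.Ioo (1 : ℝ) (Real.exp 1), ∀ x₀ : ℝ, 0 < x₀ → x0Eq b ρ x₀ →
      ∃! r : ℝ, 0 < r ∧ rEq b ρ x₀ r) ∧
    ∀ x₀ r : ℝ → ℝ,
      (∀ ρ ∈ Set.Ioo (1 : ℝ) (Real.exp 1),
        0 < x₀ ρ ∧ x0Eq b ρ (x₀ ρ) ∧ 0 < r ρ ∧ rEq b ρ (x₀ ρ) (r ρ)) →
      Tendsto r (nhdsWithin 1 (Set.Ioi (1 : ℝ))) (nhds 0) ∧
      Tendsto r (nhdsWithin (Real.exp 1) (Set.Iio (Real.exp 1))) atTop := by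
  have hc : (2:ℝ) ≤ (b:ℝ) := by exact_mod_cast hb
  have hc1 : (0:ℝ) < (b:ℝ) - 1 := by linarith
  have hc0 : (0:ℝ) < (b:ℝ) := by linarith
  constructor
  · -- existence and uniqueness
    intro ρ hρ x₀ hx heq
    have hL := (x0Eq_iff b ρ x₀).mp heq
    set t := (b:ℝ)*x₀/((b:ℝ)-1) with htdef
    have ht : 0 < t := div_pos (mul_pos hc0 hx) hc1
    have hxt : ((b:ℝ)-1)*t/(b:ℝ) = x₀ := by rw [htdef]; field_simp
    have hL' : (((b:ℝ)-1)*t/(b:ℝ)) * Real.log ρ = gF (b:ℝ) t := by rw [hxt]; exact hL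
    have hD := hD_pos hc ht hL'
    have hA : 0 < AF (b:ℝ) t := AF_pos hc ht
    refine ⟨AF (b:ℝ) t/(Real.log ρ - (b:ℝ)/(((b:ℝ)-1)+Real.exp t)),
      ⟨div_pos hA hD, ?_⟩, ?_⟩
    · rw [rEq_iff, ← htdef]
      exact div_mul_cancel₀ _ (ne_of_gt hD)
    · rintro r' ⟨hr', hre'⟩
      rw [rEq_iff, ← htdef] at hre'
      have h2 : r' * (Real.log ρ - (b:ℝ)/(((b:ℝ)-1)+Real.exp t))
          = (AF (b:ℝ) t/(Real.log ρ - (b:ℝ)/(((b:ℝ)-1)+Real.exp t)))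
            * (Real.log ρ - (b:ℝ)/(((b:ℝ)-1)+Real.exp t)) := by
        rw [hre', div_mul_cancel₀ _ (ne_of_gt hD)]
      exact mul_right_cancel₀ (ne_of_gt hD) h2
  · -- limits
    intro x₀f rf hsel
    constructor
    · -- ρ → 1⁺
      rw [Metric.tendsto_nhdsWithin_nhds]
      intro ε hε
      have hg1 : 0 < gF (b:ℝ) 1 := gF_pos hc one_pos
      set C := 2*((b:ℝ)+1)*((b:ℝ)-1)/((b:ℝ)*gF (b:ℝ) 1) with hCdef
      have hC : 0 < C := by
        rw [hCdef]
        apply div_pos _ (mul_pos hc0 hg1)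
        nlinarith
      set T := max (max 1 (8*((b:ℝ)-1)/gF (b:ℝ) 1)) (4*C/ε + 1) with hTdef
      have hT1 : (1:ℝ) ≤ T := le_trans (le_max_left _ _) (le_max_left _ _)
      have hT8 : 8*((b:ℝ)-1)/gF (b:ℝ) 1 ≤ T := le_trans (le_max_right _ _) (le_max_left _ _)
      have hTC : 4*C/ε < T := lt_of_lt_of_le (by linarith) (le_max_right _ _)
      have hT0 : 0 < T := by linarith
      set δ' := (1 - Real.exp (-T))/T with hδ'def
      have hδ' : 0 < δ' := div_pos (by linarith [expLt1 hT0]) hT0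
      have hexpδ : 1 < Real.exp δ' := by
        calc (1:ℝ) = Real.exp 0 := (Real.exp_zero).symm
        _ < Real.exp δ' := Real.exp_lt_exp.mpr hδ'
      have hexp1 : 1 < Real.exp 1 := by
        calc (1:ℝ) = Real.exp 0 := (Real.exp_zero).symm
        _ < Real.exp 1 := Real.exp_lt_exp.mpr one_pos
      refine ⟨min (Real.exp δ') (Real.exp 1) - 1,
        by have h := lt_min hexpδ hexp1; linarith, ?_⟩
      intro ρ hρmem hdist
      have hρ1 : (1:ℝ) < ρ := hρmem
      rw [Real.dist_eq] at hdist
      have habs := abs_lt.mp hdist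
      have hρu : ρ < min (Real.exp δ') (Real.exp 1) := by linarith [habs.2]
      have hρe : ρ ∈ Set.Ioo (1:ℝ) (Real.exp 1) :=
        ⟨hρ1, lt_of_lt_of_le hρu (min_le_right _ _)⟩
      obtain ⟨hx, heq, hr, hre⟩ := hsel ρ hρe
      have hL := (x0Eq_iff b ρ (x₀f ρ)).mp heq
      set t := (b:ℝ)*(x₀f ρ)/((b:ℝ)-1) with htdef
      have ht : 0 < t := div_pos (mul_pos hc0 hx) hc1
      have hxt : ((b:ℝ)-1)*t/(b:ℝ) = x₀f ρ := by rw [htdef]; field_simp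
      have hL' : (((b:ℝ)-1)*t/(b:ℝ)) * Real.log ρ = gF (b:ℝ) t := by rw [hxt]; exact hL
      have hre' : rf ρ * (Real.log ρ - (b:ℝ)/(((b:ℝ)-1)+Real.exp t)) = AF (b:ℝ) t := by
        have h0 := (rEq_iff b ρ (x₀f ρ) (rf ρ)).mp hre
        rw [← htdef] at h0
        exact h0
      have hLδ : Real.log ρ < δ' := by
        have h1 : Real.log ρ < Real.log (Real.exp δ') :=
          Real.log_lt_log (by linarith) (lt_of_lt_of_le hρu (min_le_left _ _))
        rwa [Real.log_exp] at h1
      have htT : T < t := by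
        by_contra hcon
        push_neg at hcon
        have := lower_t hc ht hcon hL'
        rw [← hδ'def] at this
        linarith
      have hub := upper hc (by linarith) (by linarith) hL' hre' hr
      rw [← hCdef] at hub
      have h2 : t*Real.exp (-t) ≤ T*Real.exp (-T) := te_mono hT1 (le_of_lt htT)
      have h3 : T*Real.exp (-T) ≤ 4/T := te_bound hT0
      have h4 : C*(4/T) < ε := by
        have h5 : 4*C < T*ε := (div_lt_iff₀ hε).mp hTC
        have h6 : C*(4/T) = 4*C/T := by ring
        rw [h6, div_lt_iff₀ hT0]
        nlinarith
      have h7 : C*(t*Real.exp (-t)) ≤ C*(4/T) := by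
        apply mul_le_mul_of_nonneg_left _ (le_of_lt hC)
        linarith
      rw [Real.dist_eq, sub_zero, abs_of_pos hr]
      linarith
    · -- ρ → e⁻
      rw [tendsto_atTop]
      intro M
      set M' := max M 1 with hM'def
      have hM'1 : (1:ℝ) ≤ M' := le_max_right _ _
      have hEM : Real.exp (-M') < 1 := expLt1 (by linarith)
      have hEM0 : 0 < Real.exp (-M') := Real.exp_pos _
      set ε0 := -Real.log (1 - Real.exp (-M')) with hε0def
      have hε0 : 0 < ε0 := by
        rw [hε0def]
        have := Real.log_neg (show (0:ℝ) < 1 - Real.exp (-M') by linarith)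
          (show 1 - Real.exp (-M') < 1 by linarith)
        linarith
      have hqε : 0 < qF (b:ℝ) ε0 := qF_pos hc hε0
      have hlogc : 0 < Real.log (b:ℝ) := Real.log_pos (by linarith)
      set T' := max ε0 (2*(b:ℝ)*Real.log (b:ℝ)/((b:ℝ)-1)) with hT'def
      have hT'0 : 0 < T' := lt_of_lt_of_le hε0 (le_max_left _ _)
      set η := min ((b:ℝ)*qF (b:ℝ) ε0/(((b:ℝ)-1)*T')) (1/2) with hηdef
      have hη : 0 < η :=
        lt_min (div_pos (mul_pos hc0 hqε) (mul_pos hc1 hT'0)) one_half_pos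
      have hη2 : η ≤ 1/2 := min_le_right _ _
      have hα1 : 1 < Real.exp (1-η) := by
        calc (1:ℝ) = Real.exp 0 := (Real.exp_zero).symm
        _ < Real.exp (1-η) := Real.exp_lt_exp.mpr (by linarith)
      have hαe : Real.exp (1-η) < Real.exp 1 := Real.exp_lt_exp.mpr (by linarith)
      filter_upwards [Ioo_mem_nhdsLT_of_mem
        (Set.mem_Ioc.mpr ⟨hαe, le_refl _⟩ : Real.exp 1 ∈ Set.Ioc (Real.exp (1-η)) (Real.exp 1))]
        with ρ hρ
      have hρe : ρ ∈ Set.Ioo (1:ℝ) (Real.exp 1) := ⟨lt_trans hα1 hρ.1, hρ.2⟩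
      obtain ⟨hx, heq, hr, hre⟩ := hsel ρ hρe
      have hL := (x0Eq_iff b ρ (x₀f ρ)).mp heq
      set t := (b:ℝ)*(x₀f ρ)/((b:ℝ)-1) with htdef
      have ht : 0 < t := div_pos (mul_pos hc0 hx) hc1
      have hxt : ((b:ℝ)-1)*t/(b:ℝ) = x₀f ρ := by rw [htdef]; field_simp
      have hL' : (((b:ℝ)-1)*t/(b:ℝ)) * Real.log ρ = gF (b:ℝ) t := by rw [hxt]; exact hL
      have hre' : rf ρ * (Real.log ρ - (b:ℝ)/(((b:ℝ)-1)+Real.exp t)) = AF (b:ℝ) t := by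
        have h0 := (rEq_iff b ρ (x₀f ρ) (rf ρ)).mp hre
        rw [← htdef] at h0
        exact h0
      have hL1 : Real.log ρ < 1 := by
        have := Real.log_lt_log (lt_trans one_pos hρe.1) hρ.2
        rwa [Real.log_exp] at this
      have hLlb : 1 - η < Real.log ρ := by
        have := Real.log_lt_log (Real.exp_pos _) hρ.1
        rwa [Real.log_exp] at this
      have htε : t < ε0 := by
        by_contra hcon
        push_neg at hcon
        rcases upper_L hc hε0 hcon hT'0 hL' with hcase | hcase
        · have hmin : η ≤ (b:ℝ)*qF (b:ℝ) ε0/(((b:ℝ)-1)*T') := by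
            rw [hηdef]; exact min_le_left _ _
          linarith
        · have hT'2 : 2*(b:ℝ)*Real.log (b:ℝ)/((b:ℝ)-1) ≤ T' := by
            rw [hT'def]; exact le_max_right _ _
          have h5 : (b:ℝ)*Real.log (b:ℝ)/(((b:ℝ)-1)*T') ≤ 1/2 := by
            rw [div_le_iff₀ (mul_pos hc1 hT'0)]
            rw [div_le_iff₀ hc1] at hT'2
            linarith [hT'2]
          linarith
      have hrlow := lower_r hc ht hL1 hre' hr
      have hEt : 1 - Real.exp (-M') < Real.exp (-t) := by
        have h1 : Real.exp (-ε0) < Real.exp (-t) := Real.exp_lt_exp.mpr (by linarith)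
        have h2 : Real.exp (-ε0) = 1 - Real.exp (-M') := by
          rw [hε0def, neg_neg, Real.exp_log (by linarith)]
        linarith
      have h6 : Real.log (1 - Real.exp (-t)) < -M' := by
        have h8 : 0 < 1 - Real.exp (-t) := by linarith [expLt1 ht]
        have h9 := Real.log_lt_log h8 (by linarith : 1 - Real.exp (-t) < Real.exp (-M'))
        rwa [Real.log_exp] at h9
      have hMM : M ≤ M' := le_max_left _ _
      linarith
end

section
/- Let b ≥ 2 be an integer and ρ ∈ (1, e). There exist constants L₁ > 0, c₁ > 0, c₂ > 0 and D ∈ ℕ such that for all d ≥ D and all m with 1 ≤ m ≤ d/L₁, the unique solution t > 0 of the first-moment equation satisfies c₁·d ≤ t ≤ c₂·d. -/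
set_option maxHeartbeats 1600000 in
/-- Let `b ≥ 2` be an integer and `ρ ∈ (1, e)`. There are constants `L₁, c₁, c₂ > 0` and
`D ∈ ℕ` such that for all `d ≥ D` and all `m` with `1 ≤ m ≤ d/L₁`, the (unique) positive
solution `t` of the first-moment equation satisfies `c₁·d ≤ t ≤ c₂·d`. -/
theorem firstMoment_solution_linear_order (b : ℕ) (hb : 2 ≤ b) (ρ : ℝ)
    (hρ₁ : 1 < ρ) (hρe : ρ < Real.exp 1) :
    ∃ L₁ c₁ c₂ : ℝ, 0 < L₁ ∧ 0 < c₁ ∧ 0 < c₂ ∧ ∃ D : ℕ,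
      ∀ d ≥ D, ∀ m : ℕ, 1 ≤ m → (m : ℝ) ≤ (d : ℝ) / L₁ →
        ∀ t : ℝ, 0 < t → firstMomentLHS b d m ρ t = 1 →
          c₁ * d ≤ t ∧ t ≤ c₂ * d := by
  have hB : (2:ℝ) ≤ (b:ℝ) := by exact_mod_cast hb
  have hρ0 : (0:ℝ) < ρ := by linarith
  set α := Real.log ρ with hαdef
  clear_value α
  have hα0 : 0 < α := hαdef ▸ Real.log_pos hρ₁
  have hα1 : α < 1 := by
    have h := Real.log_lt_log hρ0 hρe
    rw [Real.log_exp] at h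
    linarith [hαdef ▸ h]
  set ε : ℝ := (1 - α)/4 with hεdef
  clear_value ε
  have hε0 : 0 < ε := by rw [hεdef]; linarith
  have hε1 : ε < 1/4 := by rw [hεdef]; linarith
  have hεα : α * (1 + ε) < 1 - ε := by
    rw [hεdef]; nlinarith [sq_nonneg (1 - α)]
  have hlog2B : 1 ≤ Real.log (2*(b:ℝ)) := by
    rw [show (1:ℝ) = Real.log (Real.exp 1) from (Real.log_exp 1).symm]
    apply Real.log_le_log (Real.exp_pos 1)
    have := Real.exp_one_lt_d9
    linarith
  set c₂ : ℝ := (Real.log (2*(b:ℝ)) + 1)/α with hc₂def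
  have hc₂pos : 0 < c₂ := by
    rw [hc₂def]; exact div_pos (by linarith) hα0
  have hc₂1 : 1 < c₂ := by
    rw [hc₂def, lt_div_iff₀ hα0]; linarith
  have hαc₂ : α * c₂ = Real.log (2*(b:ℝ)) + 1 := by
    rw [hc₂def]; field_simp
  clear_value c₂
  refine ⟨1/ε, ε/2, c₂, by positivity, by positivity, hc₂pos, 1, ?_⟩
  intro d hd m hm1 hmL t ht heq
  have hd0 : (0:ℝ) < d := by exact_mod_cast hd
  have hm : (m:ℝ) ≤ ε * (d:ℝ) := by
    have hx : (d:ℝ)/(1/ε) = ε * d := by field_simp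
    linarith [hx ▸ hmL]
  clear hmL
  have hmd : m ≤ d := by
    have : (m:ℝ) ≤ (d:ℝ) := by nlinarith
    exact_mod_cast this
  simp only [firstMomentLHS] at heq
  rw [Real.rpow_def_of_pos hρ0, ← hαdef] at heq
  set B : ℝ := (b:ℝ) with hBdef
  clear_value B
  have hB1 : (1:ℝ) < B := by linarith
  have hB0 : (0:ℝ) < B := by linarith
  have hBm1 : (0:ℝ) < B - 1 := by linarith
  set x : ℝ := B * t / ((B - 1) * (d:ℝ)) with hxdef
  set E : ℝ := Real.exp (-(B * t) / ((B - 1) * (d:ℝ))) with hEdef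
  have hEx : E = Real.exp (-x) := by rw [hEdef, hxdef, neg_div]
  clear_value E
  have hx0 : 0 < x := by rw [hxdef]; positivity
  have hE0 : 0 < E := by rw [hEx]; exact Real.exp_pos _
  have hE1 : E < 1 := by
    rw [hEx]
    exact Real.exp_lt_one_iff.mpr (by linarith)
  set A : ℝ := Real.exp (α * t) with hAdef
  have hA0 : 0 < A := by rw [hAdef]; exact Real.exp_pos _
  clear_value A
  have hxrel : (B - 1) * x * (d:ℝ) = B * t := by
    rw [hxdef]; field_simp
  clear_value x
  have hdm : ((d - m : ℕ) : ℝ) = (d:ℝ) - (m:ℝ) := Nat.cast_sub hmd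
  constructor
  · -- lower bound
    by_contra hcon
    push_neg at hcon
    have hxε : x < ε := by
      have h1 : ((B-1) * (d:ℝ)) * x < ((B-1) * (d:ℝ)) * ε := by
        clear * - hxrel hcon hB hBm1 hd0 ht hε0
        nlinarith [hxrel]
      exact lt_of_mul_lt_mul_left h1 (by positivity)
    have hquad : E * (1 + x) ≤ 1 := by
      rw [hEx]
      have h := Real.add_one_le_exp x
      have hp := Real.exp_pos (-x)
      calc Real.exp (-x) * (1+x) ≤ Real.exp (-x) * Real.exp x :=
            mul_le_mul_of_nonneg_left (by linarith) (le_of_lt hp)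
      _ = 1 := by rw [← Real.exp_add]; simp
    have hx1E : x ≤ (1 - E) * (1 + ε) := by
      clear * - hquad hx0 hE0 hE1 hxε hε0
      have hq2 : x ≤ (1 - E) * (1 + x) := by nlinarith [hquad]
      nlinarith [hq2, mul_nonneg (by linarith : (0:ℝ) ≤ 1 - E) (by linarith : (0:ℝ) ≤ ε - x)]
    have hfac : 1 + (B-1)*E ≤ B * Real.exp (-((B-1)*(1-E)/B)) := by
      have h2 : 1 - (B-1)*(1-E)/B ≤ Real.exp (-((B-1)*(1-E)/B)) := by
        have := Real.add_one_le_exp (-((B-1)*(1-E)/B))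
        linarith
      have h3 : 1 + (B-1)*E = B * (1 - (B-1)*(1-E)/B) := by
        field_simp; ring
      rw [h3]
      exact mul_le_mul_of_nonneg_left h2 (le_of_lt hB0)
    have hfacpow : (1 + (B-1)*E)^(d-m) ≤
        B^(d-m) * Real.exp (((d-m:ℕ):ℝ) * -((B-1)*(1-E)/B)) := by
      calc (1 + (B-1)*E)^(d-m) ≤ (B * Real.exp (-((B-1)*(1-E)/B)))^(d-m) := by
            apply pow_le_pow_left₀ (by positivity) hfac
        _ = B^(d-m) * Real.exp (((d-m:ℕ):ℝ) * -((B-1)*(1-E)/B)) := by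
            rw [mul_pow, ← Real.exp_nat_mul]
    have h4 : (B^d)⁻¹ * B^(d-m) ≤ 1 := by
      rw [inv_mul_le_iff₀ (by positivity), mul_one]
      exact pow_le_pow_right₀ (by linarith) (Nat.sub_le d m)
    have hkey : (1:ℝ) ≤ Real.exp (α*t + ((d-m:ℕ):ℝ) * -((B-1)*(1-E)/B)) := by
      calc (1:ℝ) = A * (B^d)⁻¹ * (1+(B-1)*E)^(d-m) * (1-E)^m := heq.symm
        _ ≤ A * (B^d)⁻¹ * (B^(d-m) * Real.exp (((d-m:ℕ):ℝ) * -((B-1)*(1-E)/B))) * 1 := by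
            gcongr
            · exact pow_le_one₀ (by linarith) (by linarith)
        _ = (A * Real.exp (((d-m:ℕ):ℝ) * -((B-1)*(1-E)/B))) * ((B^d)⁻¹ * B^(d-m)) := by
            ring
        _ ≤ (A * Real.exp (((d-m:ℕ):ℝ) * -((B-1)*(1-E)/B))) * 1 :=
            mul_le_mul_of_nonneg_left h4 (by positivity)
        _ = Real.exp (α*t + ((d-m:ℕ):ℝ) * -((B-1)*(1-E)/B)) := by
            rw [mul_one, hAdef, ← Real.exp_add]
    have hstep1 : t / ((1+ε)*(d:ℝ)) ≤ (B-1)*(1-E)/B := by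
      rw [div_le_div_iff₀ (by positivity) hB0]
      clear * - hx1E hxrel hBm1 hd0 hε0 ht hE1
      nlinarith [mul_le_mul_of_nonneg_left hx1E (le_of_lt (mul_pos hBm1 hd0))]
    have hstep2 : (1-ε)*(d:ℝ) ≤ ((d-m:ℕ):ℝ) := by
      rw [hdm]
      clear * - hm
      linarith
    have hstep3 : (1-ε)*(d:ℝ) * (t/((1+ε)*(d:ℝ))) ≤ ((d-m:ℕ):ℝ) * ((B-1)*(1-E)/B) := by
      apply mul_le_mul hstep2 hstep1 (by positivity) (by positivity)
    have hval : (1-ε)*(d:ℝ) * (t/((1+ε)*(d:ℝ))) = (1-ε)/(1+ε)*t := by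
      field_simp
    have hαlt : α*t < (1-ε)/(1+ε)*t := by
      apply mul_lt_mul_of_pos_right _ ht
      rw [lt_div_iff₀ (by linarith)]
      linarith
    have hexpneg : α*t + ((d-m:ℕ):ℝ) * -((B-1)*(1-E)/B) < 0 := by
      have h9 := hval ▸ hstep3
      clear * - h9 hαlt
      nlinarith
    have := Real.exp_lt_one_iff.mpr hexpneg
    linarith
  · -- upper bound
    by_contra hcon
    push_neg at hcon
    have hx1 : 1 < x := by
      have h1 : 1 * ((B-1) * (d:ℝ)) < (B-1) * x * (d:ℝ) := by
        rw [hxrel]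
        clear * - hcon hc₂1 hB0 hBm1 hd0 hc₂pos
        nlinarith [mul_lt_mul_of_pos_left hcon hB0, mul_pos hB0 hd0]
      clear * - h1 hBm1 hd0
      have h2 : ((B-1) * (d:ℝ)) * 1 < ((B-1) * (d:ℝ)) * x := by nlinarith
      exact lt_of_mul_lt_mul_left h2 (by positivity)
    have hEhalf : E ≤ 1/2 := by
      rw [hEx]
      have h2e : (2:ℝ) ≤ Real.exp 1 := by
        have := Real.add_one_le_exp 1; linarith
      calc Real.exp (-x) ≤ Real.exp (-1) := Real.exp_le_exp.mpr (by linarith)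
        _ = (Real.exp 1)⁻¹ := by rw [Real.exp_neg]
        _ ≤ 1/2 := by
            rw [one_div]
            exact inv_anti₀ (by norm_num) h2e
    have hhalf : (1/2:ℝ)^d ≤ (1-E)^m := by
      calc (1/2:ℝ)^d ≤ (1/2:ℝ)^m := pow_le_pow_of_le_one (by norm_num) (by norm_num) hmd
        _ ≤ (1-E)^m := pow_le_pow_left₀ (by norm_num) (by linarith) m
    have hone : (1:ℝ) ≤ (1+(B-1)*E)^(d-m) := by
      calc (1:ℝ) = 1^(d-m) := (one_pow _).symm
        _ ≤ (1+(B-1)*E)^(d-m) := pow_le_pow_left₀ zero_le_one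
              (by clear * - hBm1 hE0; nlinarith [mul_pos hBm1 hE0]) _
    have hge : A * (B^d)⁻¹ * (1/2:ℝ)^d ≤ 1 := by
      calc A * (B^d)⁻¹ * (1/2:ℝ)^d = A * (B^d)⁻¹ * 1 * (1/2:ℝ)^d := by ring
        _ ≤ A * (B^d)⁻¹ * (1+(B-1)*E)^(d-m) * (1-E)^m := by
            gcongr
        _ = 1 := heq
    have h2Bpow : Real.exp ((d:ℝ) * Real.log (2*B)) = (2*B)^d := by
      rw [Real.exp_nat_mul, Real.exp_log (by linarith)]
    have hid : A * (B^d)⁻¹ * (1/2:ℝ)^d = Real.exp (α*t - (d:ℝ) * Real.log (2*B)) := by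
      rw [hAdef, Real.exp_sub, h2Bpow, mul_pow, div_pow, one_pow]
      field_simp
    have hpos : 0 < α*t - (d:ℝ) * Real.log (2*B) := by
      have h7 : α * (c₂ * (d:ℝ)) < α * t := mul_lt_mul_of_pos_left hcon hα0
      have h8 : α * (c₂ * (d:ℝ)) = (Real.log (2*B) + 1) * (d:ℝ) := by
        rw [← hαc₂]; ring
      clear * - h7 h8 hd0
      nlinarith
    have hgt : (1:ℝ) < Real.exp (α*t - (d:ℝ) * Real.log (2*B)) := by
      calc (1:ℝ) = Real.exp 0 := Real.exp_zero.symm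
        _ < _ := Real.exp_lt_exp.mpr hpos
    rw [hid] at hge
    linarith
end

section
/- Let b ≥ 2 be an integer and ρ ∈ (1, e). There exist constants L₁ > 0, C > 0 and D ∈ ℕ such that for all d ≥ D and all m with 1 ≤ m and m+1 ≤ d/L₁, writing t_{d,m} and t_{d,m+1} for the unique positive solutions of the first-moment equation with parameters m and m+1 respectively, one has 0 < t_{d,m+1} − t_{d,m} ≤ C. -/
set_option maxHeartbeats 1000000 in
/-- Let `b ≥ 2` be an integer and `ρ ∈ (1, e)`. There are constants `L₁ > 0`, `C > 0` and
`D ∈ ℕ` such that for all `d ≥ D` and all `m` with `1 ≤ m` and `m + 1 ≤ d/L₁`, the unique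
positive solutions `t = t_{d,m}` and `t' = t_{d,m+1}` of the first-moment equation with
parameters `m` and `m+1` satisfy `0 < t' − t ≤ C`. -/
theorem firstMoment_solution_increments (b : ℕ) (hb : 2 ≤ b) (ρ : ℝ)
    (hρ₁ : 1 < ρ) (hρe : ρ < Real.exp 1) :
    ∃ L₁ C : ℝ, 0 < L₁ ∧ 0 < C ∧ ∃ D : ℕ,
      ∀ d ≥ D, ∀ m : ℕ, 1 ≤ m → ((m : ℝ) + 1) ≤ (d : ℝ) / L₁ →
        ∀ t t' : ℝ, 0 < t → firstMomentLHS b d m ρ t = 1 →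
          0 < t' → firstMomentLHS b d (m + 1) ρ t' = 1 →
            0 < t' - t ∧ t' - t ≤ C := by
  have hρ0 : (0:ℝ) < ρ := lt_trans zero_lt_one hρ₁
  obtain ⟨B, hBdef⟩ : ∃ y : ℝ, y = (b:ℝ) := ⟨_, rfl⟩
  have hB2 : (2:ℝ) ≤ B := by rw [hBdef]; exact_mod_cast hb
  have hB1 : (1:ℝ) < B := by linarith
  have hB0 : (0:ℝ) < B := by linarith
  obtain ⟨β, hβdef⟩ : ∃ y : ℝ, y = B - 1 := ⟨_, rfl⟩
  have hβ0 : (0:ℝ) < β := by rw [hβdef]; linarith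
  have hβB : 1 + β = B := by rw [hβdef]; ring
  obtain ⟨c, hcdef⟩ : ∃ y : ℝ, y = B / β := ⟨_, rfl⟩
  have hc0 : (0:ℝ) < c := by rw [hcdef]; exact div_pos hB0 hβ0
  have hβc : β * c = B := by rw [hcdef]; field_simp
  obtain ⟨L, hLdef⟩ : ∃ y : ℝ, y = Real.log ρ := ⟨_, rfl⟩
  have hL0 : (0:ℝ) < L := by rw [hLdef]; exact Real.log_pos hρ₁
  have hL1 : L < 1 := by
    rw [hLdef]
    have h := Real.log_lt_log hρ0 hρe
    rwa [Real.log_exp] at h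
  -- basic facts about X(θ) = exp(-(c θ))
  have hX1 : ∀ θ : ℝ, 0 < θ → Real.exp (-(c*θ)) < 1 := by
    intro θ hθ
    have h := Real.exp_lt_exp.2 (neg_lt_zero.mpr (mul_pos hc0 hθ))
    simpa using h
  have hdenpos : ∀ θ : ℝ, (0:ℝ) < 1 + β * Real.exp (-(c*θ)) := by
    intro θ
    have h := mul_pos hβ0 (Real.exp_pos (-(c*θ)))
    linarith only [h]
  -- monotonicity of φ(x) = B x / (1 + β x)
  have hphi : ∀ x y : ℝ, 0 ≤ x → x < y → B*x/(1+β*x) < B*y/(1+β*y) := by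
    intro x y hx hxy
    have h1 : (0:ℝ) < 1 + β*x := by
      have := mul_nonneg hβ0.le hx
      linarith only [this]
    have h2 : (0:ℝ) < 1 + β*y := by
      have := mul_nonneg hβ0.le (hx.trans hxy.le)
      linarith only [this]
    rw [div_lt_div_iff₀ h1 h2]
    nlinarith only [mul_lt_mul_of_pos_left hxy hB0, hβ0, hx, hxy, hB0]
  have hphile : ∀ x y : ℝ, 0 ≤ x → x ≤ y → B*x/(1+β*x) ≤ B*y/(1+β*y) := by
    intro x y hx hxy
    rcases eq_or_lt_of_le hxy with h | h
    · rw [h]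
    · exact le_of_lt (hphi x y hx h)
  -- the critical point
  have hden : (0:ℝ) < B - β*L := by
    have h := mul_lt_mul_of_pos_left hL1 hβ0
    linarith only [h, hβdef]
  obtain ⟨xh, hxhdef⟩ : ∃ y : ℝ, y = L / (B - β*L) := ⟨_, rfl⟩
  have hxh0 : (0:ℝ) < xh := by rw [hxhdef]; exact div_pos hL0 hden
  have hxh1 : xh < 1 := by
    rw [hxhdef, div_lt_one hden]
    have h := mul_lt_mul_of_pos_left hL1 hβ0
    linarith only [h, hβdef, hL1]
  have hphixh : B * xh / (1 + β * xh) = L := by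
    rw [hxhdef]; field_simp
    have hne : B - L*β ≠ 0 := by linarith
    have hBne : B ≠ 0 := hB0.ne'
    field_simp
    rw [sub_add_cancel]; field_simp
  obtain ⟨th, hthdef⟩ : ∃ y : ℝ, y = -(Real.log xh) / c := ⟨_, rfl⟩
  have hlogxh : Real.log xh < 0 := Real.log_neg hxh0 hxh1
  have hth0 : (0:ℝ) < th := by
    rw [hthdef]; exact div_pos (by linarith) hc0
  have hXth : Real.exp (-(c*th)) = xh := by
    rw [hthdef, show -(c * (-(Real.log xh)/c)) = Real.log xh from by field_simp]
    exact Real.exp_log hxh0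
  -- the functions
  obtain ⟨p, hpdef⟩ : ∃ y : ℝ → ℝ, y = fun θ => Real.log (1 + β*Real.exp (-(c*θ))) := ⟨_, rfl⟩
  obtain ⟨q, hqdef⟩ : ∃ y : ℝ → ℝ, y = fun θ => Real.log (1 - Real.exp (-(c*θ))) := ⟨_, rfl⟩
  obtain ⟨g, hgdef⟩ : ∃ y : ℝ → ℝ, y = fun θ => θ*L - Real.log B + p θ := ⟨_, rfl⟩
  obtain ⟨gd, hgddef⟩ : ∃ y : ℝ → ℝ, y = fun θ => L - B*Real.exp (-(c*θ))/(1+β*Real.exp (-(c*θ))) := ⟨_, rfl⟩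
  obtain ⟨Γ, hΓdef⟩ : ∃ y : ℝ → ℝ, y = fun θ => p θ - q θ := ⟨_, rfl⟩
  obtain ⟨Γd, hΓddef⟩ : ∃ y : ℝ → ℝ, y = fun θ =>
    -(B*Real.exp (-(c*θ)))/(1+β*Real.exp (-(c*θ))) - c*Real.exp (-(c*θ))/(1-Real.exp (-(c*θ))) := ⟨_, rfl⟩
  -- derivatives
  have hlin : ∀ θ : ℝ, HasDerivAt (fun θ : ℝ => -(c*θ)) (-c) θ := by
    intro θ; simpa using ((hasDerivAt_id θ).const_mul c).fun_neg
  have hp' : ∀ θ : ℝ, HasDerivAt p (-(B*Real.exp (-(c*θ)))/(1+β*Real.exp (-(c*θ)))) θ := by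
    intro θ
    have h2 := (hlin θ).exp
    have h3 := ((h2.const_mul β).const_add 1).log (ne_of_gt (hdenpos θ))
    rw [hpdef]
    convert h3 using 1
    rw [show β * (Real.exp (-(c*θ)) * -c) = -(B*Real.exp (-(c*θ))) from by rw [← hβc]; ring]
  have hq' : ∀ θ : ℝ, 0 < θ → HasDerivAt q (c*Real.exp (-(c*θ))/(1-Real.exp (-(c*θ)))) θ := by
    intro θ hθ
    have h2 := (hlin θ).exp
    have h3 := h2.const_sub 1
    have h4 := h3.log (ne_of_gt (show (0:ℝ) < 1 - Real.exp (-(c*θ)) by linarith [hX1 θ hθ]))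
    rw [hqdef]
    convert h4 using 1
    ring
  have hg' : ∀ θ : ℝ, HasDerivAt g (gd θ) θ := by
    intro θ
    have h4 : HasDerivAt (fun θ : ℝ => θ*L - Real.log B) L θ := by
      simpa using ((hasDerivAt_id θ).mul_const L).sub_const (Real.log B)
    have h5 := h4.fun_add (hp' θ)
    rw [hgdef, hgddef]
    refine h5.congr_deriv ?_
    rw [neg_div]
    ring
  have hΓ' : ∀ θ : ℝ, 0 < θ → HasDerivAt Γ (Γd θ) θ := by
    intro θ hθ
    have := (hp' θ).sub (hq' θ hθ)
    rw [hΓdef, hΓddef]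
    exact this
  have hgcont : Continuous g := by
    have : Differentiable ℝ g := fun θ => (hg' θ).differentiableAt
    exact this.continuous
  -- sign facts for gd
  have hgd_neg : ∀ θ : ℝ, θ < th → gd θ < 0 := by
    intro θ hθ
    have hX : xh < Real.exp (-(c*θ)) := by
      rw [← hXth]
      exact Real.exp_lt_exp.2 (neg_lt_neg (mul_lt_mul_of_pos_left hθ hc0))
    have h := hphi xh _ (le_of_lt hxh0) hX
    rw [hphixh] at h
    simp only [hgddef]
    linarith
  have hgd_pos : ∀ θ : ℝ, th < θ → 0 < gd θ := by
    intro θ hθ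
    have hX : Real.exp (-(c*θ)) < xh := by
      rw [← hXth]
      exact Real.exp_lt_exp.2 (neg_lt_neg (mul_lt_mul_of_pos_left hθ hc0))
    have h := hphi _ xh (le_of_lt (Real.exp_pos _)) hX
    rw [hphixh] at h
    simp only [hgddef]
    linarith
  have hgd_mono : ∀ a θ : ℝ, a ≤ θ → gd a ≤ gd θ := by
    intro a θ hθ
    have hX : Real.exp (-(c*θ)) ≤ Real.exp (-(c*a)) :=
      Real.exp_le_exp.2 (neg_le_neg (mul_le_mul_of_nonneg_left hθ hc0.le))
    have h := hphile _ _ (le_of_lt (Real.exp_pos _)) hX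
    simp only [hgddef]
    linarith
  have hgdL : ∀ θ : ℝ, gd θ ≤ L := by
    intro θ
    have h : 0 ≤ B*Real.exp (-(c*θ))/(1+β*Real.exp (-(c*θ))) :=
      div_nonneg (mul_nonneg hB0.le (Real.exp_pos _).le) (hdenpos θ).le
    simp only [hgddef]
    linarith
  -- g 0 = 0, g th < 0
  have hg0 : g 0 = 0 := by
    simp only [hgdef, hpdef]
    rw [show -(c*(0:ℝ)) = 0 from by ring, Real.exp_zero, mul_one, hβB]
    ring
  have hganti : StrictAntiOn g (Set.Icc 0 th) := by
    apply strictAntiOn_of_deriv_neg (convex_Icc _ _) hgcont.continuousOn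
    intro x hx
    rw [interior_Icc] at hx
    rw [(hg' x).deriv]
    exact hgd_neg x hx.2
  have hgth : g th < 0 := by
    have h := hganti (Set.mem_Icc.2 ⟨le_refl 0, hth0.le⟩)
      (Set.mem_Icc.2 ⟨hth0.le, le_refl th⟩) hth0
    rwa [hg0] at h
  -- choice of θ₂
  obtain ⟨θ₂, hθ₂def⟩ : ∃ y : ℝ, y = th + (-(g th))/2 := ⟨_, rfl⟩
  have hθ₂gt : th < θ₂ := by rw [hθ₂def]; linarith
  have hθ₂0 : (0:ℝ) < θ₂ := lt_trans hth0 hθ₂gt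
  have hanti2 : AntitoneOn (fun θ => g θ - θ) (Set.Icc th θ₂) := by
    apply antitoneOn_of_deriv_nonpos (convex_Icc _ _)
    · exact (hgcont.sub continuous_id).continuousOn
    · intro x hx
      exact ((hg' x).sub (hasDerivAt_id' (x := x))).differentiableAt.differentiableWithinAt
    · intro x hx
      rw [((hg' x).fun_sub (hasDerivAt_id' (x := x))).deriv]
      have := hgdL x
      linarith
  have hgθ₂ : g θ₂ < 0 := by
    have h := hanti2 (Set.mem_Icc.2 ⟨le_refl th, hθ₂gt.le⟩)
      (Set.mem_Icc.2 ⟨hθ₂gt.le, le_refl θ₂⟩) hθ₂gt.le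
    simp only at h
    have hv : θ₂ - th = (-(g th))/2 := by rw [hθ₂def]; ring
    linarith
  obtain ⟨κ, hκdef⟩ : ∃ y : ℝ, y = gd θ₂ := ⟨_, rfl⟩
  have hκ : (0:ℝ) < κ := by rw [hκdef]; exact hgd_pos θ₂ hθ₂gt
  obtain ⟨X₂, hX₂def⟩ : ∃ y : ℝ, y = Real.exp (-(c*θ₂)) := ⟨_, rfl⟩
  have hX₂0 : (0:ℝ) < X₂ := by rw [hX₂def]; exact Real.exp_pos _
  have hX₂1 : X₂ < 1 := by rw [hX₂def]; exact hX1 θ₂ hθ₂0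
  obtain ⟨G₂, hG₂def⟩ : ∃ y : ℝ, y = Real.log B - Real.log (1 - X₂) := ⟨_, rfl⟩
  have hG₂ : (0:ℝ) < G₂ := by
    have h1 : (0:ℝ) < Real.log B := Real.log_pos hB1
    have h2 : Real.log (1 - X₂) < 0 := Real.log_neg (by linarith) (by linarith)
    rw [hG₂def]; linarith
  -- g ≤ 0 on (0, θ₂]
  have hgmono2 : MonotoneOn g (Set.Icc th θ₂) := by
    apply monotoneOn_of_deriv_nonneg (convex_Icc _ _) hgcont.continuousOn
    · intro x hx
      exact (hg' x).differentiableAt.differentiableWithinAt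
    · intro x hx
      rw [interior_Icc] at hx
      rw [(hg' x).deriv]
      exact (hgd_pos x hx.1).le
  have hgle : ∀ θ : ℝ, 0 < θ → θ ≤ θ₂ → g θ ≤ 0 := by
    intro θ h0 h2
    rcases le_or_gt θ th with h | h
    · have hlt := hganti (Set.mem_Icc.2 ⟨le_refl 0, hth0.le⟩)
        (Set.mem_Icc.2 ⟨h0.le, h⟩) h0
      rw [hg0] at hlt
      linarith
    · have hle := hgmono2 (Set.mem_Icc.2 ⟨h.le, h2⟩)
        (Set.mem_Icc.2 ⟨hθ₂gt.le, le_refl θ₂⟩) h2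
      linarith
  -- Γ facts
  have hΓpos : ∀ θ : ℝ, 0 < θ → 0 < Γ θ := by
    intro θ hθ
    have hX0 := Real.exp_pos (-(c*θ))
    have hX := hX1 θ hθ
    have h1 : 0 < p θ := by
      simp only [hpdef]
      refine Real.log_pos ?_
      have h := mul_pos hβ0 hX0
      linarith only [h]
    have h2 : q θ < 0 := by
      simp only [hqdef]; exact Real.log_neg (by linarith) (by linarith)
    simp only [hΓdef]; linarith
  have hΓd_nonpos : ∀ θ : ℝ, 0 < θ → Γd θ ≤ 0 := by
    intro θ hθ
    have hX0 := Real.exp_pos (-(c*θ))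
    have hX := hX1 θ hθ
    have hden' := hdenpos θ
    have h1 : 0 ≤ B*Real.exp (-(c*θ))/(1+β*Real.exp (-(c*θ))) :=
      div_nonneg (mul_nonneg hB0.le hX0.le) hden'.le
    have h2 : 0 ≤ c*Real.exp (-(c*θ))/(1-Real.exp (-(c*θ))) :=
      div_nonneg (mul_nonneg hc0.le hX0.le) (by linarith)
    simp only [hΓddef]
    rw [neg_div]
    linarith
  have hΓle : ∀ θ : ℝ, θ₂ ≤ θ → Γ θ ≤ G₂ := by
    intro θ hθ
    have hθ0 : 0 < θ := lt_of_lt_of_le hθ₂0 hθ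
    have hX := hX1 θ hθ0
    have hX0 := Real.exp_pos (-(c*θ))
    have hXle : Real.exp (-(c*θ)) ≤ X₂ := by
      rw [hX₂def]
      exact Real.exp_le_exp.2 (neg_le_neg (mul_le_mul_of_nonneg_left hθ hc0.le))
    have hple : p θ ≤ Real.log B := by
      simp only [hpdef]
      have h : 1 + β*Real.exp (-(c*θ)) ≤ B := by
        have h2 := mul_le_mul_of_nonneg_left hX.le hβ0.le
        linarith only [h2, hβdef]
      exact Real.log_le_log (hdenpos θ) h
    have hqge : Real.log (1 - X₂) ≤ q θ := by
      simp only [hqdef]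
      exact Real.log_le_log (by linarith) (by linarith)
    simp only [hΓdef, hG₂def]
    linarith
  -- provide the constants
  refine ⟨1, G₂/κ, one_pos, div_pos hG₂ hκ, 0, ?_⟩
  intro d _hd m hm1 hmd t t' ht hFt ht' hFt'
  rw [div_one] at hmd
  have hmd' : m + 1 ≤ d := by exact_mod_cast hmd
  have hdpos : 0 < d := by omega
  have hd0 : (0:ℝ) < (d:ℝ) := by exact_mod_cast hdpos
  obtain ⟨Ψ, hΨdef⟩ : ∃ y : ℕ → ℝ → ℝ, y = fun (k : ℕ) (s : ℝ) => (d:ℝ) * g (s/(d:ℝ)) - (k:ℝ) * Γ (s/(d:ℝ)) := ⟨_, rfl⟩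
  -- log identity
  have hlog : ∀ k : ℕ, k ≤ d → ∀ s : ℝ, 0 < s → firstMomentLHS b d k ρ s = 1 → Ψ k s = 0 := by
    intro k hk s hs hEq
    simp only [firstMomentLHS] at hEq
    rw [← hBdef] at hEq
    rw [← hβdef] at hEq
    obtain ⟨A, hAdef⟩ : ∃ y : ℝ, y = Real.exp (-(B*s)/(β*(d:ℝ))) := ⟨_, rfl⟩
    rw [← hAdef] at hEq
    have hA0 : (0:ℝ) < A := by rw [hAdef]; exact Real.exp_pos _
    have hA1 : A < 1 := by
      rw [hAdef]
      have hneg : -(B*s)/(β*(d:ℝ)) < 0 :=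
        div_neg_of_neg_of_pos (neg_lt_zero.mpr (mul_pos hB0 hs)) (mul_pos hβ0 hd0)
      have h := Real.exp_lt_exp.2 hneg
      simpa using h
    have hEA : Real.exp (-(c*(s/(d:ℝ)))) = A := by
      rw [hAdef]; congr 1; rw [hcdef]; field_simp
    have h1 : (0:ℝ) < 1 + β*A := by
      have := mul_pos hβ0 hA0
      linarith only [this]
    have h2 : (0:ℝ) < 1 - A := by linarith
    have hx : (0:ℝ) < ρ ^ s := Real.rpow_pos_of_pos hρ0 s
    have hBd : (0:ℝ) < B ^ d := pow_pos hB0 d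
    have hlg := congrArg Real.log hEq
    rw [Real.log_one,
        Real.log_mul (mul_ne_zero (mul_ne_zero hx.ne' (inv_ne_zero hBd.ne'))
          (pow_ne_zero _ h1.ne')) (pow_ne_zero _ h2.ne'),
        Real.log_mul (mul_ne_zero hx.ne' (inv_ne_zero hBd.ne')) (pow_ne_zero _ h1.ne'),
        Real.log_mul hx.ne' (inv_ne_zero hBd.ne'), Real.log_rpow hρ0, Real.log_inv,
        Real.log_pow, Real.log_pow, Real.log_pow, Nat.cast_sub hk, ← hLdef] at hlg
    have hfrac : (d:ℝ) * ((s/(d:ℝ))*L) = s*L := by field_simp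
    simp only [hΨdef, hgdef, hpdef, hΓdef, hqdef, hEA]
    linear_combination hlg + hfrac
  -- derivative of Ψ
  have hΨderiv : ∀ (k : ℕ) (s : ℝ), 0 < s →
      HasDerivAt (Ψ k)
        ((d:ℝ) * (gd (s/(d:ℝ)) * (1/(d:ℝ))) - (k:ℝ) * (Γd (s/(d:ℝ)) * (1/(d:ℝ)))) s := by
    intro k s hs
    have hinner : HasDerivAt (fun u : ℝ => u/(d:ℝ)) (1/(d:ℝ)) s := by
      simpa using (hasDerivAt_id' (x := s)).div_const (d:ℝ)
    have h1 := ((hg' (s/(d:ℝ))).comp s hinner).const_mul (d:ℝ)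
    have h2 := ((hΓ' (s/(d:ℝ)) (div_pos hs hd0)).comp s hinner).const_mul (k:ℝ)
    have h := h1.sub h2
    rw [hΨdef]
    exact h
  -- location of solutions
  have hloc : ∀ k : ℕ, 1 ≤ k → ∀ s : ℝ, 0 < s → Ψ k s = 0 → (d:ℝ)*θ₂ < s := by
    intro k hk s hs hΨ
    by_contra hcon
    push_neg at hcon
    have hsd : s/(d:ℝ) ≤ θ₂ := (div_le_iff₀ hd0).2 (by linarith)
    have hsd0 : 0 < s/(d:ℝ) := div_pos hs hd0
    have hgneg := hgle _ hsd0 hsd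
    have hΓp := hΓpos _ hsd0
    have hk1 : (1:ℝ) ≤ (k:ℝ) := by exact_mod_cast hk
    have h1 : (d:ℝ) * g (s/(d:ℝ)) ≤ 0 := mul_nonpos_iff.2 (Or.inl ⟨hd0.le, hgneg⟩)
    have h2 : Γ (s/(d:ℝ)) ≤ (k:ℝ) * Γ (s/(d:ℝ)) := le_mul_of_one_le_left hΓp.le hk1
    simp only [hΨdef] at hΨ
    linarith
  -- monotonicity of s ↦ Ψ k s - κ s on [d θ₂, ∞)
  have hH : ∀ k : ℕ, MonotoneOn (fun s => Ψ k s - κ * s) (Set.Ici ((d:ℝ)*θ₂)) := by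
    intro k
    have hposIci : ∀ s : ℝ, (d:ℝ)*θ₂ ≤ s → 0 < s :=
      fun s hs => lt_of_lt_of_le (mul_pos hd0 hθ₂0) hs
    apply monotoneOn_of_deriv_nonneg (convex_Ici _)
    · intro s hs
      exact (((hΨderiv k s (hposIci s hs)).sub
        ((hasDerivAt_id' (x := s)).const_mul κ)).differentiableAt.continuousAt).continuousWithinAt
    · intro s hs
      rw [interior_Ici] at hs
      exact ((hΨderiv k s (hposIci s hs.le)).sub
        ((hasDerivAt_id' (x := s)).const_mul κ)).differentiableAt.differentiableWithinAt
    · intro s hs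
      rw [interior_Ici] at hs
      have hs0 : 0 < s := hposIci s hs.le
      rw [((hΨderiv k s hs0).fun_sub ((hasDerivAt_id' (x := s)).const_mul κ)).deriv]
      have e1 : (d:ℝ) * (gd (s/(d:ℝ)) * (1/(d:ℝ))) = gd (s/(d:ℝ)) := by field_simp
      have e2 : κ ≤ gd (s/(d:ℝ)) := by
        rw [hκdef]
        have hs' : (d:ℝ)*θ₂ < s := hs
        exact hgd_mono θ₂ _ ((le_div_iff₀ hd0).2 (by linarith [hs']))
      have e3 : Γd (s/(d:ℝ)) ≤ 0 := hΓd_nonpos _ (div_pos hs0 hd0)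
      have e5 : (k:ℝ) * (Γd (s/(d:ℝ)) * (1/(d:ℝ))) ≤ 0 :=
        mul_nonpos_iff.2 (Or.inl ⟨(Nat.cast_nonneg k),
          mul_nonpos_iff.2 (Or.inr ⟨e3, by positivity⟩)⟩)
      rw [e1]
      linarith
  -- assemble
  have hΨt : Ψ m t = 0 := hlog m (by omega) t ht hFt
  have hΨt' : Ψ (m+1) t' = 0 := hlog (m+1) hmd' t' ht' hFt'
  have htloc := hloc m hm1 t ht hΨt
  have ht'loc := hloc (m+1) (by omega) t' ht' hΨt'
  have hΨ1t : Ψ (m+1) t = - Γ (t/(d:ℝ)) := by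
    have hstep : Ψ (m+1) t = Ψ m t - Γ (t/(d:ℝ)) := by
      simp only [hΨdef]; push_cast; ring
    rw [hstep, hΨt]; ring
  have hΓt0 : 0 < Γ (t/(d:ℝ)) := hΓpos _ (div_pos ht hd0)
  have hΓtle : Γ (t/(d:ℝ)) ≤ G₂ := hΓle _ ((le_div_iff₀ hd0).2 (by linarith))
  have hlt : t < t' := by
    by_contra hcon
    push_neg at hcon
    have h := hH (m+1) (Set.mem_Ici.2 ht'loc.le) (Set.mem_Ici.2 htloc.le) hcon
    simp only at h
    rw [hΨt', hΨ1t] at h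
    linarith only [h, hΓt0, mul_le_mul_of_nonneg_left hcon hκ.le]
  constructor
  · linarith
  · have h := hH (m+1) (Set.mem_Ici.2 htloc.le) (Set.mem_Ici.2 ht'loc.le) hlt.le
    simp only at h
    rw [hΨt', hΨ1t] at h
    rw [le_div_iff₀ hκ]
    linarith only [h, hΓtle]
end

section
/- Let b ≥ 2 be an integer and let λ₁, λ₂, λ₂' be reals with 0 < λ₁ < λ₂ < λ₂'. Then x₀(b, exp(λ₁/λ₂))/λ₂ < x₀(b, exp(λ₁/λ₂'))/λ₂'. -/
/-- Let `b ≥ 2` be an integer and `0 < λ₁ < λ₂ < λ₂'`. Then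
`x₀(b, exp(λ₁/λ₂))/λ₂ < x₀(b, exp(λ₁/λ₂'))/λ₂'`, where `x₀(b,ρ)` denotes the unique
positive solution of the defining equation (here given via hypotheses). -/
theorem x0_mutation_monotonicity (b : ℕ) (hb : 2 ≤ b)
    (lam₁ lam₂ lam₂' : ℝ) (h₀ : 0 < lam₁) (h₁ : lam₁ < lam₂) (h₂ : lam₂ < lam₂')
    (x₀ x₀' : ℝ) (hx₀ : 0 < x₀) (hx₀' : 0 < x₀')
    (heq : x0Eq b (Real.exp (lam₁ / lam₂)) x₀)
    (heq' : x0Eq b (Real.exp (lam₁ / lam₂')) x₀') :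
    x₀ / lam₂ < x₀' / lam₂' := by
  have hl2 : (0:ℝ) < lam₂ := h₀.trans h₁
  have hl2' : (0:ℝ) < lam₂' := hl2.trans h₂
  set B : ℝ := (b : ℝ) with hB
  have hB2 : (2:ℝ) ≤ B := by rw [hB]; exact_mod_cast hb
  set k : ℝ := B - 1 with hk
  have hkpos : 0 < k := by simp only [hk]; linarith
  set f : ℝ → ℝ := fun x => Real.log (1 + k * Real.exp (-(B * x) / k)) with hf
  have hupos : ∀ x : ℝ, 0 < 1 + k * Real.exp (-(B * x) / k) := fun x => by positivity
  -- derivative of f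
  have hderiv : ∀ x : ℝ, HasDerivAt f
      (-B * Real.exp (-(B * x) / k) / (1 + k * Real.exp (-(B * x) / k))) x := by
    intro x
    have h1 : HasDerivAt (fun x : ℝ => -(B * x) / k) (-B / k) x := by
      simpa using ((hasDerivAt_id x).const_mul B).neg.div_const k
    have h2 := h1.exp
    have h3 := (h2.const_mul k).const_add 1
    have h4 := h3.log (ne_of_gt (hupos x))
    convert h4 using 1
    field_simp
  have hdiff : Differentiable ℝ f := fun x => (hderiv x).differentiableAt
  have hcont : Continuous f := hdiff.continuous
  have hderiv' : ∀ x : ℝ, deriv f x =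
      -B * Real.exp (-(B * x) / k) / (1 + k * Real.exp (-(B * x) / k)) :=
    fun x => (hderiv x).deriv
  -- f' is strictly monotone
  have hmono : StrictMono (deriv f) := by
    intro x y hxy
    rw [hderiv' x, hderiv' y]
    set s := Real.exp (-(B * x) / k) with hs
    set t := Real.exp (-(B * y) / k) with ht
    have hst : t < s := by
      apply Real.exp_lt_exp.2
      have hBxy : B * x < B * y := by
        apply mul_lt_mul_of_pos_left hxy; linarith
      rw [div_lt_div_iff₀ hkpos hkpos]; nlinarith
    have hspos : 0 < s := Real.exp_pos _
    have htpos : 0 < t := Real.exp_pos _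
    rw [div_lt_div_iff₀ (by positivity) (by positivity)]
    nlinarith
  have hconv : StrictConvexOn ℝ Set.univ f :=
    hmono.strictConvexOn_univ_of_deriv hcont
  -- value at 0
  have hf0 : f 0 = Real.log B := by
    simp only [hf]
    rw [mul_zero, neg_zero, zero_div, Real.exp_zero, mul_one]
    norm_num [hk]
  -- the defining equations rewritten
  have hA : f x₀ - Real.log B = -(x₀ * (lam₁ / lam₂)) := by
    have := heq
    unfold x0Eq at this
    rw [Real.log_exp] at this
    simp only [hf, ← hB, ← hk]
    linarith
  have hA' : f x₀' - Real.log B = -(x₀' * (lam₁ / lam₂')) := by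
    have := heq'
    unfold x0Eq at this
    rw [Real.log_exp] at this
    simp only [hf, ← hB, ← hk]
    linarith
  have hrat : lam₁ / lam₂' < lam₁ / lam₂ :=
    div_lt_div_of_pos_left h₀ hl2 h₂
  -- first, x₀ < x₀'
  have hxx : x₀ < x₀' := by
    by_contra hcon
    push_neg at hcon
    rcases eq_or_lt_of_le hcon with hEq | hlt
    · -- x₀' = x₀
      have : -(x₀' * (lam₁ / lam₂')) = -(x₀ * (lam₁ / lam₂)) := by
        rw [← hA, ← hA', hEq]
      rw [hEq] at this
      have : lam₁ / lam₂' = lam₁ / lam₂ := by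
        have h6 : x₀ * (lam₁ / lam₂') = x₀ * (lam₁ / lam₂) := by linarith
        exact mul_left_cancel₀ (ne_of_gt hx₀) h6
      linarith
    · -- x₀' < x₀ : use secant monotonicity from a = 0
      have key := hconv.secant_strict_mono (a := 0) (x := x₀') (y := x₀)
        (Set.mem_univ _) (Set.mem_univ _) (Set.mem_univ _)
        (ne_of_gt hx₀') (ne_of_gt hx₀) hlt
      rw [hf0] at key
      simp only [sub_zero] at key
      rw [hA, hA'] at key
      rw [neg_div, neg_div, neg_lt_neg_iff,
        mul_div_cancel_left₀ _ (ne_of_gt hx₀),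
        mul_div_cancel_left₀ _ (ne_of_gt hx₀')] at key
      linarith
  -- f is strictly decreasing
  have hdec : f x₀' < f x₀ := by
    simp only [hf]
    apply Real.log_lt_log (hupos x₀')
    have : Real.exp (-(B * x₀') / k) < Real.exp (-(B * x₀) / k) := by
      apply Real.exp_lt_exp.2
      have hBxy : B * x₀ < B * x₀' := by
        apply mul_lt_mul_of_pos_left hxx; linarith
      rw [div_lt_div_iff₀ hkpos hkpos]; nlinarith
    nlinarith
  -- conclude
  have hfin : x₀ * (lam₁ / lam₂) < x₀' * (lam₁ / lam₂') := by linarith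
  rw [div_lt_div_iff₀ hl2 hl2']
  have h5 := mul_lt_mul_of_pos_right hfin (mul_pos hl2 hl2')
  have e1 : x₀ * (lam₁ / lam₂) * (lam₂ * lam₂') = lam₁ * (x₀ * lam₂') := by
    field_simp
  have e2 : x₀' * (lam₁ / lam₂') * (lam₂ * lam₂') = lam₁ * (x₀' * lam₂) := by
    field_simp
  rw [e1, e2] at h5
  exact lt_of_mul_lt_mul_left h5 (le_of_lt h₀)
end

section
/- Let b ≥ 2 be an integer and let ρ > e be a real number. For every d ≥ 1 and every m with 1 ≤ m ≤ d there is a unique t > 0 satisfying (ρ/e)^t · (t/((b−1)·d))^m = 1. Moreover, there exists a constant L₁ > 0 (depending only on b and ρ) such that for all d and all m with 1 ≤ m ≤ d/L₁, this unique solution satisfies t ≤ d/100. -/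
open Real

/-- The pre-mixing first-moment equation in the fast-branching regime `ρ > e`:
`(ρ/e)^t · (t/((b−1)·d))^m = 1`. -/
noncomputable def fastEq (b d m : ℕ) (ρ t : ℝ) : Prop :=
  (ρ / Real.exp 1) ^ t * (t / (((b : ℝ) - 1) * d)) ^ m = 1

private lemma fastEq_iff_log (b d m : ℕ) (hb : 2 ≤ b) (hd : 1 ≤ d) (ρ t : ℝ)
    (hρ : Real.exp 1 < ρ) (ht : 0 < t) :
    fastEq b d m ρ t ↔
      t * Real.log (ρ / Real.exp 1) + (m : ℝ) * Real.log (t / (((b : ℝ) - 1) * d)) = 0 := by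
  have hc : (1 : ℝ) < ρ / Real.exp 1 := (one_lt_div (Real.exp_pos 1)).mpr hρ
  have hc0 : (0 : ℝ) < ρ / Real.exp 1 := lt_trans one_pos hc
  have hD : (0 : ℝ) < ((b : ℝ) - 1) * d := by
    have hb' : (2 : ℝ) ≤ (b : ℝ) := by exact_mod_cast hb
    have hd' : (1 : ℝ) ≤ (d : ℝ) := by exact_mod_cast hd
    nlinarith
  have htD : (0 : ℝ) < t / (((b : ℝ) - 1) * d) := div_pos ht hD
  unfold fastEq
  rw [Real.rpow_def_of_pos hc0, ← Real.exp_log htD, ← Real.exp_nat_mul, ← Real.exp_add,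
    Real.exp_eq_one_iff]
  simp only [Real.log_exp]
  constructor <;> intro h <;> linarith

private lemma f_mono (b d m : ℕ) (hb : 2 ≤ b) (hd : 1 ≤ d) (hm : 1 ≤ m) (ρ : ℝ)
    (hρ : Real.exp 1 < ρ) {x y : ℝ} (hx : 0 < x) (hxy : x < y) :
    x * Real.log (ρ / Real.exp 1) + (m : ℝ) * Real.log (x / (((b : ℝ) - 1) * d)) <
      y * Real.log (ρ / Real.exp 1) + (m : ℝ) * Real.log (y / (((b : ℝ) - 1) * d)) := by
  have hc : (1 : ℝ) < ρ / Real.exp 1 := (one_lt_div (Real.exp_pos 1)).mpr hρ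
  have hlc : 0 < Real.log (ρ / Real.exp 1) := Real.log_pos hc
  have hD : (0 : ℝ) < ((b : ℝ) - 1) * d := by
    have hb' : (2 : ℝ) ≤ (b : ℝ) := by exact_mod_cast hb
    have hd' : (1 : ℝ) ≤ (d : ℝ) := by exact_mod_cast hd
    nlinarith
  have h1 : x * Real.log (ρ / Real.exp 1) < y * Real.log (ρ / Real.exp 1) :=
    mul_lt_mul_of_pos_right hxy hlc
  have h2 : Real.log (x / (((b : ℝ) - 1) * d)) ≤ Real.log (y / (((b : ℝ) - 1) * d)) :=
    Real.log_le_log (div_pos hx hD) (by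
      exact div_le_div_of_nonneg_right hxy.le hD.le)
  have hm' : (0 : ℝ) ≤ (m : ℝ) := Nat.cast_nonneg m
  nlinarith

/-- Let `b ≥ 2` be an integer and `ρ > e`. For every `d ≥ 1` and `1 ≤ m ≤ d` there is a
unique `t > 0` with `(ρ/e)^t · (t/((b−1)·d))^m = 1`; moreover there is a constant `L₁ > 0`
(depending only on `b` and `ρ`) such that for all `d` and all `m` with `1 ≤ m ≤ d/L₁`, the
unique solution satisfies `t ≤ d/100`. -/
theorem fastEq_unique_solution_and_bound (b : ℕ) (hb : 2 ≤ b) (ρ : ℝ)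
    (hρ : Real.exp 1 < ρ) :
    (∀ d m : ℕ, 1 ≤ d → 1 ≤ m → m ≤ d → ∃! t : ℝ, 0 < t ∧ fastEq b d m ρ t) ∧
    ∃ L₁ : ℝ, 0 < L₁ ∧
      ∀ d m : ℕ, 1 ≤ m → (m : ℝ) ≤ (d : ℝ) / L₁ →
        ∀ t : ℝ, 0 < t → fastEq b d m ρ t → t ≤ (d : ℝ) / 100 := by
  have hc : (1 : ℝ) < ρ / Real.exp 1 := (one_lt_div (Real.exp_pos 1)).mpr hρ
  have hlc : 0 < Real.log (ρ / Real.exp 1) := Real.log_pos hc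
  set c := Real.log (ρ / Real.exp 1) with hcdef
  have hb' : (2 : ℝ) ≤ (b : ℝ) := by exact_mod_cast hb
  constructor
  · intro d m hd hm hmd
    have hd' : (1 : ℝ) ≤ (d : ℝ) := by exact_mod_cast hd
    set D : ℝ := ((b : ℝ) - 1) * d with hDdef
    have hD : (0 : ℝ) < D := by nlinarith
    set f : ℝ → ℝ := fun t => t * c + (m : ℝ) * Real.log (t / D) with hfdef
    -- small point
    set t₀ : ℝ := D * Real.exp (-(D * c) / m) with ht₀def
    have hm' : (0 : ℝ) < (m : ℝ) := by exact_mod_cast hm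
    have ht₀pos : 0 < t₀ := mul_pos hD (Real.exp_pos _)
    have ht₀le : t₀ ≤ D := by
      have : Real.exp (-(D * c) / m) ≤ 1 := by
        rw [Real.exp_le_one_iff]
        have hDc : 0 < D * c := mul_pos hD hlc
        exact div_nonpos_of_nonpos_of_nonneg (by linarith) hm'.le
      nlinarith [this, hD]
    have hft₀ : f t₀ ≤ 0 := by
      have hlog : Real.log (t₀ / D) = -(D * c) / m := by
        rw [ht₀def, mul_comm, mul_div_assoc, div_self hD.ne', mul_one, Real.log_exp]
      simp only [hfdef, hlog]
      have : (m : ℝ) * (-(D * c) / m) = -(D * c) := by field_simp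
      rw [this]
      nlinarith [mul_le_mul_of_nonneg_right ht₀le hlc.le]
    have hfD : 0 < f D := by
      simp only [hfdef, div_self hD.ne', Real.log_one, mul_zero, add_zero]
      exact mul_pos hD hlc
    have hcont : ContinuousOn f (Set.Icc t₀ D) := by
      apply ContinuousOn.add
      · exact (continuous_id.mul continuous_const).continuousOn
      · apply ContinuousOn.mul continuousOn_const
        apply ContinuousOn.log
        · exact (continuous_id.div_const D).continuousOn
        · intro x hx
          have : 0 < x := lt_of_lt_of_le ht₀pos hx.1
          positivity
    have := intermediate_value_Icc ht₀le hcont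
    have h0mem : (0 : ℝ) ∈ Set.Icc (f t₀) (f D) := ⟨hft₀, hfD.le⟩
    obtain ⟨t, htmem, htf⟩ := this h0mem
    have htpos : 0 < t := lt_of_lt_of_le ht₀pos htmem.1
    refine ⟨t, ⟨htpos, ?_⟩, ?_⟩
    · rw [fastEq_iff_log b d m hb hd ρ t hρ htpos]; exact htf
    · rintro s ⟨hspos, hsfe⟩
      rw [fastEq_iff_log b d m hb hd ρ s hρ hspos] at hsfe
      by_contra hne
      rcases lt_or_gt_of_ne hne with h | h
      · have := f_mono b d m hb hd hm ρ hρ hspos h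
        simp only [hfdef] at htf
        rw [hsfe, htf] at this; exact lt_irrefl _ this
      · have := f_mono b d m hb hd hm ρ hρ htpos h
        simp only [hfdef] at htf
        rw [hsfe, htf] at this; exact lt_irrefl _ this
  · set K : ℝ := 100 * ((b : ℝ) - 1) with hKdef
    have hK1 : (1 : ℝ) < K := by nlinarith
    have hlK : 0 < Real.log K := Real.log_pos hK1
    refine ⟨200 * Real.log K / c, by positivity, ?_⟩
    intro d m hm hmL t ht hfe
    have hm' : (1 : ℝ) ≤ (m : ℝ) := by exact_mod_cast hm
    have hdpos : (0 : ℝ) < (d : ℝ) := by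
      by_contra h
      push_neg at h
      have : (d : ℝ) / (200 * Real.log K / c) ≤ 0 := by
        apply div_nonpos_of_nonpos_of_nonneg h (by positivity)
      linarith
    have hd : 1 ≤ d := by exact_mod_cast Nat.one_le_iff_ne_zero.mpr (by
      intro h; rw [h] at hdpos; simp at hdpos)
    have hmK : (m : ℝ) * Real.log K ≤ (d : ℝ) * c / 200 := by
      have h1 : (m : ℝ) * (200 * Real.log K / c) ≤ (d : ℝ) :=
        (le_div_iff₀ (by positivity)).mp hmL
      have h2 := mul_le_mul_of_nonneg_right h1 (le_of_lt (by positivity : (0:ℝ) < c / 200))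
      calc (m : ℝ) * Real.log K = (m : ℝ) * (200 * Real.log K / c) * (c / 200) := by
            field_simp
        _ ≤ (d : ℝ) * (c / 200) := h2
        _ = (d : ℝ) * c / 200 := by ring
    by_contra hcon
    push_neg at hcon
    set D : ℝ := ((b : ℝ) - 1) * d with hDdef
    have hD : (0 : ℝ) < D := by
      have : (1 : ℝ) ≤ (d : ℝ) := by exact_mod_cast hd
      nlinarith
    rw [fastEq_iff_log b d m hb hd ρ t hρ ht] at hfe
    have hratio : (1 : ℝ) / K ≤ t / D := by
      rw [div_le_div_iff₀ (by positivity) hD]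
      have : D * 1 = ((b:ℝ)-1) * d := by rw [hDdef]; ring
      nlinarith [hcon, hb']
    have hlog : -Real.log K ≤ Real.log (t / D) := by
      have := Real.log_le_log (by positivity) hratio
      rwa [one_div, Real.log_inv] at this
    have h1 : (d : ℝ) / 100 * c < t * c := mul_lt_mul_of_pos_right hcon hlc
    have h2 : (m : ℝ) * (-Real.log K) ≤ (m : ℝ) * Real.log (t / D) :=
      mul_le_mul_of_nonneg_left hlog (by positivity)
    have h3 : 0 < (d : ℝ) * c := mul_pos hdpos hlc
    linarith
end

section
/- Let b ≥ 2 be an integer and let ρ > e be a real number. There exist a constant C > 0 and D ∈ ℕ such that for all d ≥ D and all natural numbers m with 1 ≤ m ≤ √d, the unique t > 0 satisfying (ρ/e)^t · (t/((b−1)·d))^m = 1 obeys |t·(log ρ − 1) − m·(log d − log m − log(log(max(d/m, e))))| ≤ C·m. -/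
open Real Filter

section MulAddLogEq

variable {a s L : ℝ}

theorem one_lt_of_mul_add_log_eq (ha : 0 < a) (hs : 0 < s) (h : a * s + log s = L)
    (hL : a < L) : 1 < s := by
  by_contra! hs1
  nlinarith [log_nonpos hs.le hs1]

theorem abs_log_sub_log_le_of_mul_add_log_eq (ha : 0 < a) (hs : 0 < s)
    (h : a * s + log s = L) (hL : a < L) (hlogL : log (L / a) ≤ L / 2) :
    |log s - log L| ≤ log 2 + |log a| := by
  have hlogs : 0 < log s := log_pos (one_lt_of_mul_add_log_eq ha hs h hL)
  have hL0 : 0 < L := ha.trans hL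
  have hupper : log s ≤ log (L / a) :=
    log_le_log hs ((le_div_iff₀ ha).2 (by linarith))
  have hlower : log (L / (2 * a)) ≤ log s :=
    log_le_log (by positivity) ((div_le_iff₀ (by positivity)).2 (by linarith))
  rw [log_div hL0.ne' ha.ne'] at hupper
  rw [log_div hL0.ne' (by positivity), log_mul two_ne_zero ha.ne'] at hlower
  rw [abs_le]
  constructor <;> linarith [neg_abs_le (log a), le_abs_self (log a), log_pos one_lt_two]

theorem eventually_lt_and_log_div_le (ha : 0 < a) :
    ∀ᶠ L in atTop, a < L ∧ log (L / a) ≤ L / 2 := by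
  have hlog : ∀ᶠ x in atTop, log x ≤ a / 2 * x := by
    filter_upwards [isLittleO_log_id_atTop.bound (half_pos ha), eventually_ge_atTop 0]
      with x hx hx0
    simpa [abs_of_nonneg hx0] using (le_abs_self _).trans hx
  filter_upwards [tendsto_id.atTop_div_const ha |>.eventually hlog, eventually_gt_atTop a]
    with L (hL : log (L / a) ≤ a / 2 * (L / a)) haL
  refine ⟨haL, hL.trans_eq ?_⟩
  field_simp

end MulAddLogEq

theorem abs_log_add_sub_log_le {c x : ℝ} (hc : 0 ≤ c) (hx : 1 ≤ x) :
    |log (c + x) - log x| ≤ log (1 + c) := by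
  have hx0 : 0 < x := by linarith
  have hle : log (c + x) ≤ log ((1 + c) * x) := log_le_log (by linarith) (by nlinarith)
  rw [log_mul (by linarith) hx0.ne'] at hle
  rw [abs_of_nonneg (sub_nonneg.2 (log_le_log hx0 (by linarith)))]
  linarith

theorem abs_add_log_sub_log_le_of_mul_add_log_eq {a c s L₀ : ℝ} (ha : 0 < a) (hc : 0 ≤ c)
    (hs : 0 < s) (h : a * s + log s = c + L₀) (hL₀ : 1 ≤ L₀) (hL : a < c + L₀)
    (hlogL : log ((c + L₀) / a) ≤ (c + L₀) / 2) :
    |c + log L₀ - log s| ≤ c + log (1 + c) + log 2 + |log a| := by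
  have hsol := abs_log_sub_log_le_of_mul_add_log_eq ha hs h hL hlogL
  have hshift := abs_log_add_sub_log_le hc hL₀
  rw [abs_le] at hsol hshift ⊢
  constructor <;> linarith

theorem half_log_le_log_div_of_le_sqrt {d m : ℝ} (hd : 0 < d) (hm : 0 < m) (hmd : m ≤ √d) :
    log d / 2 ≤ log (d / m) := by
  rw [← log_sqrt hd.le]
  refine log_le_log (sqrt_pos.2 hd) ?_
  rw [← div_sqrt]
  exact div_le_div_of_nonneg_left hd.le hm hmd

theorem fastEq.mul_add_log_eq {b d m : ℕ} {ρ t : ℝ} (hb : 1 < b) (hρ : 0 < ρ) (hd : 0 < d)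
    (hm : 0 < m) (ht : 0 < t) (h : fastEq b d m ρ t) :
    (log ρ - 1) * (t / m) + log (t / m) = log (((b : ℝ) - 1) * d / m) := by
  have hb' : (0 : ℝ) < b - 1 := sub_pos.2 (by exact_mod_cast hb)
  have hu : (0 : ℝ) < (b - 1) * d := mul_pos hb' (by exact_mod_cast hd)
  have hm' : (0 : ℝ) < m := by exact_mod_cast hm
  have hlog := congrArg log h
  rw [log_mul (by positivity) (by positivity), log_rpow (by positivity), log_pow,
    log_div hρ.ne' (exp_pos 1).ne', log_exp, log_div ht.ne' hu.ne', log_one] at hlog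
  rw [log_div ht.ne' hm'.ne', log_div hu.ne' hm'.ne']
  field_simp
  linarith

/-- Let `b ≥ 2` be an integer and `ρ > e`. There exist `C > 0` and `D ∈ ℕ` such that for
all `d ≥ D` and all `m` with `1 ≤ m ≤ √d`, the unique `t > 0` solving
`(ρ/e)^t · (t/((b−1)·d))^m = 1` satisfies
`|t·(log ρ − 1) − m·(log d − log m − log log (max (d/m) e))| ≤ C·m`. -/
theorem fastEq_solution_asymptotics (b : ℕ) (hb : 2 ≤ b) (ρ : ℝ)
    (hρ : Real.exp 1 < ρ) :
    ∃ C : ℝ, 0 < C ∧ ∃ D : ℕ,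
      ∀ d ≥ D, ∀ m : ℕ, 1 ≤ m → (m : ℝ) ≤ Real.sqrt d →
        ∀ t : ℝ, 0 < t → fastEq b d m ρ t →
          |t * (Real.log ρ - 1) -
              (m : ℝ) * (Real.log d - Real.log m -
                Real.log (Real.log (max ((d : ℝ) / m) (Real.exp 1))))| ≤ C * m := by
  have hρ0 : 0 < ρ := (exp_pos 1).trans hρ
  set a := log ρ - 1
  set c := log ((b : ℝ) - 1)
  have ha : 0 < a := by linarith [(lt_log_iff_exp_lt hρ0).2 hρ]
  have hb1 : (1 : ℝ) ≤ b - 1 := by linarith [show (2 : ℝ) ≤ b by exact_mod_cast hb]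
  have hc : 0 ≤ c := log_nonneg hb1
  obtain ⟨K, hK⟩ := eventually_atTop.1 (eventually_lt_and_log_div_le ha)
  refine ⟨c + log (1 + c) + log 2 + |log a|, ?_, ⌈exp (2 * max K 1)⌉₊,
    fun d hd m hm hmd t ht h => ?_⟩
  · linarith [log_nonneg (by linarith : (1 : ℝ) ≤ 1 + c), log_pos one_lt_two, abs_nonneg (log a)]
  have hexp : exp (2 * max K 1) ≤ d := (Nat.le_ceil _).trans (by exact_mod_cast hd)
  have hd0 : (0 : ℝ) < d := (exp_pos _).trans_le hexp
  have hm0 : (0 : ℝ) < m := by exact_mod_cast hm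
  have hL₀ : max K 1 ≤ log (d / m) := by
    linarith [half_log_le_log_div_of_le_sqrt hd0 hm0 hmd, (le_log_iff_exp_le hd0).2 hexp]
  have hmax : max ((d : ℝ) / m) (exp 1) = d / m :=
    max_eq_left ((le_log_iff_exp_le (div_pos hd0 hm0)).1 (le_of_max_le_right hL₀))
  have hs : a * (t / m) + log (t / m) = c + log (d / m) := by
    have hs := h.mul_add_log_eq (by omega) hρ0 (by exact_mod_cast hd0) hm ht
    rwa [mul_div_assoc, log_mul (zero_lt_one.trans_le hb1).ne' (div_pos hd0 hm0).ne'] at hs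
  obtain ⟨hKa, hKlog⟩ := hK (c + log (d / m)) (by linarith [le_max_left K 1])
  have hbound := abs_add_log_sub_log_le_of_mul_add_log_eq ha hc (div_pos ht hm0) hs
    (le_of_max_le_right hL₀) hKa hKlog
  have hta : t * a = m * (a * (t / m)) := by field_simp
  rw [hmax, ← log_div hd0.ne' hm0.ne', hta, mul_comm _ (m : ℝ)]
  calc _ = |(m : ℝ) * (c + log (log (d / m)) - log (t / m))| := by
        congr 1; linear_combination (m : ℝ) * hs
    _ ≤ _ := by rw [abs_mul, abs_of_pos hm0]; gcongr
end

section
/- Let b ≥ 2 be an integer and let ρ > e be a real number. There exist constants L₁ > 0, c₁ > 0, c₂ > 0 and D ∈ ℕ such that for all d ≥ D and all m with 1 ≤ m and m + 1 ≤ d/L₁, writing t_{d,m} and t_{d,m+1} for the unique positive solutions of (ρ/e)^t · (t/((b−1)·d))^m = 1 with parameters m and m+1 respectively, one has c₁·t_{d,m}/m ≤ t_{d,m+1} − t_{d,m} ≤ c₂·t_{d,m}/m. -/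
set_option maxHeartbeats 1000000


/-- Let `b ≥ 2` be an integer and `ρ > e`. There are constants `L₁, c₁, c₂ > 0` and
`D ∈ ℕ` such that for all `d ≥ D` and all `m` with `1 ≤ m` and `m + 1 ≤ d/L₁`, the unique
positive solutions `t = t_{d,m}` and `t' = t_{d,m+1}` of the pre-mixing equation with
parameters `m` and `m+1` satisfy `c₁·t/m ≤ t' − t ≤ c₂·t/m`. -/
theorem fastEq_solution_increments (b : ℕ) (hb : 2 ≤ b) (ρ : ℝ)
    (hρ : Real.exp 1 < ρ) :
    ∃ L₁ c₁ c₂ : ℝ, 0 < L₁ ∧ 0 < c₁ ∧ 0 < c₂ ∧ ∃ D : ℕ,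
      ∀ d ≥ D, ∀ m : ℕ, 1 ≤ m → ((m : ℝ) + 1) ≤ (d : ℝ) / L₁ →
        ∀ t t' : ℝ, 0 < t → fastEq b d m ρ t →
          0 < t' → fastEq b d (m + 1) ρ t' →
            c₁ * (t / m) ≤ t' - t ∧ t' - t ≤ c₂ * (t / m) := by
  have hρ0 : 0 < ρ := lt_trans (Real.exp_pos 1) hρ
  set A := Real.log ρ - 1 with hAdef
  have hA : 0 < A := by
    have h1 : Real.log (Real.exp 1) < Real.log ρ := Real.log_lt_log (Real.exp_pos 1) hρ
    rw [Real.log_exp] at h1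
    simp only [hAdef]; linarith
  refine ⟨Real.exp 4 / A, 1/2, 1, by positivity, by norm_num, by norm_num, 1, ?_⟩
  intro d hd m hm hmd t t' ht hfe ht' hfe'
  simp only [fastEq] at hfe hfe'
  set B : ℝ := ((b:ℝ) - 1) * (d:ℝ) with hBdef
  have hd1 : (1:ℝ) ≤ (d:ℝ) := by exact_mod_cast hd
  have hb1 : (1:ℝ) ≤ (b:ℝ) - 1 := by
    have h : (2:ℝ) ≤ (b:ℝ) := by exact_mod_cast hb
    linarith
  have hB : 0 < B := by rw [hBdef]; nlinarith
  have hdB : (d:ℝ) ≤ B := by rw [hBdef]; nlinarith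
  have hm1 : (1:ℝ) ≤ (m:ℝ) := by exact_mod_cast hm
  have hmpos : (0:ℝ) < (m:ℝ) := by linarith
  -- extract the logarithmic form of the equations
  have hbase : (0:ℝ) < ρ / Real.exp 1 := div_pos hρ0 (Real.exp_pos 1)
  have hlogbase : Real.log (ρ / Real.exp 1) = A := by
    rw [Real.log_div (ne_of_gt hρ0) (ne_of_gt (Real.exp_pos 1)), Real.log_exp]
  have key : ∀ (k : ℕ) (s : ℝ), 0 < s →
      (ρ / Real.exp 1) ^ s * (s / B) ^ k = 1 →
      A * s + (k:ℝ) * (Real.log s - Real.log B) = 0 := by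
    intro k s hs heq
    have h1 : Real.log ((ρ / Real.exp 1) ^ s * (s / B) ^ k) = 0 := by
      rw [heq, Real.log_one]
    rw [Real.log_mul (Real.rpow_pos_of_pos hbase s).ne'
        (pow_ne_zero _ (ne_of_gt (div_pos hs hB))),
      Real.log_rpow hbase, Real.log_pow,
      Real.log_div (ne_of_gt hs) (ne_of_gt hB), hlogbase] at h1
    linarith
  have hteq := key m t ht hfe
  have ht'eq := key (m+1) t' ht' hfe'
  push_cast at ht'eq
  have F1 : (m:ℝ) * (Real.log B - Real.log t) = A * t := by linear_combination -hteq
  -- upper bound on t : A t² ≤ m B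
  have hlog1 : Real.log B - Real.log t ≤ B / t - 1 := by
    have h := Real.log_le_sub_one_of_pos (div_pos hB ht)
    rwa [Real.log_div (ne_of_gt hB) (ne_of_gt ht)] at h
  have hAt2 : A * (t * t) ≤ (m:ℝ) * B := by
    have h2 : A * t ≤ (m:ℝ) * (B / t - 1) := by
      nlinarith [mul_le_mul_of_nonneg_left hlog1 hmpos.le, F1]
    have h3 : (m:ℝ) * (B / t - 1) * t = (m:ℝ) * B - (m:ℝ) * t := by
      field_simp
    have h4 := mul_le_mul_of_nonneg_right h2 ht.le
    rw [h3] at h4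
    nlinarith [h4, hmpos, ht]
  -- lower bound on log(B/t)
  have ht2 : t * t ≤ (m:ℝ) * B / A := by
    rw [le_div_iff₀ hA]
    ring_nf
    ring_nf at hAt2
    linarith [hAt2]
  have h5 : Real.log (t * t) ≤ Real.log ((m:ℝ) * B / A) :=
    Real.log_le_log (by positivity) ht2
  rw [Real.log_mul (ne_of_gt ht) (ne_of_gt ht),
    Real.log_div (by positivity) (ne_of_gt hA),
    Real.log_mul (ne_of_gt hmpos) (ne_of_gt hB)] at h5
  have h6 : ((m:ℝ)+1) * (Real.exp 4 / A) ≤ (d:ℝ) := (le_div_iff₀ (by positivity)).mp hmd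
  have hM : Real.exp 4 * (m:ℝ) ≤ A * B := by
    have hfe4 : ((m:ℝ)+1) * (Real.exp 4 / A) * A = ((m:ℝ)+1) * Real.exp 4 := by
      field_simp
    nlinarith [mul_le_mul_of_nonneg_right h6 hA.le, Real.exp_pos 4, hdB, hA, hfe4]
  have h7 : Real.log (Real.exp 4 * (m:ℝ)) ≤ Real.log (A * B) :=
    Real.log_le_log (by positivity) hM
  rw [Real.log_mul (Real.exp_pos 4).ne' (ne_of_gt hmpos),
    Real.log_mul (ne_of_gt hA) (ne_of_gt hB), Real.log_exp] at h7
  have hlogBt : (2:ℝ) ≤ Real.log B - Real.log t := by linarith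
  have hAt : (m:ℝ) + 1 ≤ A * t := by
    nlinarith [F1, mul_le_mul_of_nonneg_left hlogBt hmpos.le, hm1]
  -- the central identity
  have ID : (m:ℝ) * (A * (t' - t)) + (m:ℝ) * ((m:ℝ)+1) * (Real.log t' - Real.log t)
      = A * t := by
    linear_combination (m:ℝ) * ht'eq - ((m:ℝ)+1) * hteq
  have htt' : t < t' := by
    by_contra hcon
    push_neg at hcon
    have hlog : Real.log t' ≤ Real.log t := Real.log_le_log ht' hcon
    nlinarith [ID, mul_pos hA ht, hmpos, hA,
      mul_le_mul_of_nonneg_left (sub_nonpos.mpr hlog)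
        (by positivity : (0:ℝ) ≤ (m:ℝ) * ((m:ℝ)+1)),
      mul_nonneg hmpos.le hA.le]
  have hlogmono : Real.log t ≤ Real.log t' := Real.log_le_log ht htt'.le
  have hupper : t' - t ≤ 1 * (t / (m:ℝ)) := by
    rw [one_mul, le_div_iff₀ hmpos]
    nlinarith [ID, hA, hmpos,
      mul_le_mul_of_nonneg_left (sub_nonneg.mpr hlogmono)
        (by positivity : (0:ℝ) ≤ (m:ℝ) * ((m:ℝ)+1))]
  have hlogsub' : t * (Real.log t' - Real.log t) ≤ t' - t := by
    have h8 := Real.log_le_sub_one_of_pos (div_pos ht' ht)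
    rw [Real.log_div (ne_of_gt ht') (ne_of_gt ht)] at h8
    have h9 : (Real.log t' - Real.log t + 1) * t ≤ t' := by
      rw [← le_div_iff₀ ht]; linarith
    nlinarith [h9]
  have E2 : (m:ℝ) * (A * (t' - t)) * t
      + (m:ℝ) * ((m:ℝ)+1) * ((Real.log t' - Real.log t) * t) = A * t * t := by
    linear_combination t * ID
  have step1 : A * t * t ≤ (m:ℝ) * (A * (t' - t)) * t + (m:ℝ) * ((m:ℝ)+1) * (t' - t) := by
    have hint := mul_le_mul_of_nonneg_left hlogsub'
      (by positivity : (0:ℝ) ≤ (m:ℝ) * ((m:ℝ)+1))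
    ring_nf at E2 hint ⊢
    linarith [E2, hint]
  have step2 : (m:ℝ) * ((m:ℝ)+1) * (t' - t) ≤ (m:ℝ) * (A * t) * (t' - t) := by
    have hint2 := mul_le_mul_of_nonneg_left
      (mul_le_mul_of_nonneg_right hAt (sub_nonneg.mpr htt'.le)) hmpos.le
    ring_nf at hint2 ⊢
    linarith [hint2]
  have step3 : (A * t) * t ≤ (A * t) * (2 * (m:ℝ) * (t' - t)) := by
    ring_nf
    ring_nf at step1 step2
    linarith [step1, step2]
  have h10 : t ≤ 2 * (m:ℝ) * (t' - t) :=
    le_of_mul_le_mul_left step3 (mul_pos hA ht)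
  have hlower : 1/2 * (t / (m:ℝ)) ≤ t' - t := by
    have h11 : t / (m:ℝ) ≤ 2 * (t' - t) := (div_le_iff₀ hmpos).mpr (by
      ring_nf; ring_nf at h10; linarith [h10])
    linarith
  exact ⟨hlower, hupper⟩
end

section
/- Let b ≥ 2 be an integer and ρ ∈ (1, e). There exists L₁ > 0 such that for every ε > 0 there exist C > 0 and D ∈ ℕ with the following property: for all d ≥ D and all m with 1 ≤ m ≤ d/L₁, writing t_{d,m} for the unique positive solution of the first-moment equation, one has ∫₀^{t_{d,m} − C} ρ^s · b^(−d) · (1 + (b−1)·exp(−b·s/((b−1)·d)))^(d−m) · (1 − exp(−b·s/((b−1)·d)))^m ds ≤ ε. -/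
open MeasureTheory

namespace FMAux

noncomputable def psi0 (b : ℕ) (ρ : ℝ) (u : ℝ) : ℝ :=
  ((b:ℝ)-1)/b * Real.log ρ * u - Real.log b + Real.log (1 + ((b:ℝ)-1) * Real.exp (-u))

noncomputable def psi0' (b : ℕ) (ρ : ℝ) (u : ℝ) : ℝ :=
  ((b:ℝ)-1)/b * Real.log ρ - ((b:ℝ)-1)/(Real.exp u + (b:ℝ) - 1)

variable {b : ℕ} {ρ : ℝ}

lemma hasDerivAt_psi0 (hb : 2 ≤ b) (u : ℝ) :
    HasDerivAt (psi0 b ρ) (psi0' b ρ u) u := by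
  have hB : (2:ℝ) ≤ (b:ℝ) := by exact_mod_cast hb
  have hB1 : (0:ℝ) ≤ (b:ℝ) - 1 := by linarith
  have hA : 0 < 1 + ((b:ℝ)-1) * Real.exp (-u) := by positivity
  have h1 : HasDerivAt (fun u : ℝ => 1 + ((b:ℝ)-1) * Real.exp (-u))
      (((b:ℝ)-1) * (-Real.exp (-u))) u := by
    have := ((Real.hasDerivAt_exp (-u)).comp u (hasDerivAt_neg u)).const_mul ((b:ℝ)-1)
    simpa [mul_comm, mul_assoc, mul_left_comm] using this.const_add 1
  have h2 : HasDerivAt (fun u => Real.log (1 + ((b:ℝ)-1) * Real.exp (-u)))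
      ((((b:ℝ)-1) * (-Real.exp (-u))) / (1 + ((b:ℝ)-1) * Real.exp (-u))) u :=
    h1.log (ne_of_gt hA)
  have h3 : HasDerivAt (fun u : ℝ => ((b:ℝ)-1)/b * Real.log ρ * u - Real.log b)
      (((b:ℝ)-1)/b * Real.log ρ) u := by
    simpa using ((hasDerivAt_id u).const_mul (((b:ℝ)-1)/b * Real.log ρ)).sub_const (Real.log b)
  have h4 := h3.add h2
  have hexp : (0:ℝ) < Real.exp u := Real.exp_pos u
  have hA' : 0 < Real.exp u + (b:ℝ) - 1 := by nlinarith
  have hkey : (((b:ℝ)-1) * (-Real.exp (-u))) / (1 + ((b:ℝ)-1) * Real.exp (-u))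
      = -(((b:ℝ)-1)/(Real.exp u + (b:ℝ) - 1)) := by
    rw [Real.exp_neg]
    rw [show ((b:ℝ)-1) * -(Real.exp u)⁻¹ = -(((b:ℝ)-1) * (Real.exp u)⁻¹) by ring, neg_div, neg_inj,
      div_eq_div_iff (ne_of_gt (by positivity)) hA'.ne']
    field_simp
    ring_nf
  unfold psi0'
  rw [sub_eq_add_neg, ← hkey]
  exact h4

lemma psi0'_mono (hb : 2 ≤ b) (hρ : 0 < Real.log ρ) : Monotone (psi0' b ρ) := by
  intro u v huv
  have hB : (2:ℝ) ≤ (b:ℝ) := by exact_mod_cast hb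
  unfold psi0'
  have h1 : 0 < Real.exp u + (b:ℝ) - 1 := by have := Real.exp_pos u; nlinarith
  have h2 : Real.exp u + (b:ℝ) - 1 ≤ Real.exp v + (b:ℝ) - 1 := by
    have := Real.exp_le_exp.2 huv; linarith
  have : ((b:ℝ)-1)/(Real.exp v + (b:ℝ) - 1) ≤ ((b:ℝ)-1)/(Real.exp u + (b:ℝ) - 1) := by
    gcongr; linarith
  linarith

lemma psi0_zero (hb : 2 ≤ b) : psi0 b ρ 0 = 0 := by
  have hB : (2:ℝ) ≤ (b:ℝ) := by exact_mod_cast hb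
  unfold psi0
  rw [neg_zero, Real.exp_zero, mul_one, show (1:ℝ) + ((b:ℝ)-1) = b by ring]
  ring

lemma continuous_psi0 (hb : 2 ≤ b) : Continuous (psi0 b ρ) := by
  have hB : (2:ℝ) ≤ (b:ℝ) := by exact_mod_cast hb
  have hB1 : (0:ℝ) ≤ (b:ℝ) - 1 := by linarith
  unfold psi0
  refine (((continuous_const.mul continuous_id).sub continuous_const).add ?_)
  refine Continuous.log (by continuity) (fun u => ?_)
  have : 0 < 1 + ((b:ℝ)-1) * Real.exp (-u) := by positivity
  exact ne_of_gt this


lemma setup (hb : 2 ≤ b) (hρ₁ : 1 < ρ) (hρe : ρ < Real.exp 1) :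
    ∃ w κ₀ γ₁ : ℝ, 0 < w ∧ 0 < κ₀ ∧ 0 < γ₁ ∧
      (∀ u, 0 ≤ u → u ≤ w → psi0 b ρ u ≤ -γ₁ * u) ∧
      (∀ u, w ≤ u → κ₀ ≤ psi0' b ρ u) := by
  have hB : (2:ℝ) ≤ (b:ℝ) := by exact_mod_cast hb
  have hB1 : (0:ℝ) < (b:ℝ) - 1 := by linarith
  have hBpos : (0:ℝ) < b := by linarith
  have hlρ : 0 < Real.log ρ := Real.log_pos hρ₁
  have hlρ1 : Real.log ρ < 1 := by
    have := Real.log_lt_log (by linarith : (0:ℝ) < ρ) hρe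
    rwa [Real.log_exp] at this
  set β : ℝ := ((b:ℝ)-1)/b * Real.log ρ with hβ
  have hβpos : 0 < β := by positivity
  set γ : ℝ := ((b:ℝ)-1)/b - β with hγdef
  have hγ : 0 < γ := by
    rw [hγdef, hβ]
    have : ((b:ℝ)-1)/b * Real.log ρ < ((b:ℝ)-1)/b * 1 := by
      apply mul_lt_mul_of_pos_left hlρ1 (by positivity)
    linarith [this]
  -- upper bound psi0 u ≤ u * (-γ + (b-1)*u/b) for u ≥ 0
  have hub : ∀ u : ℝ, 0 ≤ u → psi0 b ρ u ≤ u * (-γ + ((b:ℝ)-1) * u / b) := by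
    intro u hu
    have hA : 0 < 1 + ((b:ℝ)-1) * Real.exp (-u) := by positivity
    have hlog : Real.log (1 + ((b:ℝ)-1) * Real.exp (-u)) - Real.log b
        ≤ (1 + ((b:ℝ)-1) * Real.exp (-u))/b - 1 := by
      rw [← Real.log_div (ne_of_gt hA) (ne_of_gt hBpos)]
      exact Real.log_le_sub_one_of_pos (by positivity)
    have h1 : u * Real.exp (-u) ≤ 1 - Real.exp (-u) := by
      have h := Real.add_one_le_exp u
      have he : 0 < Real.exp (-u) := Real.exp_pos _
      have : (u + 1) * Real.exp (-u) ≤ Real.exp u * Real.exp (-u) :=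
        mul_le_mul_of_nonneg_right h he.le
      rw [← Real.exp_add] at this
      simp at this
      nlinarith
    have h2 : u * (1 - u) ≤ u * Real.exp (-u) := by
      have := Real.add_one_le_exp (-u)
      nlinarith
    have h3 : 1 - Real.exp (-u) ≥ u * (1-u) := by linarith
    unfold psi0
    have : (1 + ((b:ℝ)-1) * Real.exp (-u))/b - 1 = -(((b:ℝ)-1) * (1 - Real.exp (-u)) / b) := by
      field_simp; ring
    rw [this] at hlog
    have h4 : ((b:ℝ)-1) * (u * (1-u)) / b ≤ ((b:ℝ)-1) * (1 - Real.exp (-u)) / b := by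
      gcongr
    have h5 : β * u - ((b:ℝ)-1) * (u * (1-u)) / b = u * (-γ + ((b:ℝ)-1) * u / b) := by
      rw [hγdef]; field_simp; ring
    nlinarith [hlog]
  set u₁ : ℝ := γ * (b:ℝ) / (2*((b:ℝ)-1)) with hu₁def
  have hu₁ : 0 < u₁ := by positivity
  have hpsiu₁ : psi0 b ρ u₁ ≤ -(γ/2) * u₁ := by
    have := hub u₁ hu₁.le
    have h6 : -γ + ((b:ℝ)-1) * u₁ / b = -(γ/2) := by
      rw [hu₁def]; field_simp; ring
    rw [h6] at this; linarith [this]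
  have hpsiu₁neg : psi0 b ρ u₁ < 0 := lt_of_le_of_lt hpsiu₁ (by nlinarith [mul_pos (half_pos hγ) hu₁])
  set R : ℝ := max (u₁+1) ((Real.log b + 1)/β) with hRdef
  have hu₁R : u₁ < R := lt_of_lt_of_le (by linarith) (le_max_left _ _)
  have hpsiR : 0 < psi0 b ρ R := by
    have h7 : Real.log b + 1 ≤ β * R := by
      have : (Real.log b + 1)/β ≤ R := le_max_right _ _
      have hlogb : 0 ≤ Real.log b := Real.log_nonneg (by linarith)
      calc Real.log b + 1 = β * ((Real.log b + 1)/β) := by field_simp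
        _ ≤ β * R := by gcongr
    have h8 : 0 ≤ Real.log (1 + ((b:ℝ)-1) * Real.exp (-R)) := by
      apply Real.log_nonneg
      have : 0 < ((b:ℝ)-1) * Real.exp (-R) := by positivity
      linarith
    unfold psi0
    rw [← hβ]
    nlinarith
  -- least root u₀ of psi0 in [u₁, R]
  have hcont : Continuous (psi0 b ρ) := continuous_psi0 hb
  set S : Set ℝ := Set.Icc u₁ R ∩ psi0 b ρ ⁻¹' {0} with hSdef
  have hSne : S.Nonempty := by
    have := intermediate_value_Icc hu₁R.le hcont.continuousOn
    have h0 : (0:ℝ) ∈ Set.Icc (psi0 b ρ u₁) (psi0 b ρ R) := ⟨hpsiu₁neg.le, hpsiR.le⟩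
    obtain ⟨z, hz, hz0⟩ := this h0
    exact ⟨z, hz, by simpa using hz0⟩
  have hSclosed : IsClosed S := (isClosed_Icc).inter (isClosed_singleton.preimage hcont)
  have hSbdd : BddBelow S := ⟨u₁, fun x hx => hx.1.1⟩
  set u₀ : ℝ := sInf S with hu₀def
  have hu₀S : u₀ ∈ S := hSclosed.csInf_mem hSne hSbdd
  have hu₀root : psi0 b ρ u₀ = 0 := by simpa using hu₀S.2
  have hu₁u₀ : u₁ < u₀ := by
    rcases lt_or_eq_of_le hu₀S.1.1 with h | h
    · exact h
    · exfalso; rw [← h] at hu₀root; exact absurd hu₀root (ne_of_lt hpsiu₁neg)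
  have hneg : ∀ v, u₁ ≤ v → v < u₀ → psi0 b ρ v < 0 := by
    intro v hv1 hv2
    by_contra hge
    push_neg at hge
    have hIVT := intermediate_value_Icc hv1 hcont.continuousOn
    have h0 : (0:ℝ) ∈ Set.Icc (psi0 b ρ u₁) (psi0 b ρ v) := ⟨hpsiu₁neg.le, hge⟩
    obtain ⟨z, hz, hz0⟩ := hIVT h0
    have hzS : z ∈ S := by
      refine ⟨⟨hz.1, le_trans hz.2 (le_trans hv2.le hu₀S.1.2)⟩, by simpa using hz0⟩
    have : u₀ ≤ z := csInf_le hSbdd hzS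
    linarith [hz.2]
  -- MVT on [u₁, u₀]
  obtain ⟨w, hwIoo, hwslope⟩ := exists_hasDerivAt_eq_slope (psi0 b ρ) (psi0' b ρ) hu₁u₀
    hcont.continuousOn (fun x _ => hasDerivAt_psi0 hb x)
  have hκ₀pos : 0 < psi0' b ρ w := by
    rw [hwslope, hu₀root]
    apply div_pos (by linarith) (by linarith)
  have hw0 : 0 < w := lt_trans hu₁ hwIoo.1
  have hψw : psi0 b ρ w < 0 := hneg w hwIoo.1.le hwIoo.2
  refine ⟨w, psi0' b ρ w, -psi0 b ρ w / w, hw0, hκ₀pos, div_pos (neg_pos.mpr hψw) hw0, ?_, ?_⟩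
  · -- chord bound via convexity
    have hdiff : Differentiable ℝ (psi0 b ρ) := fun x => (hasDerivAt_psi0 hb x).differentiableAt
    have hderiv : deriv (psi0 b ρ) = psi0' b ρ := funext fun x => (hasDerivAt_psi0 hb x).deriv
    have hconv : ConvexOn ℝ Set.univ (psi0 b ρ) :=
      Monotone.convexOn_univ_of_deriv hdiff (hderiv ▸ psi0'_mono hb hlρ)
    intro u hu0 huw
    rcases eq_or_lt_of_le hu0 with h | h
    · simp [← h, psi0_zero hb]
    have ha : (0:ℝ) ≤ 1 - u/w := by
      have : u/w ≤ 1 := by rw [div_le_one hw0]; exact huw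
      linarith
    have hbb : (0:ℝ) ≤ u/w := by positivity
    have hchord := hconv.2 (Set.mem_univ 0) (Set.mem_univ w) ha hbb (by ring)
    have harg : (1 - u/w) • (0:ℝ) + (u/w) • w = u := by
      simp [smul_eq_mul]
      field_simp
    rw [harg] at hchord
    rw [psi0_zero hb] at hchord
    have : (1 - u/w) * 0 + u/w * psi0 b ρ w = -(-psi0 b ρ w / w) * u := by
      field_simp; ring
    rw [smul_eq_mul, smul_eq_mul] at hchord
    calc psi0 b ρ u ≤ (1 - u/w) * 0 + u/w * psi0 b ρ w := hchord
      _ = -(-psi0 b ρ w / w) * u := this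
  · intro u hwu
    exact psi0'_mono hb hlρ hwu

noncomputable def gfun (b d m : ℕ) (ρ σ : ℝ) : ℝ :=
  σ * Real.log ρ - d * Real.log b
    + (d - m : ℕ) * Real.log (1 + ((b:ℝ)-1) * Real.exp (-((b:ℝ)*σ)/(((b:ℝ)-1)*d)))
    + m * Real.log (1 - Real.exp (-((b:ℝ)*σ)/(((b:ℝ)-1)*d)))

lemma fm_eq_exp (b d m : ℕ) (hb : 2 ≤ b) (hd : 1 ≤ d) {ρ : ℝ} (hρ : 1 < ρ)
    {σ : ℝ} (hσ : 0 < σ) :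
    firstMomentLHS b d m ρ σ = Real.exp (gfun b d m ρ σ) := by
  have hB : (2:ℝ) ≤ (b:ℝ) := by exact_mod_cast hb
  have hB1 : (0:ℝ) < (b:ℝ) - 1 := by linarith
  have hdR : (1:ℝ) ≤ (d:ℝ) := by exact_mod_cast hd
  have harg : -((b:ℝ)*σ)/(((b:ℝ)-1)*d) < 0 := by
    apply div_neg_of_neg_of_pos (by nlinarith) (by nlinarith)
  have hx0 : 0 < Real.exp (-((b:ℝ)*σ)/(((b:ℝ)-1)*d)) := Real.exp_pos _
  have hx1 : Real.exp (-((b:ℝ)*σ)/(((b:ℝ)-1)*d)) < 1 := Real.exp_lt_one_iff.mpr harg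
  have hA : (0:ℝ) < 1 + ((b:ℝ)-1) * Real.exp (-((b:ℝ)*σ)/(((b:ℝ)-1)*d)) := by positivity
  have hBB : (0:ℝ) < 1 - Real.exp (-((b:ℝ)*σ)/(((b:ℝ)-1)*d)) := by linarith
  rw [gfun, firstMomentLHS, Real.exp_add, Real.exp_add, Real.exp_sub,
    Real.exp_nat_mul, Real.exp_nat_mul, Real.exp_nat_mul,
    Real.exp_log (by positivity : (0:ℝ) < (b:ℝ)), Real.exp_log hA, Real.exp_log hBB,
    mul_comm σ (Real.log ρ), ← Real.rpow_def_of_pos (by linarith : (0:ℝ) < ρ), div_eq_mul_inv]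
  ring

lemma continuous_fm (b d m : ℕ) {ρ : ℝ} (hρ : 0 < ρ) :
    Continuous (fun s => firstMomentLHS b d m ρ s) := by
  unfold firstMomentLHS
  have h1 : Continuous fun s : ℝ => ρ ^ s :=
    Continuous.rpow continuous_const continuous_id fun x => Or.inl hρ.ne'
  have h2 : Continuous fun s : ℝ => Real.exp (-((b:ℝ)*s)/(((b:ℝ)-1)*(d:ℝ))) := by
    apply Real.continuous_exp.comp
    exact ((continuous_const.mul continuous_id).neg).div_const _
  exact (((h1.mul continuous_const).mul
    (((continuous_const.add (continuous_const.mul h2))).pow _)).mul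
    ((continuous_const.sub h2).pow _))

lemma gfun_deriv_ge (b d m : ℕ) (hb : 2 ≤ b) (hd : 1 ≤ d) (hm : m ≤ d) {ρ : ℝ}
    (hρ₁ : 1 < ρ) {w κ₀ : ℝ} (hκ₀ : 0 < κ₀) (H2 : ∀ u, w ≤ u → κ₀ ≤ psi0' b ρ u)
    {σ : ℝ} (hσ : 0 < σ) (hwσ : w ≤ (b:ℝ)/(((b:ℝ)-1)*d) * σ) :
    ∃ gd : ℝ, HasDerivAt (gfun b d m ρ) gd σ ∧ κ₀ * (b:ℝ)/((b:ℝ)-1) ≤ gd := by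
  have hB : (2:ℝ) ≤ (b:ℝ) := by exact_mod_cast hb
  have hB1 : (0:ℝ) < (b:ℝ) - 1 := by linarith
  have hdR : (1:ℝ) ≤ (d:ℝ) := by exact_mod_cast hd
  set c : ℝ := (b:ℝ)/(((b:ℝ)-1)*d) with hcdef
  have hc : 0 < c := by positivity
  set x : ℝ := Real.exp (-((b:ℝ)*σ)/(((b:ℝ)-1)*d)) with hxdef
  have hx0 : 0 < x := Real.exp_pos _
  have hx1 : x < 1 := by
    rw [hxdef]
    apply Real.exp_lt_one_iff.mpr
    apply div_neg_of_neg_of_pos (by nlinarith) (by nlinarith)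
  have hA : (0:ℝ) < 1 + ((b:ℝ)-1) * x := by positivity
  have hBB : (0:ℝ) < 1 - x := by linarith
  -- derivative of the exponential factor
  have hargderiv : HasDerivAt (fun σ : ℝ => -((b:ℝ)*σ)/(((b:ℝ)-1)*(d:ℝ))) (-c) σ := by
    have h := (((hasDerivAt_id σ).const_mul ((b:ℝ))).neg).div_const (((b:ℝ)-1)*(d:ℝ))
    simpa [hcdef, neg_div] using h
  have hE : HasDerivAt (fun σ : ℝ => Real.exp (-((b:ℝ)*σ)/(((b:ℝ)-1)*(d:ℝ)))) (x * (-c)) σ :=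
    (Real.hasDerivAt_exp _).comp σ hargderiv
  have hAd : HasDerivAt (fun σ : ℝ => 1 + ((b:ℝ)-1) * Real.exp (-((b:ℝ)*σ)/(((b:ℝ)-1)*(d:ℝ))))
      (((b:ℝ)-1) * (x * (-c))) σ := (hE.const_mul _).const_add 1
  have hBd : HasDerivAt (fun σ : ℝ => 1 - Real.exp (-((b:ℝ)*σ)/(((b:ℝ)-1)*(d:ℝ))))
      (-(x * (-c))) σ := (hE.const_sub 1).congr_deriv rfl
  have hlogA : HasDerivAt
      (fun σ : ℝ => Real.log (1 + ((b:ℝ)-1) * Real.exp (-((b:ℝ)*σ)/(((b:ℝ)-1)*(d:ℝ)))))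
      ((((b:ℝ)-1) * (x * (-c))) / (1 + ((b:ℝ)-1) * x)) σ := hAd.log (ne_of_gt hA)
  have hlogB : HasDerivAt
      (fun σ : ℝ => Real.log (1 - Real.exp (-((b:ℝ)*σ)/(((b:ℝ)-1)*(d:ℝ)))))
      ((-(x * (-c))) / (1 - x)) σ := hBd.log (ne_of_gt hBB)
  have hlin : HasDerivAt (fun σ : ℝ => σ * Real.log ρ - (d:ℝ) * Real.log b) (Real.log ρ) σ := by
    simpa using ((hasDerivAt_id σ).mul_const (Real.log ρ)).sub_const ((d:ℝ) * Real.log (b:ℝ))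
  have hg : HasDerivAt (gfun b d m ρ)
      (Real.log ρ + (d - m : ℕ) * ((((b:ℝ)-1) * (x * (-c))) / (1 + ((b:ℝ)-1) * x))
        + (m:ℝ) * ((-(x * (-c))) / (1 - x))) σ := by
    exact (hlin.add (hlogA.const_mul ((d-m:ℕ):ℝ))).add (hlogB.const_mul (m:ℝ))
  refine ⟨_, hg, ?_⟩
  -- lower bound the derivative
  have hterm3 : 0 ≤ (m:ℝ) * ((-(x * (-c))) / (1 - x)) := by
    have : (0:ℝ) ≤ (x * c) / (1 - x) := by positivity
    simpa [neg_mul, mul_neg, neg_neg] using mul_nonneg (Nat.cast_nonneg m) this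
  have hterm2 : (d - m : ℕ) * ((((b:ℝ)-1) * (x * c)) / (1 + ((b:ℝ)-1) * x))
      ≤ (d:ℝ) * ((((b:ℝ)-1) * (x * c)) / (1 + ((b:ℝ)-1) * x)) := by
    apply mul_le_mul_of_nonneg_right _ (by positivity)
    exact_mod_cast Nat.cast_le.mpr (Nat.sub_le d m)
  have hxe : x * Real.exp (c*σ) = 1 := by
    rw [hxdef, ← Real.exp_add]
    rw [show -((b:ℝ)*σ)/(((b:ℝ)-1)*(d:ℝ)) + c*σ = 0 by rw [hcdef]; field_simp; ring]
    exact Real.exp_zero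
  have hepos : 0 < Real.exp (c*σ) + (b:ℝ) - 1 := by have := Real.exp_pos (c*σ); nlinarith
  have h9 : (d:ℝ)*((((b:ℝ)-1) * (x * c)) / (1 + ((b:ℝ)-1) * x))
      = (b:ℝ)*x/(1 + ((b:ℝ)-1) * x) := by
    rw [mul_div_assoc']
    congr 1
    rw [hcdef]; field_simp
  have h10 : (b:ℝ)*x/(1+((b:ℝ)-1)*x) = (b:ℝ)/(Real.exp (c*σ) + (b:ℝ) - 1) := by
    rw [div_eq_div_iff (ne_of_gt hA) (ne_of_gt hepos)]
    nlinarith [hxe]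
  have hkey : Real.log ρ - (d:ℝ) * ((((b:ℝ)-1) * (x * c)) / (1 + ((b:ℝ)-1) * x))
      = (b:ℝ)/((b:ℝ)-1) * psi0' b ρ (c*σ) := by
    rw [h9, h10]
    unfold psi0'
    have := Real.exp_pos (c*σ)
    field_simp
  have hκle : κ₀ ≤ psi0' b ρ (c*σ) := H2 _ (by rwa [hcdef])
  have hfinal : κ₀ * (b:ℝ)/((b:ℝ)-1) ≤ (b:ℝ)/((b:ℝ)-1) * psi0' b ρ (c*σ) := by
    rw [mul_div_assoc, mul_comm]
    apply mul_le_mul_of_nonneg_left hκle (by positivity)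
  calc κ₀ * (b:ℝ)/((b:ℝ)-1) ≤ (b:ℝ)/((b:ℝ)-1) * psi0' b ρ (c*σ) := hfinal
    _ = Real.log ρ - (d:ℝ) * ((((b:ℝ)-1) * (x * c)) / (1 + ((b:ℝ)-1) * x)) := hkey.symm
    _ ≤ Real.log ρ - (d - m : ℕ) * ((((b:ℝ)-1) * (x * c)) / (1 + ((b:ℝ)-1) * x)) := by
        linarith [hterm2]
    _ ≤ Real.log ρ + (d - m : ℕ) * ((((b:ℝ)-1) * (x * (-c))) / (1 + ((b:ℝ)-1) * x))
        + (m:ℝ) * ((-(x * (-c))) / (1 - x)) := by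
        have : (d - m : ℕ) * ((((b:ℝ)-1) * (x * (-c))) / (1 + ((b:ℝ)-1) * x))
            = -((d - m : ℕ) * ((((b:ℝ)-1) * (x * c)) / (1 + ((b:ℝ)-1) * x))) := by ring
        linarith [hterm3]

lemma regionII (b d m : ℕ) (hb : 2 ≤ b) (hd : 1 ≤ d) (hm : m ≤ d) {ρ : ℝ} (hρ₁ : 1 < ρ)
    {w κ₀ : ℝ} (hκ₀ : 0 < κ₀) (H2 : ∀ u, w ≤ u → κ₀ ≤ psi0' b ρ u)
    {s t : ℝ} (hs0 : 0 < s) (hst : s < t) (hws : w ≤ (b:ℝ)/(((b:ℝ)-1)*d) * s)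
    (hft : firstMomentLHS b d m ρ t = 1) :
    firstMomentLHS b d m ρ s ≤ Real.exp (-(κ₀*(b:ℝ)/((b:ℝ)-1)) * (t - s)) := by
  have hB : (2:ℝ) ≤ (b:ℝ) := by exact_mod_cast hb
  have hB1 : (0:ℝ) < (b:ℝ) - 1 := by linarith
  have hdR : (1:ℝ) ≤ (d:ℝ) := by exact_mod_cast hd
  have ht0 : 0 < t := hs0.trans hst
  have hgt : gfun b d m ρ t = 0 := by
    have h := (fm_eq_exp b d m hb hd hρ₁ ht0).symm.trans hft
    have := congrArg Real.log h
    rwa [Real.log_exp, Real.log_one] at this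
  have hgs : firstMomentLHS b d m ρ s = Real.exp (gfun b d m ρ s) :=
    fm_eq_exp b d m hb hd hρ₁ hs0
  -- continuity of gfun on [s, t]
  have hcE : Continuous fun σ : ℝ => Real.exp (-((b:ℝ)*σ)/(((b:ℝ)-1)*(d:ℝ))) := by
    apply Real.continuous_exp.comp
    exact ((continuous_const.mul continuous_id).neg).div_const _
  have hcont : ContinuousOn (gfun b d m ρ) (Set.Icc s t) := by
    unfold gfun
    apply ContinuousOn.add
    apply ContinuousOn.add
    · exact ((continuous_id.mul continuous_const).sub continuous_const).continuousOn
    · apply Continuous.continuousOn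
      apply continuous_const.mul
      apply Continuous.log (by continuity)
      intro σ
      have : (0:ℝ) < 1 + ((b:ℝ)-1) * Real.exp (-((b:ℝ)*σ)/(((b:ℝ)-1)*(d:ℝ))) := by positivity
      exact ne_of_gt this
    · apply ContinuousOn.mul continuousOn_const
      apply ContinuousOn.log ((continuous_const.sub hcE).continuousOn)
      intro σ hσ
      have hσ0 : 0 < σ := lt_of_lt_of_le hs0 hσ.1
      have : Real.exp (-((b:ℝ)*σ)/(((b:ℝ)-1)*(d:ℝ))) < 1 := by
        apply Real.exp_lt_one_iff.mpr
        apply div_neg_of_neg_of_pos (by nlinarith) (by nlinarith)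
      have : (0:ℝ) < 1 - Real.exp (-((b:ℝ)*σ)/(((b:ℝ)-1)*(d:ℝ))) := by linarith
      exact ne_of_gt this
  have hc : 0 < (b:ℝ)/(((b:ℝ)-1)*d) := by positivity
  have H : ∀ σ ∈ Set.Ioo s t, ∃ gd, HasDerivAt (gfun b d m ρ) gd σ
      ∧ κ₀ * (b:ℝ)/((b:ℝ)-1) ≤ gd := by
    intro σ hσ
    apply gfun_deriv_ge b d m hb hd hm hρ₁ hκ₀ H2 (hs0.trans hσ.1)
    calc w ≤ (b:ℝ)/(((b:ℝ)-1)*d) * s := hws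
      _ ≤ (b:ℝ)/(((b:ℝ)-1)*d) * σ := by
          apply mul_le_mul_of_nonneg_left hσ.1.le hc.le
  classical
  set F : ℝ → ℝ := fun σ => if hσ : σ ∈ Set.Ioo s t then (H σ hσ).choose else 0 with hFdef
  have hFd : ∀ σ ∈ Set.Ioo s t, HasDerivAt (gfun b d m ρ) (F σ) σ := by
    intro σ hσ
    rw [hFdef]; simp only [dif_pos hσ]
    exact (H σ hσ).choose_spec.1
  have hFge : ∀ σ ∈ Set.Ioo s t, κ₀ * (b:ℝ)/((b:ℝ)-1) ≤ F σ := by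
    intro σ hσ
    rw [hFdef]; simp only [dif_pos hσ]
    exact (H σ hσ).choose_spec.2
  obtain ⟨ξ, hξ, hslope⟩ := exists_hasDerivAt_eq_slope (gfun b d m ρ) F hst hcont hFd
  have hts : 0 < t - s := by linarith
  have h1 : κ₀ * (b:ℝ)/((b:ℝ)-1) ≤ (gfun b d m ρ t - gfun b d m ρ s) / (t - s) := by
    rw [← hslope]; exact hFge ξ hξ
  rw [hgt] at h1
  have h2 : gfun b d m ρ s ≤ -(κ₀*(b:ℝ)/((b:ℝ)-1)) * (t - s) := by
    rw [le_div_iff₀ hts] at h1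
    nlinarith
  rw [hgs]
  exact Real.exp_le_exp.mpr h2

lemma regionI (b d m : ℕ) (hb : 2 ≤ b) (hd : 1 ≤ d) (hm1 : 1 ≤ m) (hm : m ≤ d) {ρ : ℝ}
    (hρ₁ : 1 < ρ) {w γ₁ : ℝ} (hγ₁ : 0 < γ₁)
    (H1 : ∀ u, 0 ≤ u → u ≤ w → psi0 b ρ u ≤ -γ₁ * u)
    {s : ℝ} (hs0 : 0 ≤ s) (hsw : (b:ℝ)/(((b:ℝ)-1)*d) * s ≤ w) :
    firstMomentLHS b d m ρ s
      ≤ ((b:ℝ)/(((b:ℝ)-1)*d)) * s * Real.exp (-(γ₁*(b:ℝ)/((b:ℝ)-1)) * s) := by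
  have hB : (2:ℝ) ≤ (b:ℝ) := by exact_mod_cast hb
  have hB1 : (0:ℝ) < (b:ℝ) - 1 := by linarith
  have hdR : (1:ℝ) ≤ (d:ℝ) := by exact_mod_cast hd
  have hρ0 : (0:ℝ) < ρ := by linarith
  set c : ℝ := (b:ℝ)/(((b:ℝ)-1)*d) with hcdef
  have hc : 0 < c := by positivity
  rcases eq_or_lt_of_le hs0 with h | hs
  · rw [← h]
    unfold firstMomentLHS
    rw [show -((b:ℝ)*(0:ℝ)) / (((b:ℝ)-1)*(d:ℝ)) = 0 by ring_nf]
    rw [Real.exp_zero]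
    rw [show (1:ℝ) - 1 = 0 by ring, zero_pow (by omega : m ≠ 0)]
    simp
  set x : ℝ := Real.exp (-((b:ℝ)*s)/(((b:ℝ)-1)*d)) with hxdef
  have hx0 : 0 < x := Real.exp_pos _
  have hx1 : x < 1 := by
    rw [hxdef]
    apply Real.exp_lt_one_iff.mpr
    apply div_neg_of_neg_of_pos (by nlinarith) (by nlinarith)
  have hA : (0:ℝ) < 1 + ((b:ℝ)-1) * x := by positivity
  have hA1 : (1:ℝ) ≤ 1 + ((b:ℝ)-1) * x := by nlinarith
  have hBB0 : (0:ℝ) ≤ 1 - x := by linarith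
  have step1 : (1 - x) ^ m ≤ 1 - x := by
    calc (1-x)^m ≤ (1-x)^1 := pow_le_pow_of_le_one hBB0 (by linarith) hm1
      _ = 1 - x := pow_one _
  have step2 : (1 + ((b:ℝ)-1) * x) ^ (d - m) ≤ (1 + ((b:ℝ)-1) * x) ^ d :=
    pow_le_pow_right₀ hA1 (Nat.sub_le d m)
  have hf1 : firstMomentLHS b d m ρ s
      ≤ ρ ^ s * (((b:ℝ))^d)⁻¹ * (1 + ((b:ℝ)-1) * x) ^ d * (1 - x) := by
    unfold firstMomentLHS
    rw [← hxdef]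
    have hrp : (0:ℝ) ≤ ρ ^ s * (((b:ℝ))^d)⁻¹ := by positivity
    exact mul_le_mul (mul_le_mul_of_nonneg_left step2 hrp) step1
      (by positivity) (by positivity)
  have heq : ρ ^ s * (((b:ℝ))^d)⁻¹ * (1 + ((b:ℝ)-1) * x) ^ d
      = Real.exp ((d:ℝ) * psi0 b ρ (c * s)) := by
    have harg : -(c*s) = -((b:ℝ)*s)/(((b:ℝ)-1)*d) := by rw [hcdef]; field_simp
    have hpsi0eq : psi0 b ρ (c*s)
        = ((b:ℝ)-1)/b*Real.log ρ*(c*s) - Real.log b + Real.log (1+((b:ℝ)-1)*x) := by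
      unfold psi0
      rw [harg, ← hxdef]
    rw [hpsi0eq, mul_add, mul_sub, Real.exp_add, Real.exp_sub,
      Real.exp_nat_mul (Real.log (1+((b:ℝ)-1)*x)) d, Real.exp_log hA,
      Real.exp_nat_mul (Real.log ((b:ℝ))) d, Real.exp_log (by positivity : (0:ℝ) < (b:ℝ)),
      show (d:ℝ) * (((b:ℝ)-1)/b * Real.log ρ * (c * s)) = Real.log ρ * s by
        rw [hcdef]; field_simp,
      ← Real.rpow_def_of_pos hρ0, div_eq_mul_inv]
  have hpsi : (d:ℝ) * psi0 b ρ (c * s) ≤ -(γ₁*(b:ℝ)/((b:ℝ)-1)) * s := by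
    have h := H1 (c*s) (by positivity) hsw
    have := mul_le_mul_of_nonneg_left h (by positivity : (0:ℝ) ≤ (d:ℝ))
    calc (d:ℝ) * psi0 b ρ (c * s) ≤ (d:ℝ) * (-γ₁ * (c*s)) := this
      _ = -(γ₁*(b:ℝ)/((b:ℝ)-1)) * s := by rw [hcdef]; field_simp
  have hBle : 1 - x ≤ c * s := by
    have h := Real.add_one_le_exp (-(c*s))
    have harg : -(c*s) = -((b:ℝ)*s)/(((b:ℝ)-1)*d) := by rw [hcdef]; field_simp
    rw [harg, ← hxdef] at h
    linarith
  calc firstMomentLHS b d m ρ s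
      ≤ ρ ^ s * (((b:ℝ))^d)⁻¹ * (1 + ((b:ℝ)-1) * x) ^ d * (1 - x) := hf1
    _ = Real.exp ((d:ℝ) * psi0 b ρ (c * s)) * (1 - x) := by rw [heq]
    _ ≤ Real.exp (-(γ₁*(b:ℝ)/((b:ℝ)-1)) * s) * (c * s) := by
        apply mul_le_mul (Real.exp_le_exp.mpr hpsi) hBle hBB0 (Real.exp_pos _).le
    _ = c * s * Real.exp (-(γ₁*(b:ℝ)/((b:ℝ)-1)) * s) := by ring

lemma integral_exp_comp (a k T : ℝ) (ha : a ≠ 0) (hT : 0 ≤ T) :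
    ∫ s in Set.Icc (0:ℝ) T, Real.exp (a*s + k)
      = (Real.exp (a*T + k) - Real.exp (a*0 + k))/a := by
  rw [MeasureTheory.integral_Icc_eq_integral_Ioc, ← intervalIntegral.integral_of_le hT]
  have key : ∀ x ∈ Set.uIcc (0:ℝ) T,
      HasDerivAt (fun s => Real.exp (a*s+k)/a) (Real.exp (a*x+k)) x := by
    intro x _
    have h1 : HasDerivAt (fun s : ℝ => a*s+k) a x := by
      simpa using ((hasDerivAt_id x).const_mul a).add_const k
    have h2 := ((Real.hasDerivAt_exp (a*x+k)).comp x h1).div_const a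
    exact h2.congr_deriv (by field_simp)
  rw [intervalIntegral.integral_eq_sub_of_hasDerivAt key
    ((Real.continuous_exp.comp (by continuity)).intervalIntegrable 0 T)]
  ring

lemma integral_exp_le1 (a T : ℝ) (ha : 0 < a) (hT : 0 ≤ T) :
    ∫ s in Set.Icc (0:ℝ) T, Real.exp (-(a*s)) ≤ 1/a := by
  have h : (∫ s in Set.Icc (0:ℝ) T, Real.exp (-(a*s)))
      = ∫ s in Set.Icc (0:ℝ) T, Real.exp ((-a)*s + 0) := by
    congr 1; funext s; congr 1; ring
  rw [h, integral_exp_comp (-a) 0 T (by linarith) hT]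
  have h1 : 0 < Real.exp ((-a)*T + 0) := Real.exp_pos _
  have h2 : Real.exp ((-a)*0 + 0) = 1 := by norm_num
  rw [h2, div_neg, ← neg_div, neg_sub]
  gcongr
  linarith

lemma integral_exp_le2 (kk T t : ℝ) (hk : 0 < kk) (hT : 0 ≤ T) :
    ∫ s in Set.Icc (0:ℝ) T, Real.exp (-(kk*(t-s))) ≤ Real.exp (-(kk*(t-T)))/kk := by
  have h : (∫ s in Set.Icc (0:ℝ) T, Real.exp (-(kk*(t-s))))
      = ∫ s in Set.Icc (0:ℝ) T, Real.exp (kk*s + (-(kk*t))) := by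
    congr 1; funext s; congr 1; ring
  rw [h, integral_exp_comp kk (-(kk*t)) T (ne_of_gt hk) hT]
  have h3 : kk*T + -(kk*t) = -(kk*(t-T)) := by ring
  rw [h3]
  have h4 : 0 < Real.exp (kk*0 + -(kk*t)) := Real.exp_pos _
  gcongr
  linarith
end FMAux

/-- Let `b ≥ 2` be an integer and `ρ ∈ (1, e)`. There exists `L₁ > 0` such that for every
`ε > 0` there are `C > 0` and `D ∈ ℕ` with: for all `d ≥ D` and `1 ≤ m ≤ d/L₁`, writing
`t_{d,m}` for the unique positive solution of the first-moment equation, the integral of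
the first moment over `[0, t_{d,m} − C]` is at most `ε`. -/
theorem firstMoment_integral_small (b : ℕ) (hb : 2 ≤ b) (ρ : ℝ)
    (hρ₁ : 1 < ρ) (hρe : ρ < Real.exp 1) :
    ∃ L₁ : ℝ, 0 < L₁ ∧
      ∀ ε : ℝ, 0 < ε → ∃ C : ℝ, 0 < C ∧ ∃ D : ℕ,
        ∀ d ≥ D, ∀ m : ℕ, 1 ≤ m → (m : ℝ) ≤ (d : ℝ) / L₁ →
          ∀ t : ℝ, 0 < t → firstMomentLHS b d m ρ t = 1 →
            (∫ s in Set.Icc (0 : ℝ) (t - C), firstMomentLHS b d m ρ s) ≤ ε := by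
  obtain ⟨w, κ₀, γ₁, hw0, hκ₀, hγ₁, H1, H2⟩ := FMAux.setup hb hρ₁ hρe
  have hB : (2:ℝ) ≤ (b:ℝ) := by exact_mod_cast hb
  have hB1 : (0:ℝ) < (b:ℝ) - 1 := by linarith
  have hρ0 : (0:ℝ) < ρ := by linarith
  refine ⟨1, one_pos, ?_⟩
  intro ε hε
  set κ : ℝ := κ₀*(b:ℝ)/((b:ℝ)-1) with hκdef
  have hκ : 0 < κ := by rw [hκdef]; positivity
  set γ₃ : ℝ := γ₁*(b:ℝ)/((b:ℝ)-1) with hγ₃def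
  have hγ₃ : 0 < γ₃ := by rw [hγ₃def]; positivity
  set C : ℝ := 1 + κ⁻¹ * max 0 (Real.log (2/(κ*ε))) with hCdef
  have hC : 0 < C := by
    have h0 : 0 ≤ κ⁻¹ * max 0 (Real.log (2/(κ*ε))) :=
      mul_nonneg (inv_nonneg.mpr hκ.le) (le_max_left 0 _)
    rw [hCdef]
    linarith
  have hCbound : Real.exp (-(κ*C))/κ ≤ ε/2 := by
    have hM : Real.log (2/(κ*ε)) ≤ max 0 (Real.log (2/(κ*ε))) := le_max_right _ _
    have hκC : κ*C = κ + max 0 (Real.log (2/(κ*ε))) := by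
      rw [hCdef]; field_simp
    have h1 : Real.log (2/(κ*ε)) ≤ κ*C := by
      rw [hκC]; linarith
    have h2 : Real.exp (-(κ*C)) ≤ Real.exp (-Real.log (2/(κ*ε))) :=
      Real.exp_le_exp.mpr (by linarith)
    have h3 : Real.exp (-Real.log (2/(κ*ε))) = κ*ε/2 := by
      rw [Real.exp_neg, Real.exp_log (by positivity)]
      rw [inv_div]
    have h4 : Real.exp (-(κ*C)) ≤ κ*ε/2 := h3 ▸ h2
    calc Real.exp (-(κ*C))/κ ≤ (κ*ε/2)/κ := by gcongr
      _ = ε/2 := by field_simp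
  set Dr : ℝ := 8*(b:ℝ)/(((b:ℝ)-1)*γ₃^2*ε) with hDrdef
  refine ⟨C, hC, ⌈Dr⌉₊ + 1, ?_⟩
  intro d hd m hm1 hmd t ht hft
  have hd1 : 1 ≤ d := by omega
  have hdR : (1:ℝ) ≤ (d:ℝ) := by exact_mod_cast hd1
  have hmd' : m ≤ d := by
    rw [div_one] at hmd; exact_mod_cast hmd
  have hdDr : Dr ≤ (d:ℝ) := by
    calc Dr ≤ (⌈Dr⌉₊ : ℝ) := Nat.le_ceil Dr
      _ ≤ (d:ℝ) := by exact_mod_cast Nat.le_of_succ_le hd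
  by_cases htC : t ≤ C
  · have hnull : volume (Set.Icc (0:ℝ) (t - C)) = 0 := by
      rw [Real.volume_Icc]
      simp only [ENNReal.ofReal_eq_zero]
      linarith
    have hrz : volume.restrict (Set.Icc (0:ℝ) (t - C)) = 0 :=
      MeasureTheory.Measure.restrict_eq_zero.mpr hnull
    rw [hrz, MeasureTheory.integral_zero_measure]
    linarith
  push_neg at htC
  set T : ℝ := t - C with hTdef
  have hT : 0 ≤ T := by rw [hTdef]; linarith
  set c : ℝ := (b:ℝ)/(((b:ℝ)-1)*(d:ℝ)) with hcdef
  have hc : 0 < c := by rw [hcdef]; positivity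
  -- pointwise bound
  have hpt : ∀ s ∈ Set.Icc (0:ℝ) T,
      firstMomentLHS b d m ρ s
        ≤ 2*c/γ₃ * Real.exp (-(γ₃/2*s)) + Real.exp (-(κ*(t-s))) := by
    intro s hs
    obtain ⟨hs0, hsT⟩ := hs
    by_cases hcs : c*s ≤ w
    · have hr1 := FMAux.regionI b d m hb hd1 hm1 hmd' hρ₁ hγ₁ H1 hs0 (by rw [← hcdef]; exact hcs)
      have hsle : s ≤ 2/γ₃ * Real.exp (γ₃/2*s) := by
        have := Real.add_one_le_exp (γ₃/2*s)
        have h5 : γ₃/2*s ≤ Real.exp (γ₃/2*s) := by linarith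
        calc s = 2/γ₃ * (γ₃/2*s) := by field_simp
          _ ≤ 2/γ₃ * Real.exp (γ₃/2*s) := by gcongr
      have hr2 : c*s*Real.exp (-(γ₁*(b:ℝ)/((b:ℝ)-1)) * s)
          ≤ 2*c/γ₃ * Real.exp (-(γ₃/2*s)) := by
        have hexpand : -(γ₁*(b:ℝ)/((b:ℝ)-1)) * s = -(γ₃*s) := by rw [hγ₃def]; ring
        rw [hexpand]
        calc c*s*Real.exp (-(γ₃*s)) ≤ c*(2/γ₃ * Real.exp (γ₃/2*s))*Real.exp (-(γ₃*s)) := by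
              apply mul_le_mul_of_nonneg_right _ (Real.exp_pos _).le
              exact mul_le_mul_of_nonneg_left hsle hc.le
          _ = 2*c/γ₃ * (Real.exp (γ₃/2*s) * Real.exp (-(γ₃*s))) := by ring
          _ = 2*c/γ₃ * Real.exp (-(γ₃/2*s)) := by
              rw [← Real.exp_add]
              congr 1
              ring
      have : firstMomentLHS b d m ρ s ≤ 2*c/γ₃ * Real.exp (-(γ₃/2*s)) := by
        calc firstMomentLHS b d m ρ s
            ≤ c * s * Real.exp (-(γ₁*(b:ℝ)/((b:ℝ)-1)) * s) := by
              have := hr1; rw [← hcdef] at this; exact this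
          _ ≤ 2*c/γ₃ * Real.exp (-(γ₃/2*s)) := hr2
      linarith [Real.exp_pos (-(κ*(t-s)))]
    · push_neg at hcs
      have hs0' : 0 < s := by
        by_contra hle
        push_neg at hle
        have : c * s ≤ 0 := mul_nonpos_of_nonneg_of_nonpos hc.le hle
        linarith
      have hst : s < t := by rw [hTdef] at hsT; linarith
      have hr := FMAux.regionII b d m hb hd1 hmd' hρ₁ hκ₀ H2 hs0' hst
        (by rw [← hcdef]; exact hcs.le) hft
      have hexpand : -(κ₀*(b:ℝ)/((b:ℝ)-1)) * (t - s) = -(κ*(t-s)) := by rw [hκdef]; ring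
      rw [hexpand] at hr
      have h6 : 0 ≤ 2*c/γ₃ * Real.exp (-(γ₃/2*s)) := by positivity
      linarith
  -- integrate
  have hfint : MeasureTheory.IntegrableOn (fun s => firstMomentLHS b d m ρ s)
      (Set.Icc (0:ℝ) T) := (FMAux.continuous_fm b d m hρ0).integrableOn_Icc
  have hg1int : MeasureTheory.IntegrableOn (fun s => 2*c/γ₃ * Real.exp (-(γ₃/2*s)))
      (Set.Icc (0:ℝ) T) := by
    apply Continuous.integrableOn_Icc
    exact continuous_const.mul (Real.continuous_exp.comp
      ((continuous_const.mul continuous_id).neg))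
  have hg2int : MeasureTheory.IntegrableOn (fun s => Real.exp (-(κ*(t-s))))
      (Set.Icc (0:ℝ) T) := by
    apply Continuous.integrableOn_Icc
    exact Real.continuous_exp.comp
      ((continuous_const.mul (continuous_const.sub continuous_id)).neg)
  have hmono := MeasureTheory.setIntegral_mono_on hfint (hg1int.add hg2int)
    measurableSet_Icc hpt
  have hsplit : (∫ s in Set.Icc (0:ℝ) T,
      (2*c/γ₃ * Real.exp (-(γ₃/2*s)) + Real.exp (-(κ*(t-s)))))
      = (∫ s in Set.Icc (0:ℝ) T, 2*c/γ₃ * Real.exp (-(γ₃/2*s)))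
        + ∫ s in Set.Icc (0:ℝ) T, Real.exp (-(κ*(t-s))) :=
    MeasureTheory.integral_add hg1int hg2int
  have hI1 : (∫ s in Set.Icc (0:ℝ) T, 2*c/γ₃ * Real.exp (-(γ₃/2*s))) ≤ ε/2 := by
    rw [MeasureTheory.integral_const_mul]
    have h7 : (∫ s in Set.Icc (0:ℝ) T, Real.exp (-(γ₃/2*s))) ≤ 1/(γ₃/2) :=
      FMAux.integral_exp_le1 (γ₃/2) T (by positivity) hT
    have h8 : 2*c/γ₃ * (∫ s in Set.Icc (0:ℝ) T, Real.exp (-(γ₃/2*s)))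
        ≤ 2*c/γ₃ * (1/(γ₃/2)) := by
      apply mul_le_mul_of_nonneg_left h7 (by positivity)
    have h9 : 2*c/γ₃ * (1/(γ₃/2)) = 4*c/γ₃^2 := by
      field_simp; ring
    have hineq : 8*(b:ℝ) ≤ (d:ℝ) * (((b:ℝ)-1)*γ₃^2*ε) := by
      rw [hDrdef, div_le_iff₀ (by positivity)] at hdDr
      exact hdDr
    have h10 : 4*c/γ₃^2 ≤ ε/2 := by
      rw [hcdef, div_le_div_iff₀ (by positivity) (by norm_num : (0:ℝ) < 2)]
      rw [show (4:ℝ)*((b:ℝ)/(((b:ℝ)-1)*(d:ℝ)))*2 = 8*(b:ℝ)/(((b:ℝ)-1)*(d:ℝ)) from by ring]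
      rw [div_le_iff₀ (by positivity)]
      calc 8*(b:ℝ) ≤ (d:ℝ) * (((b:ℝ)-1)*γ₃^2*ε) := hineq
        _ = ε * γ₃^2 * (((b:ℝ)-1)*(d:ℝ)) := by ring
    linarith
  have hI2 : (∫ s in Set.Icc (0:ℝ) T, Real.exp (-(κ*(t-s)))) ≤ ε/2 := by
    have h11 := FMAux.integral_exp_le2 κ T t hκ hT
    have h12 : t - T = C := by rw [hTdef]; ring
    rw [h12] at h11
    exact h11.trans hCbound
  calc (∫ s in Set.Icc (0:ℝ) T, firstMomentLHS b d m ρ s)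
      ≤ ∫ s in Set.Icc (0:ℝ) T,
          (2*c/γ₃ * Real.exp (-(γ₃/2*s)) + Real.exp (-(κ*(t-s)))) := hmono
    _ = (∫ s in Set.Icc (0:ℝ) T, 2*c/γ₃ * Real.exp (-(γ₃/2*s)))
        + ∫ s in Set.Icc (0:ℝ) T, Real.exp (-(κ*(t-s))) := hsplit
    _ ≤ ε/2 + ε/2 := add_le_add hI1 hI2
    _ = ε := by ring
end
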